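/- arXiv:1509.01993 — 10 statements merged into one kernel-verified Lean document; each statement's English description precedes it below -/
import Mathlib

section
/- Let H be a complex Hilbert space and L a bounded self-adjoint operator on H. For every continuous function Φ : ℝ → ℂ and all f, g ∈ H, one has |⟪f, Φ(L) g⟫| ≤ (Re⟪f, |Φ|(L) f⟫)^{1/2} · (Re⟪g, |Φ|(L) g⟫)^{1/2}, where |Φ| : ℝ → ℝ is the function s ↦ |Φ(s)|; in particular the inner products ⟪f, |Φ|(L) f⟫ and ⟪g, |Φ|(L) g⟫ are nonnegative real numbers. -/
open scoped InnerProductSpace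

section Aux

variable {H : Type*} [NormedAddCommGroup H] [InnerProductSpace ℂ H] [CompleteSpace H]

/-- Diagonal matrix elements of a selfadjoint operator are real. -/
lemma aux_im_zero {A : H →L[ℂ] H} (hA : IsSelfAdjoint A) (x : H) :
    (⟪x, A x⟫_ℂ).im = 0 := by
  have h1 : (starRingEnd ℂ) ⟪x, A x⟫_ℂ = ⟪x, A x⟫_ℂ := by
    rw [inner_conj_symm]
    exact hA.isSymmetric x x
  exact Complex.conj_eq_iff_im.mp h1

lemma aux_inner_nonneg {A : H →L[ℂ] H} (hA : 0 ≤ A) (x : H) :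
    0 ≤ (⟪x, A x⟫_ℂ).re := by
  have := ((ContinuousLinearMap.nonneg_iff_isPositive A).mp hA).inner_nonneg_right x
  exact (Complex.nonneg_iff.mp (by simpa using this)).1

end Aux

/-- For a bounded selfadjoint operator `L` on a complex Hilbert space and a continuous
function `Φ : ℝ → ℂ`, the matrix element `⟪f, Φ(L) g⟫` satisfies a Cauchy–Schwarz type
bound in terms of `|Φ|(L)`; in particular the diagonal matrix elements of `|Φ|(L)` are
nonnegative real numbers. Here `Φ(L)` is realized via the continuous functional calculus
for the normal element `L` applied to the function `z ↦ Φ (Re z)` (which agrees with `Φ`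
on the real spectrum of `L`), and `|Φ|(L)` via the real functional calculus applied to
`s ↦ ‖Φ s‖`. -/
theorem short_time_cauchy_schwarz
    {H : Type*} [NormedAddCommGroup H] [InnerProductSpace ℂ H] [CompleteSpace H]
    (L : H →L[ℂ] H) (hL : IsSelfAdjoint L)
    (Φ : ℝ → ℂ) (hΦ : Continuous Φ) (f g : H) :
    (⟪f, (cfc (fun s : ℝ => ‖Φ s‖) L) f⟫_ℂ).im = 0 ∧
    0 ≤ (⟪f, (cfc (fun s : ℝ => ‖Φ s‖) L) f⟫_ℂ).re ∧
    (⟪g, (cfc (fun s : ℝ => ‖Φ s‖) L) g⟫_ℂ).im = 0 ∧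
    0 ≤ (⟪g, (cfc (fun s : ℝ => ‖Φ s‖) L) g⟫_ℂ).re ∧
    ‖⟪f, (cfc (fun z : ℂ => Φ z.re) L) g⟫_ℂ‖ ≤
      ((⟪f, (cfc (fun s : ℝ => ‖Φ s‖) L) f⟫_ℂ).re) ^ (1/2 : ℝ) *
      ((⟪g, (cfc (fun s : ℝ => ‖Φ s‖) L) g⟫_ℂ).re) ^ (1/2 : ℝ) := by
  -- the operator |Φ|(L)
  set A : H →L[ℂ] H := cfc (fun s : ℝ => ‖Φ s‖) L with hA_def
  have hAsa : IsSelfAdjoint A := cfc_predicate _ L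
  have hAnn : (0 : H →L[ℂ] H) ≤ A := cfc_nonneg (fun x _ => norm_nonneg _)
  refine ⟨aux_im_zero hAsa f, aux_inner_nonneg hAnn f, aux_im_zero hAsa g,
    aux_inner_nonneg hAnn g, ?_⟩
  -- the square root of |Φ|
  set ψ : ℝ → ℝ := fun s => Real.sqrt ‖Φ s‖ with hψ_def
  have hψc : Continuous ψ := Real.continuous_sqrt.comp hΦ.norm
  -- the "phase times square root" function
  set φ : ℝ → ℂ := fun s => Φ s / (ψ s : ℂ) with hφ_def
  have hφ_norm : ∀ s, ‖φ s‖ = ψ s := by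
    intro s
    by_cases h : Φ s = 0
    · simp [hφ_def, hψ_def, h]
    · have hns : ‖Φ s‖ ≠ 0 := norm_ne_zero_iff.mpr h
      have hψpos : 0 < ψ s := Real.sqrt_pos.mpr (lt_of_le_of_ne (norm_nonneg _) (Ne.symm hns))
      rw [hφ_def]
      simp only [norm_div, Complex.norm_real, Real.norm_eq_abs, abs_of_pos hψpos]
      rw [div_eq_iff hψpos.ne']
      exact (Real.mul_self_sqrt (norm_nonneg (Φ s))).symm
  have hφc : Continuous φ := by
    rw [continuous_iff_continuousAt]
    intro s₀
    by_cases h : Φ s₀ = 0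
    · have h0 : φ s₀ = 0 := by simp [hφ_def, h]
      rw [ContinuousAt, h0]
      rw [tendsto_zero_iff_norm_tendsto_zero]
      have hψ0 : ψ s₀ = 0 := by simp [hψ_def, h]
      have : Filter.Tendsto ψ (nhds s₀) (nhds 0) := by
        rw [← hψ0]; exact hψc.continuousAt
      refine squeeze_zero (fun s => norm_nonneg _) (fun s => le_of_eq (hφ_norm s)) this
    · have hψne : (ψ s₀ : ℂ) ≠ 0 := by
        simp only [ne_eq, Complex.ofReal_eq_zero]
        exact (Real.sqrt_pos.mpr (norm_pos_iff.mpr h)).ne'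
      exact hΦ.continuousAt.div (Complex.continuous_ofReal.comp hψc).continuousAt hψne
  -- factorization Φ = ψ * φ
  have hfact : ∀ s, (ψ s : ℂ) * φ s = Φ s := by
    intro s
    by_cases h : Φ s = 0
    · simp [hφ_def, h]
    · have hψne : (ψ s : ℂ) ≠ 0 := by
        simp only [ne_eq, Complex.ofReal_eq_zero]
        exact (Real.sqrt_pos.mpr (norm_pos_iff.mpr h)).ne'
      rw [hφ_def]
      exact mul_div_cancel₀ _ hψne
  -- operators B = ψ(L), C = φ(L)
  set B : H →L[ℂ] H := cfc ψ L with hB_def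
  set C : H →L[ℂ] H := cfc (fun z : ℂ => φ z.re) L with hC_def
  have hBsa : IsSelfAdjoint B := cfc_predicate _ L
  -- B as complex cfc
  have hBc : B = cfc (fun z : ℂ => ((ψ z.re : ℝ) : ℂ)) L := cfc_real_eq_complex ψ hL
  -- Φ(L) = B * C
  have hsplit : cfc (fun z : ℂ => Φ z.re) L = B * C := by
    have hmul := cfc_mul (fun z : ℂ => ((ψ z.re : ℝ) : ℂ)) (fun z : ℂ => φ z.re) L
      (Continuous.continuousOn
        (by exact Complex.continuous_ofReal.comp (hψc.comp Complex.continuous_re)))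
      (Continuous.continuousOn (by exact hφc.comp Complex.continuous_re))
    rw [hBc, hC_def, ← hmul]
    exact cfc_congr fun z _ => (hfact z.re).symm
  -- B² = A
  have hB2 : B * B = A := by
    rw [hB_def, hA_def, ← cfc_mul _ _ L hψc.continuousOn hψc.continuousOn]
    exact cfc_congr fun s _ => Real.mul_self_sqrt (norm_nonneg _)
  -- star C * C = A
  have hCsa : star C * C = A := by
    have hstar : star C = cfc (fun z : ℂ => (starRingEnd ℂ) (φ z.re)) L := by
      rw [hC_def, ← cfc_star]
      rfl
    have hmul := cfc_mul (fun z : ℂ => (starRingEnd ℂ) (φ z.re)) (fun z : ℂ => φ z.re) L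
      (Continuous.continuousOn
        (by exact Complex.continuous_conj.comp (hφc.comp Complex.continuous_re)))
      (Continuous.continuousOn (by exact hφc.comp Complex.continuous_re))
    rw [hstar, hC_def, ← hmul]
    rw [hA_def, cfc_real_eq_complex (fun s : ℝ => ‖Φ s‖) hL]
    refine cfc_congr fun z _ => ?_
    rw [Complex.conj_mul']
    rw [hφ_norm z.re]
    rw [hψ_def]
    norm_cast
    exact Real.sq_sqrt (norm_nonneg _)
  -- norms of Bf and Cg
  have hBf : ‖B f‖ ^ 2 = (⟪f, A f⟫_ℂ).re := by
    rw [← hB2]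
    have : ⟪f, (B * B) f⟫_ℂ = ⟪B f, B f⟫_ℂ := by
      rw [ContinuousLinearMap.mul_apply]
      exact (hBsa.isSymmetric f (B f)).symm
    rw [this, inner_self_eq_norm_sq_to_K]; norm_cast
  have hCg : ‖C g‖ ^ 2 = (⟪g, A g⟫_ℂ).re := by
    rw [← hCsa]
    have : ⟪g, (star C * C) g⟫_ℂ = ⟪C g, C g⟫_ℂ := by
      rw [ContinuousLinearMap.mul_apply]
      rw [ContinuousLinearMap.star_eq_adjoint, ContinuousLinearMap.adjoint_inner_right]
    rw [this, inner_self_eq_norm_sq_to_K]; norm_cast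
  -- Cauchy–Schwarz
  have hmain : ⟪f, (cfc (fun z : ℂ => Φ z.re) L) g⟫_ℂ = ⟪B f, C g⟫_ℂ := by
    rw [hsplit, ContinuousLinearMap.mul_apply]
    exact (hBsa.isSymmetric f (C g)).symm
  rw [hmain]
  calc ‖⟪B f, C g⟫_ℂ‖ ≤ ‖B f‖ * ‖C g‖ := norm_inner_le_norm _ _
    _ = ((⟪f, A f⟫_ℂ).re) ^ (1/2 : ℝ) * ((⟪g, A g⟫_ℂ).re) ^ (1/2 : ℝ) := by
        rw [← hBf, ← hCg, ← Real.sqrt_eq_rpow, ← Real.sqrt_eq_rpow,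
          Real.sqrt_sq (norm_nonneg _), Real.sqrt_sq (norm_nonneg _)]
end

section
/- Let H be a complex Hilbert space and L a bounded self-adjoint operator on H. For every continuous function Φ : ℝ → ℂ and all f, g ∈ H, one has |⟪f, Φ(L) g⟫| ≤ (1/2) · (Re⟪f, |Φ|(L) f⟫ + Re⟪g, |Φ|(L) g⟫), where |Φ| : ℝ → ℝ is the function s ↦ |Φ(s)|. -/
open scoped InnerProductSpace

/-- For a bounded selfadjoint operator `L` on a complex Hilbert space and a continuous
function `Φ : ℝ → ℂ`, one has
`|⟪f, Φ(L) g⟫| ≤ (1/2) (Re ⟪f, |Φ|(L) f⟫ + Re ⟪g, |Φ|(L) g⟫)`.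
Here `Φ(L)` is realized via the continuous functional calculus for the normal element `L`
applied to `z ↦ Φ (Re z)` (which agrees with `Φ` on the real spectrum of `L`), and
`|Φ|(L)` via the real functional calculus applied to `s ↦ ‖Φ s‖`. -/
theorem short_time_am_gm_bound
    {H : Type*} [NormedAddCommGroup H] [InnerProductSpace ℂ H] [CompleteSpace H]
    (L : H →L[ℂ] H) (hL : IsSelfAdjoint L)
    (Φ : ℝ → ℂ) (hΦ : Continuous Φ) (f g : H) :
    ‖⟪f, (cfc (fun z : ℂ => Φ z.re) L) g⟫_ℂ‖ ≤
      (1/2 : ℝ) * ((⟪f, (cfc (fun s : ℝ => ‖Φ s‖) L) f⟫_ℂ).re +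
        (⟪g, (cfc (fun s : ℝ => ‖Φ s‖) L) g⟫_ℂ).re) := by
  classical
  set ψ : ℝ → ℂ := fun s => ((Real.sqrt ‖Φ s‖ : ℝ) : ℂ) with hψdef
  set θ : ℝ → ℂ := fun s => ((Real.sqrt ‖Φ s‖ : ℝ) : ℂ)⁻¹ * Φ s with hθdef
  have hψc : Continuous ψ := Complex.continuous_ofReal.comp (Real.continuous_sqrt.comp hΦ.norm)
  -- ‖θ s‖ ≤ √‖Φ s‖
  have hθnorm : ∀ s, ‖θ s‖ ≤ Real.sqrt ‖Φ s‖ := by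
    intro s
    by_cases h : Φ s = 0
    · simp [hθdef, h, Real.sqrt_nonneg]
    · have hx : (0:ℝ) < ‖Φ s‖ := norm_pos_iff.mpr h
      have hs : (0:ℝ) < Real.sqrt ‖Φ s‖ := Real.sqrt_pos.mpr hx
      have : ‖θ s‖ = (Real.sqrt ‖Φ s‖)⁻¹ * ‖Φ s‖ := by
        simp [hθdef, norm_inv, Complex.norm_real, abs_of_pos hs]
      rw [this]
      have h2 : Real.sqrt ‖Φ s‖ * Real.sqrt ‖Φ s‖ = ‖Φ s‖ := Real.mul_self_sqrt hx.le
      rw [inv_mul_le_iff₀ hs, h2]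
  have hθc : Continuous θ := by
    rw [continuous_iff_continuousAt]
    intro s₀
    by_cases h : Φ s₀ = 0
    · have h0 : θ s₀ = 0 := by simp [hθdef, h]
      unfold ContinuousAt
      rw [h0]
      refine squeeze_zero_norm hθnorm ?_
      have := (Real.continuous_sqrt.comp hΦ.norm).continuousAt (x := s₀)
      simpa [ContinuousAt, Function.comp_def, h] using this
    · have hs : Real.sqrt ‖Φ s₀‖ ≠ 0 :=
        (Real.sqrt_pos.mpr (norm_pos_iff.mpr h)).ne'
      have hsc : ((Real.sqrt ‖Φ s₀‖ : ℝ) : ℂ) ≠ 0 := by exact_mod_cast hs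
      exact ((hψc.continuousAt).inv₀ hsc).mul hΦ.continuousAt
  -- factorization Φ = ψ * θ  and |θ|² = |Φ|, ψ² = |Φ|
  have hfact : ∀ s, Φ s = ψ s * θ s := by
    intro s
    by_cases h : Φ s = 0
    · simp [hψdef, hθdef, h]
    · have hs : ((Real.sqrt ‖Φ s‖ : ℝ) : ℂ) ≠ 0 := by
        exact_mod_cast (Real.sqrt_pos.mpr (norm_pos_iff.mpr h)).ne'
      simp only [hψdef, hθdef]
      rw [← mul_assoc, mul_inv_cancel₀ hs, one_mul]
  have hψsq : ∀ s, (starRingEnd ℂ) (ψ s) * ψ s = ((‖Φ s‖ : ℝ) : ℂ) := by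
    intro s
    simp only [hψdef, Complex.conj_ofReal, ← Complex.ofReal_mul,
      Real.mul_self_sqrt (norm_nonneg _)]
  have hθsq : ∀ s, (starRingEnd ℂ) (θ s) * θ s = ((‖Φ s‖ : ℝ) : ℂ) := by
    intro s
    by_cases h : Φ s = 0
    · simp [hθdef, h]
    · have hx : (0:ℝ) < ‖Φ s‖ := norm_pos_iff.mpr h
      simp only [hθdef, map_mul, map_inv₀, Complex.conj_ofReal]
      rw [show ((Real.sqrt ‖Φ s‖ : ℝ) : ℂ)⁻¹ * (starRingEnd ℂ) (Φ s) *
          (((Real.sqrt ‖Φ s‖ : ℝ) : ℂ)⁻¹ * Φ s)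
          = (((Real.sqrt ‖Φ s‖ : ℝ) : ℂ) * ((Real.sqrt ‖Φ s‖ : ℝ) : ℂ))⁻¹ *
            ((starRingEnd ℂ) (Φ s) * Φ s) by ring]
      rw [← Complex.ofReal_mul, Real.mul_self_sqrt hx.le,
        ← Complex.normSq_eq_conj_mul_self, Complex.normSq_eq_norm_sq]
      have hne : ((‖Φ s‖ : ℝ) : ℂ) ≠ 0 := by exact_mod_cast hx.ne'
      push_cast
      rw [sq, ← mul_assoc, inv_mul_cancel₀ hne, one_mul]
  -- operator versions
  set A : H →L[ℂ] H := cfc (fun z : ℂ => ψ z.re) L with hA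
  set B : H →L[ℂ] H := cfc (fun z : ℂ => θ z.re) L with hB
  have hψc' : Continuous fun z : ℂ => ψ z.re := hψc.comp Complex.continuous_re
  have hθc' : Continuous fun z : ℂ => θ z.re := hθc.comp Complex.continuous_re
  have hsplit : cfc (fun z : ℂ => Φ z.re) L = A * B := by
    rw [hA, hB, ← cfc_mul _ _ L hψc'.continuousOn hθc'.continuousOn]
    exact cfc_congr fun z _ => hfact z.re
  have hconjψ : ∀ s : ℝ, (starRingEnd ℂ) (ψ s) = ψ s := fun s => Complex.conj_ofReal _
  have hAstar : star A = A := by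
    rw [hA, ← cfc_star]
    exact cfc_congr fun z _ => hconjψ z.re
  have hM : cfc (fun s : ℝ => ‖Φ s‖) L = cfc (fun z : ℂ => ((‖Φ z.re‖ : ℝ) : ℂ)) L :=
    cfc_real_eq_complex _ hL
  have hAA : A * A = cfc (fun s : ℝ => ‖Φ s‖) L := by
    rw [hM, hA, ← cfc_mul _ _ L hψc'.continuousOn hψc'.continuousOn]
    exact cfc_congr fun z _ => by have h' := hψsq z.re; rwa [hconjψ z.re] at h'
  have hBB : star B * B = cfc (fun s : ℝ => ‖Φ s‖) L := by
    rw [hM, hB, ← cfc_star, ← cfc_mul (fun z : ℂ => star (θ z.re)) _ L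
      hθc'.star.continuousOn hθc'.continuousOn]
    exact cfc_congr fun z _ => hθsq z.re
  have hAadj : ContinuousLinearMap.adjoint A = A := by
    rw [← ContinuousLinearMap.star_eq_adjoint, hAstar]
  have h1 : ⟪f, (cfc (fun z : ℂ => Φ z.re) L) g⟫_ℂ = ⟪A f, B g⟫_ℂ := by
    rw [hsplit]
    calc ⟪f, (A * B) g⟫_ℂ = ⟪f, A (B g)⟫_ℂ := rfl
    _ = ⟪(ContinuousLinearMap.adjoint A) f, B g⟫_ℂ :=
        (ContinuousLinearMap.adjoint_inner_left A (B g) f).symm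
    _ = ⟪A f, B g⟫_ℂ := by rw [hAadj]
  have h2 : (⟪f, (cfc (fun s : ℝ => ‖Φ s‖) L) f⟫_ℂ).re = ‖A f‖ ^ 2 := by
    rw [← hAA]
    have : ⟪f, (A * A) f⟫_ℂ = ⟪A f, A f⟫_ℂ := by
      calc ⟪f, (A * A) f⟫_ℂ = ⟪f, A (A f)⟫_ℂ := rfl
      _ = ⟪(ContinuousLinearMap.adjoint A) f, A f⟫_ℂ :=
          (ContinuousLinearMap.adjoint_inner_left A (A f) f).symm
      _ = ⟪A f, A f⟫_ℂ := by rw [hAadj]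
    rw [this]
    exact inner_self_eq_norm_sq (𝕜 := ℂ) (A f)
  have h3 : (⟪g, (cfc (fun s : ℝ => ‖Φ s‖) L) g⟫_ℂ).re = ‖B g‖ ^ 2 := by
    rw [← hBB]
    have : ⟪g, (star B * B) g⟫_ℂ = ⟪B g, B g⟫_ℂ := by
      calc ⟪g, (star B * B) g⟫_ℂ = ⟪g, (ContinuousLinearMap.adjoint B) (B g)⟫_ℂ := by
            rw [← ContinuousLinearMap.star_eq_adjoint]; rfl
      _ = ⟪B g, B g⟫_ℂ := ContinuousLinearMap.adjoint_inner_right B g (B g)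
    rw [this]
    exact inner_self_eq_norm_sq (𝕜 := ℂ) (B g)
  rw [h1, h2, h3]
  calc ‖⟪A f, B g⟫_ℂ‖ ≤ ‖A f‖ * ‖B g‖ := norm_inner_le_norm _ _
  _ ≤ (1/2 : ℝ) * (‖A f‖ ^ 2 + ‖B g‖ ^ 2) := by nlinarith [sq_nonneg (‖A f‖ - ‖B g‖)]
end

section
/- (Taylor expansion and spectral calculus.) Let H be a complex Hilbert space, L a bounded self-adjoint operator on H, N a natural number, and f, g ∈ H. Let Φ : ℝ → ℂ be a bounded function which is (N+1)-times continuously differentiable and whose (N+1)-st derivative Φ^{(N+1)} is bounded, with ‖Φ^{(N+1)}‖_∞ ≤ M. Then |⟪f, Φ(L) g⟫ − Σ_{n=0}^{N} (Φ^{(n)}(0)/n!) · ⟪f, Lⁿ g⟫| ≤ (M/(N+1)!) · (Re⟪f, |L|^{N+1} f⟫ + Re⟪g, |L|^{N+1} g⟫)/2, where |L|^{N+1} denotes the operator obtained from L by applying the continuous functional calculus to the function s ↦ |s|^{N+1}. -/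
open scoped InnerProductSpace

private lemma taylor_aux (M : ℝ) : ∀ (k : ℕ) (g : ℝ → ℂ), ContDiff ℝ (k : ℕ) g →
    (∀ t : ℝ, ‖iteratedDeriv k g t‖ ≤ M) → ∀ s : ℝ, 0 ≤ s →
    ‖g s - ∑ n ∈ Finset.range k, ((s ^ n / n.factorial : ℝ)) • iteratedDeriv n g 0‖ ≤
      M * s ^ k / k.factorial := by
  intro k
  induction k with
  | zero =>
    intro g _ hM s hs
    simpa using hM s
  | succ k ih =>
    intro g hg hM s hs
    -- the derivative of g is ContDiff k
    have hg' : Differentiable ℝ g ∧ ContDiff ℝ (k : ℕ) (deriv g) := by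
      have := (contDiff_succ_iff_deriv (n := (k : ℕ))).mp (by exact_mod_cast hg)
      exact ⟨this.1, this.2.2⟩
    have hMd : ∀ t : ℝ, ‖iteratedDeriv k (deriv g) t‖ ≤ M := by
      intro t; rw [← iteratedDeriv_succ']; exact hM t
    -- G and its derivative
    set G : ℝ → ℂ := fun s => g s - ∑ n ∈ Finset.range (k+1),
      ((s ^ n / n.factorial : ℝ)) • iteratedDeriv n g 0 with hG
    set G' : ℝ → ℂ := fun s => deriv g s - ∑ n ∈ Finset.range k,
      ((s ^ n / n.factorial : ℝ)) • iteratedDeriv n (deriv g) 0 with hG'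
    have hDG : ∀ t : ℝ, HasDerivAt G (G' t) t := by
      intro t
      have h1 : HasDerivAt g (deriv g t) t := (hg'.1 t).hasDerivAt
      have h2 : HasDerivAt (fun s : ℝ => ∑ n ∈ Finset.range (k+1),
          ((s ^ n / n.factorial : ℝ)) • iteratedDeriv n g 0)
          (∑ n ∈ Finset.range k, ((t ^ n / n.factorial : ℝ)) • iteratedDeriv n (deriv g) 0) t := by
        have h3 : HasDerivAt (fun s : ℝ => ∑ n ∈ Finset.range (k+1),
            ((s ^ n / n.factorial : ℝ)) • iteratedDeriv n g 0)
            (∑ n ∈ Finset.range (k+1),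
              ((n * t ^ (n-1) / n.factorial : ℝ)) • iteratedDeriv n g 0) t := by
          apply HasDerivAt.fun_sum
          intro n _
          have : HasDerivAt (fun s : ℝ => (s ^ n / n.factorial : ℝ))
              ((n * t ^ (n-1) / n.factorial : ℝ)) t := by
            simpa [div_eq_mul_inv] using
              ((hasDerivAt_pow n t).div_const (n.factorial : ℝ))
          exact this.smul_const _
        convert h3 using 1
        rw [Finset.sum_range_succ' _ k]
        simp only [Nat.cast_zero, pow_zero, Nat.factorial_zero, zero_mul, zero_div,
          zero_smul, add_zero]
        apply Finset.sum_congr rfl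
        intro n _
        rw [iteratedDeriv_succ']
        congr 1
        · push_cast
          rw [Nat.factorial_succ]
          push_cast
          field_simp
      exact h1.sub h2
    have hG0 : G 0 = 0 := by
      simp [hG, Finset.sum_range_succ' _ k]
    have hcont : Continuous G' := by
      apply Continuous.sub
      · exact (hg'.2.continuous)
      · fun_prop
    have hint : G s = ∫ t in (0:ℝ)..s, G' t := by
      rw [intervalIntegral.integral_eq_sub_of_hasDerivAt (fun t _ => hDG t)
        (hcont.intervalIntegrable _ _), hG0, sub_zero]
    calc ‖G s‖ = ‖∫ t in (0:ℝ)..s, G' t‖ := by rw [hint]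
      _ ≤ ∫ t in (0:ℝ)..s, ‖G' t‖ := intervalIntegral.norm_integral_le_integral_norm hs
      _ ≤ ∫ t in (0:ℝ)..s, M * t ^ k / k.factorial := by
          apply intervalIntegral.integral_mono_on hs
          · exact (hcont.norm.intervalIntegrable _ _)
          · apply Continuous.intervalIntegrable; fun_prop
          · intro t ht
            exact ih (deriv g) hg'.2 hMd t ht.1
      _ = M * s ^ (k+1) / (k+1).factorial := by
          rw [intervalIntegral.integral_div, intervalIntegral.integral_const_mul, integral_pow]
          rw [Nat.factorial_succ]
          push_cast
          field_simp
          simp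

private lemma taylor_bound {Φ : ℝ → ℂ} {N : ℕ} {M : ℝ}
    (hΦ : ContDiff ℝ (N + 1 : ℕ) Φ)
    (hM : ∀ s : ℝ, ‖iteratedDeriv (N + 1) Φ s‖ ≤ M) (s : ℝ) :
    ‖Φ s - ∑ n ∈ Finset.range (N + 1),
        (iteratedDeriv n Φ 0 / (n.factorial : ℂ)) * (s : ℂ) ^ n‖ ≤
      M / ((N + 1).factorial : ℝ) * |s| ^ (N + 1) := by
  have hsum : ∀ (c : ℕ → ℂ) (t : ℝ), (∑ n ∈ Finset.range (N + 1), (c n / (n.factorial : ℂ)) * (t : ℂ) ^ n)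
      = ∑ n ∈ Finset.range (N + 1), ((t ^ n / n.factorial : ℝ)) • c n := by
    intro c t
    apply Finset.sum_congr rfl
    intro n _
    rw [Complex.real_smul]
    push_cast
    ring
  rcases le_or_gt 0 s with hs | hs
  · rw [hsum]
    have := taylor_aux M (N + 1) Φ hΦ hM s hs
    rw [abs_of_nonneg hs]
    calc _ ≤ M * s ^ (N+1) / (N+1).factorial := this
      _ = M / ((N + 1).factorial : ℝ) * s ^ (N + 1) := by ring
  · set Ψ : ℝ → ℂ := fun t => Φ (-t) with hΨ
    have hΨc : ContDiff ℝ ((N+1 : ℕ) : ℕ∞) Ψ := hΦ.comp contDiff_neg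
    have hΨM : ∀ t : ℝ, ‖iteratedDeriv (N+1) Ψ t‖ ≤ M := by
      intro t
      rw [hΨ, iteratedDeriv_comp_neg, norm_smul]
      simp only [norm_pow, norm_neg, norm_one, one_pow, one_mul]
      exact hM (-t)
    have key := taylor_aux M (N + 1) Ψ (by exact_mod_cast hΨc) hΨM (-s) (by linarith)
    have h0 : ∀ n : ℕ, iteratedDeriv n Ψ 0 = ((-1 : ℝ) ^ n) • iteratedDeriv n Φ 0 := by
      intro n
      rw [hΨ, iteratedDeriv_comp_neg, neg_zero]
    have hre : Ψ (-s) - ∑ n ∈ Finset.range (N + 1), (((-s) ^ n / n.factorial : ℝ)) • iteratedDeriv n Ψ 0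
        = Φ s - ∑ n ∈ Finset.range (N + 1), ((s ^ n / n.factorial : ℝ)) • iteratedDeriv n Φ 0 := by
      have hv : Ψ (-s) = Φ s := by rw [hΨ]; simp
      rw [hv]
      congr 1
      apply Finset.sum_congr rfl
      intro n _
      rw [h0 n, smul_smul]
      congr 1
      rw [neg_pow s n, div_mul_eq_mul_div]
      rw [mul_comm ((-1:ℝ)^n) (s^n), mul_assoc, ← pow_add,
        Even.neg_one_pow ⟨n, by ring⟩, mul_one]
    rw [hsum, ← hre]
    calc _ ≤ M * (-s) ^ (N+1) / (N+1).factorial := key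
      _ = M / ((N + 1).factorial : ℝ) * |s| ^ (N + 1) := by
          rw [abs_of_neg hs]; ring

private lemma re_inner_self {H : Type*} [NormedAddCommGroup H] [InnerProductSpace ℂ H] (x : H) :
    (⟪x, x⟫_ℂ).re = ‖x‖ ^ 2 := inner_self_eq_norm_sq (𝕜 := ℂ) (x := x)

private lemma cfc_cs_bound
    {H : Type*} [NormedAddCommGroup H] [InnerProductSpace ℂ H] [CompleteSpace H]
    (L : H →L[ℂ] H) (hL : IsSelfAdjoint L)
    (e : ℂ → ℂ) (he_cont : Continuous e)
    (r : ℂ → ℝ) (hr_cont : Continuous r) (hr0 : ∀ z, 0 ≤ r z)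
    (c : ℝ) (hc : 0 ≤ c) (he : ∀ z, ‖e z‖ ≤ c * r z) (f g : H) :
    ‖⟪f, (cfc e L) g⟫_ℂ‖ ≤
      c * (((⟪f, (cfc (fun z => (r z : ℂ)) L) f⟫_ℂ).re +
        (⟪g, (cfc (fun z => (r z : ℂ)) L) g⟫_ℂ).re) / 2) := by
  have hnormal : IsStarNormal L := hL.isStarNormal
  set Kc := cfc (fun z => (r z : ℂ)) L with hKc
  set X := (⟪f, Kc f⟫_ℂ).re with hX
  set Y := (⟪g, Kc g⟫_ℂ).re with hY
  -- the ε-regularized bound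
  have key : ∀ ε : ℝ, 0 < ε →
      ‖⟪f, (cfc e L) g⟫_ℂ‖ ≤ (c * X + (c * Y + ε * ‖g‖ ^ 2)) / 2 := by
    intro ε hε
    set d : ℂ → ℝ := fun z => Real.sqrt (c * r z + ε) with hd
    have hcr0 : ∀ z, 0 ≤ c * r z := fun z => mul_nonneg hc (hr0 z)
    have hd_pos : ∀ z, 0 < d z := fun z => Real.sqrt_pos.mpr (by linarith [hcr0 z])
    have hd_cont : Continuous d := (continuous_const.mul hr_cont |>.add continuous_const).sqrt
    have hd_sq : ∀ z, d z ^ 2 = c * r z + ε := fun z =>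
      Real.sq_sqrt (by linarith [hcr0 z])
    set p : ℂ → ℂ := fun z => e z / (d z : ℂ) with hp
    set q : ℂ → ℂ := fun z => (d z : ℂ) with hq
    have hdC_ne : ∀ z, (d z : ℂ) ≠ 0 := fun z => Complex.ofReal_ne_zero.mpr (hd_pos z).ne'
    have hp_cont : Continuous p := he_cont.div (Complex.continuous_ofReal.comp hd_cont) hdC_ne
    have hq_cont : Continuous q := Complex.continuous_ofReal.comp hd_cont
    set A := cfc p L with hA
    set B := cfc q L with hB
    have hmul : cfc e L = A * B := by
      rw [hA, hB, ← cfc_mul p q L hp_cont.continuousOn hq_cont.continuousOn]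
      congr 1
      funext z
      rw [hp, hq]
      exact (div_mul_cancel₀ (e z) (hdC_ne z)).symm
    -- ‖adjoint A f‖² ≤ c * X
    have hAadj : ContinuousLinearMap.adjoint A = cfc (fun z => star (p z)) L := by
      rw [← ContinuousLinearMap.star_eq_adjoint, ← cfc_star]
    have hbound1 : ‖ContinuousLinearMap.adjoint A f‖ ^ 2 ≤ c * X := by
      have h1 : (⟪ContinuousLinearMap.adjoint A f, ContinuousLinearMap.adjoint A f⟫_ℂ).re
          = (⟪f, (A * star A) f⟫_ℂ).re := by
        rw [ContinuousLinearMap.adjoint_inner_left A (ContinuousLinearMap.adjoint A f) f]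
        rw [ContinuousLinearMap.star_eq_adjoint]
        rfl
      have h2 : ‖ContinuousLinearMap.adjoint A f‖ ^ 2 = (⟪f, (A * star A) f⟫_ℂ).re := by
        rw [← h1, re_inner_self]
      -- A * star A = cfc of |p|²
      have h3 : A * star A = cfc (fun z => ((Complex.normSq (p z) : ℝ) : ℂ)) L := by
        rw [hA, ← cfc_star p L, ← cfc_mul p _ L hp_cont.continuousOn
          (by exact (continuous_star.comp hp_cont).continuousOn)]
        congr 1
        funext z
        exact Complex.mul_conj (p z)
      -- w := c r − |p|² ≥ 0
      set w : ℂ → ℝ := fun z => c * r z - Complex.normSq (p z) with hw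
      have hw0 : ∀ z, 0 ≤ w z := by
        intro z
        have hpz : Complex.normSq (p z) = ‖e z‖ ^ 2 / (d z ^ 2) := by
          rw [Complex.normSq_eq_norm_sq, hp]
          rw [norm_div, Complex.norm_real, Real.norm_of_nonneg (hd_pos z).le]
          rw [div_pow]
        simp only [hw]
        rw [hpz, hd_sq z, sub_nonneg, div_le_iff₀ (by linarith [hcr0 z])]
        have h4 : ‖e z‖ ^ 2 ≤ (c * r z) ^ 2 := by
          apply pow_le_pow_left₀ (norm_nonneg _) (he z)
        nlinarith [hcr0 z, norm_nonneg (e z)]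
      have hw_cont : Continuous w :=
        (continuous_const.mul hr_cont).sub (Complex.continuous_normSq.comp hp_cont)
      -- positivity of cfc w
      have hw_pos : 0 ≤ (⟪f, (cfc (fun z => (w z : ℂ)) L) f⟫_ℂ).re := by
        set u : ℂ → ℂ := fun z => (Real.sqrt (w z) : ℂ) with hu
        have hu_cont : Continuous u := Complex.continuous_ofReal.comp hw_cont.sqrt
        set U := cfc u L with hU
        have hUU : cfc (fun z => (w z : ℂ)) L = U * U := by
          rw [hU, ← cfc_mul u u L hu_cont.continuousOn hu_cont.continuousOn]
          congr 1
          funext z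
          rw [hu, ← Complex.ofReal_mul, Real.mul_self_sqrt (hw0 z)]
        have hUsa : ContinuousLinearMap.adjoint U = U := by
          rw [← ContinuousLinearMap.star_eq_adjoint, hU, ← cfc_star]
          congr 1
          funext z
          exact Complex.conj_ofReal _
        rw [hUU]
        have : (⟪f, (U * U) f⟫_ℂ) = ⟪U f, U f⟫_ℂ := by
          rw [ContinuousLinearMap.mul_apply, ← ContinuousLinearMap.adjoint_inner_left U (U f) f, hUsa]
        rw [this, re_inner_self]
        positivity
      -- split: cfc |p|² + cfc w = cfc (c r)
      have hsplit : cfc (fun z => ((Complex.normSq (p z) : ℝ) : ℂ)) L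
          + cfc (fun z => (w z : ℂ)) L = (c : ℂ) • Kc := by
        rw [← cfc_add (a := L) _ _
          (by exact (Complex.continuous_ofReal.comp (Complex.continuous_normSq.comp hp_cont)).continuousOn)
          (by exact (Complex.continuous_ofReal.comp hw_cont).continuousOn)]
        rw [hKc, ← cfc_const_mul (c : ℂ) _ L
          (by exact (Complex.continuous_ofReal.comp hr_cont).continuousOn)]
        congr 1
        funext z
        rw [hw]
        push_cast
        ring
      have h5 : (⟪f, ((c : ℂ) • Kc) f⟫_ℂ).re = c * X := by
        rw [ContinuousLinearMap.smul_apply, inner_smul_right, hX]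
        simp [Complex.mul_re]
      have h6 : (⟪f, (A * star A) f⟫_ℂ).re + (⟪f, (cfc (fun z => (w z : ℂ)) L) f⟫_ℂ).re = c * X := by
        rw [← h5, h3, ← hsplit]
        rw [ContinuousLinearMap.add_apply, inner_add_right]
        simp [Complex.add_re]
      rw [h2]
      linarith [hw_pos, h6.le]
    -- ‖B g‖² = c * Y + ε ‖g‖²
    have hbound2 : ‖B g‖ ^ 2 ≤ c * Y + ε * ‖g‖ ^ 2 := by
      have h1 : ‖B g‖ ^ 2 = (⟪g, (B * B) g⟫_ℂ).re := by
        have hBsa : ContinuousLinearMap.adjoint B = B := by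
          rw [← ContinuousLinearMap.star_eq_adjoint, hB, ← cfc_star]
          congr 1
          funext z
          exact Complex.conj_ofReal _
        rw [← re_inner_self (B g)]
        congr 1
        rw [ContinuousLinearMap.mul_apply, ← ContinuousLinearMap.adjoint_inner_left B (B g) g, hBsa]
      have hrC_cont : Continuous (fun z : ℂ => (c : ℂ) * (r z : ℂ)) :=
        continuous_const.mul (Complex.continuous_ofReal.comp hr_cont)
      have h2 : B * B = (c : ℂ) • Kc + (ε : ℂ) • (1 : H →L[ℂ] H) := by
        rw [hB, ← cfc_mul q q L hq_cont.continuousOn hq_cont.continuousOn]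
        have heq : (fun z => q z * q z) = fun z => (c : ℂ) * (r z : ℂ) + (fun _ : ℂ => (ε : ℂ)) z := by
          funext z
          rw [hq, ← Complex.ofReal_mul, Real.mul_self_sqrt (by linarith [hcr0 z])]
          push_cast
          ring
        rw [heq, cfc_add (a := L) _ _ hrC_cont.continuousOn continuousOn_const]
        rw [cfc_const_mul (c : ℂ) _ L (by exact (Complex.continuous_ofReal.comp hr_cont).continuousOn),
          cfc_const (ε : ℂ) L, Algebra.algebraMap_eq_smul_one]
      rw [h1, h2]
      rw [ContinuousLinearMap.add_apply, inner_add_right, Complex.add_re]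
      have h3 : (⟪g, ((c : ℂ) • Kc) g⟫_ℂ).re = c * Y := by
        rw [ContinuousLinearMap.smul_apply, inner_smul_right, hY]
        simp [Complex.mul_re]
      have h4 : (⟪g, ((ε : ℂ) • (1 : H →L[ℂ] H)) g⟫_ℂ).re = ε * ‖g‖ ^ 2 := by
        rw [ContinuousLinearMap.smul_apply, inner_smul_right, ContinuousLinearMap.one_apply]
        have h := inner_self_eq_norm_sq (𝕜 := ℂ) (x := g)
        simp only [Complex.mul_re, Complex.ofReal_re, Complex.ofReal_im, zero_mul, sub_zero]
        rw [show (⟪g, g⟫_ℂ).re = ‖g‖ ^ 2 from h]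
      rw [h3, h4]
    -- combine
    have hfin : ‖⟪f, (cfc e L) g⟫_ℂ‖ ≤ ‖ContinuousLinearMap.adjoint A f‖ * ‖B g‖ := by
      rw [hmul, ContinuousLinearMap.mul_apply,
        ← ContinuousLinearMap.adjoint_inner_left A (B g) f]
      exact norm_inner_le_norm _ _
    calc ‖⟪f, (cfc e L) g⟫_ℂ‖ ≤ ‖ContinuousLinearMap.adjoint A f‖ * ‖B g‖ := hfin
      _ ≤ (‖ContinuousLinearMap.adjoint A f‖ ^ 2 + ‖B g‖ ^ 2) / 2 := by
          nlinarith [sq_nonneg (‖ContinuousLinearMap.adjoint A f‖ - ‖B g‖)]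
      _ ≤ (c * X + (c * Y + ε * ‖g‖ ^ 2)) / 2 := by linarith [hbound1, hbound2]
  -- let ε → 0
  have : ∀ δ : ℝ, 0 < δ → ‖⟪f, (cfc e L) g⟫_ℂ‖ ≤ c * ((X + Y) / 2) + δ := by
    intro δ hδ
    have hε : 0 < 2 * δ / (‖g‖ ^ 2 + 1) := by positivity
    have := key _ hε
    have hg2 : (0 : ℝ) ≤ ‖g‖ ^ 2 := sq_nonneg _
    calc ‖⟪f, (cfc e L) g⟫_ℂ‖ ≤ (c * X + (c * Y + 2 * δ / (‖g‖ ^ 2 + 1) * ‖g‖ ^ 2)) / 2 := this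
      _ ≤ c * ((X + Y) / 2) + δ := by
          have : 2 * δ / (‖g‖ ^ 2 + 1) * ‖g‖ ^ 2 ≤ 2 * δ := by
            rw [div_mul_eq_mul_div, div_le_iff₀ (by positivity)]
            nlinarith
          linarith
  exact le_of_forall_pos_le_add this

/-- **Taylor expansion and spectral calculus.** For a bounded selfadjoint operator `L` on a
complex Hilbert space, a natural number `N`, vectors `f, g` and a bounded `(N+1)`-times
continuously differentiable function `Φ : ℝ → ℂ` whose `(N+1)`-st derivative is bounded
by `M`, one has
`|⟪f, Φ(L) g⟫ − ∑_{n=0}^N Φ⁽ⁿ⁾(0)/n! ⟪f, Lⁿ g⟫| ≤ M/(N+1)! · (Re⟪f,|L|^{N+1} f⟫ + Re⟪g,|L|^{N+1} g⟫)/2`.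
Here `Φ(L)` is realized via the continuous functional calculus for the normal element `L`
applied to `z ↦ Φ (Re z)` (which agrees with `Φ` on the real spectrum of `L`), and
`|L|^{N+1}` via the real functional calculus applied to `s ↦ |s|^{N+1}`. -/
theorem taylor_expansion_spectral_calculus
    {H : Type*} [NormedAddCommGroup H] [InnerProductSpace ℂ H] [CompleteSpace H]
    (L : H →L[ℂ] H) (hL : IsSelfAdjoint L) (N : ℕ) (f g : H)
    (Φ : ℝ → ℂ) (M : ℝ)
    (hΦbdd : ∃ C : ℝ, ∀ s : ℝ, ‖Φ s‖ ≤ C)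
    (hΦ : ContDiff ℝ (N + 1 : ℕ) Φ)
    (hM : ∀ s : ℝ, ‖iteratedDeriv (N + 1) Φ s‖ ≤ M) :
    ‖⟪f, (cfc (fun z : ℂ => Φ z.re) L) g⟫_ℂ -
        ∑ n ∈ Finset.range (N + 1),
          (iteratedDeriv n Φ 0 / (n.factorial : ℂ)) * ⟪f, (L ^ n) g⟫_ℂ‖ ≤
      (M / ((N + 1).factorial : ℝ)) *
        (((⟪f, (cfc (fun s : ℝ => |s| ^ (N + 1)) L) f⟫_ℂ).re +
          (⟪g, (cfc (fun s : ℝ => |s| ^ (N + 1)) L) g⟫_ℂ).re) / 2) := by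
  have hnormal : IsStarNormal L := hL.isStarNormal
  have hM0 : 0 ≤ M := le_trans (norm_nonneg _) (hM 0)
  set c : ℝ := M / ((N + 1).factorial : ℝ) with hcdef
  have hc : 0 ≤ c := by positivity
  set e : ℂ → ℂ := fun z => Φ z.re - ∑ n ∈ Finset.range (N + 1),
    (iteratedDeriv n Φ 0 / (n.factorial : ℂ)) * (z.re : ℂ) ^ n with he_def
  have he_cont : Continuous e := by
    apply Continuous.sub
    · exact hΦ.continuous.comp Complex.continuous_re
    · apply continuous_finset_sum
      intro n _
      exact continuous_const.mul ((Complex.continuous_ofReal.comp Complex.continuous_re).pow n)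
  have he : ∀ z : ℂ, ‖e z‖ ≤ c * |z.re| ^ (N + 1) := fun z => taylor_bound hΦ hM z.re
  have hr_cont : Continuous (fun z : ℂ => |z.re| ^ (N + 1)) :=
    (Complex.continuous_re.abs.pow _)
  have hr0 : ∀ z : ℂ, 0 ≤ |z.re| ^ (N + 1) := fun z => by positivity
  have key := cfc_cs_bound L hL e he_cont (fun z => |z.re| ^ (N + 1)) hr_cont hr0 c hc he f g
  -- convert the real cfc to the complex one
  have step2 : cfc (fun s : ℝ => |s| ^ (N + 1)) L
      = cfc (fun z : ℂ => ((|z.re| ^ (N + 1) : ℝ) : ℂ)) L :=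
    cfc_real_eq_complex (fun s => |s| ^ (N + 1)) hL
  -- the algebraic identity
  have hpoly_cont : ∀ n ∈ Finset.range (N + 1), ContinuousOn
      (fun z : ℂ => (iteratedDeriv n Φ 0 / (n.factorial : ℂ)) * (z.re : ℂ) ^ n)
      (spectrum ℂ L) := fun n _ =>
    (continuous_const.mul ((Complex.continuous_ofReal.comp Complex.continuous_re).pow n)).continuousOn
  have hcfc_poly : cfc (fun z : ℂ => ∑ n ∈ Finset.range (N + 1),
      (iteratedDeriv n Φ 0 / (n.factorial : ℂ)) * (z.re : ℂ) ^ n) L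
      = ∑ n ∈ Finset.range (N + 1), (iteratedDeriv n Φ 0 / (n.factorial : ℂ)) • L ^ n := by
    have hsum_fun : (fun z : ℂ => ∑ n ∈ Finset.range (N + 1),
        (iteratedDeriv n Φ 0 / (n.factorial : ℂ)) * (z.re : ℂ) ^ n)
        = ∑ n ∈ Finset.range (N + 1),
          (fun z : ℂ => (iteratedDeriv n Φ 0 / (n.factorial : ℂ)) * (z.re : ℂ) ^ n) := by
      funext z; simp
    rw [hsum_fun, cfc_sum _ L _ hpoly_cont]
    apply Finset.sum_congr rfl
    intro n _
    have h1 : cfc (fun z : ℂ => (iteratedDeriv n Φ 0 / (n.factorial : ℂ)) * (z.re : ℂ) ^ n) L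
        = cfc (fun z : ℂ => (iteratedDeriv n Φ 0 / (n.factorial : ℂ)) * z ^ n) L := by
      apply cfc_congr
      intro z hz
      show iteratedDeriv n Φ 0 / (n.factorial : ℂ) * (z.re : ℂ) ^ n
        = iteratedDeriv n Φ 0 / (n.factorial : ℂ) * z ^ n
      rw [← hL.mem_spectrum_eq_re hz]
    rw [h1, cfc_const_mul _ (fun z : ℂ => z ^ n) L (by fun_prop), cfc_pow_id L n]
  have hsub : cfc e L = cfc (fun z : ℂ => Φ z.re) L
      - ∑ n ∈ Finset.range (N + 1), (iteratedDeriv n Φ 0 / (n.factorial : ℂ)) • L ^ n := by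
    rw [← hcfc_poly]
    exact cfc_sub (fun z : ℂ => Φ z.re) _ L
      (hΦ.continuous.comp Complex.continuous_re).continuousOn
      (continuousOn_finset_sum _ hpoly_cont)
  have step1 : ⟪f, (cfc (fun z : ℂ => Φ z.re) L) g⟫_ℂ -
      ∑ n ∈ Finset.range (N + 1),
        (iteratedDeriv n Φ 0 / (n.factorial : ℂ)) * ⟪f, (L ^ n) g⟫_ℂ
      = ⟪f, (cfc e L) g⟫_ℂ := by
    rw [hsub]
    simp only [ContinuousLinearMap.coe_sub', Pi.sub_apply, inner_sub_right,
      ContinuousLinearMap.coe_sum', Finset.sum_apply, inner_sum,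
      ContinuousLinearMap.coe_smul', Pi.smul_apply, inner_smul_right]
  rw [step1, step2]
  exact key
end

section
/- (Short time behavior of the semigroup.) Let H be a complex Hilbert space and L a bounded self-adjoint operator on H which is nonnegative (⟪f, L f⟫ ≥ 0 for all f ∈ H). Let f, g ∈ H and let n be a natural number such that ⟪f, L^k g⟫ = 0 for all natural numbers k < n. Then for all t ≥ 0: |⟪f, e^{−tL} g⟫ − (−t)ⁿ · ⟪f, Lⁿ g⟫ / n!| ≤ t^{n+1} · (Re⟪f, L^{n+1} f⟫ + Re⟪g, L^{n+1} g⟫) / (2 · (n+1)!). -/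
open scoped InnerProductSpace

open NormedSpace Set Finset

set_option maxHeartbeats 1000000
set_option synthInstance.maxHeartbeats 400000

section Aux

variable {H : Type*} [NormedAddCommGroup H] [InnerProductSpace ℂ H] [CompleteSpace H]

noncomputable def expL (L : H →L[ℂ] H) (s : ℝ) : H →L[ℂ] H :=
  NormedSpace.exp ((-(s : ℂ)) • L)


theorem expL_hasDerivAt (L : H →L[ℂ] H) (s : ℝ) :
    HasDerivAt (expL L) (expL L s * (-L)) s := by
  have h0 := hasDerivAt_exp_smul_const (𝕂 := ℝ) (-L) s
  have key : ∀ u : ℝ, NormedSpace.exp (u • (-L)) = expL L u := by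
    intro u
    rw [expL]
    congr 1
    rw [smul_neg, ← neg_smul, ← Complex.coe_smul, Complex.ofReal_neg]
  rw [funext key, key s] at h0
  exact h0

theorem expL_sa (L : H →L[ℂ] H) (hL : IsSelfAdjoint L) (s : ℝ) : IsSelfAdjoint (expL L s) := by
  have h : IsSelfAdjoint ((-(s : ℂ)) • L) := by
    refine IsSelfAdjoint.smul ?_ hL
    show star (-(s:ℂ)) = -(s:ℂ)
    simp [Complex.star_def, Complex.conj_ofReal]
  exact h.exp

theorem expL_comm (L : H →L[ℂ] H) (s : ℝ) : Commute L (expL L s) :=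
  ((Commute.refl L).smul_right _).exp_right

theorem expL_half (L : H →L[ℂ] H) (s : ℝ) : expL L s = expL L (s/2) * expL L (s/2) := by
  rw [expL, expL]
  have hb : ∀ x : H →L[ℂ] H, x ∈ Metric.eball (0 : H →L[ℂ] H) (expSeries ℂ (H →L[ℂ] H)).radius :=
    fun x => (expSeries_radius_eq_top ℂ (H →L[ℂ] H)).symm ▸ edist_lt_top _ _
  rw [← exp_add_of_commute_of_mem_ball (Commute.refl _) (hb _) (hb _)]
  congr 1
  rw [← add_smul]
  congr 1
  push_cast
  ring

theorem expL_zero (L : H →L[ℂ] H) : expL L 0 = 1 := by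
  simp [expL]

theorem pow_inner_nonneg (L : H →L[ℂ] H) (hL : IsSelfAdjoint L)
    (hpos : ∀ x : H, 0 ≤ (⟪x, L x⟫_ℂ).re) :
    ∀ (m : ℕ) (x : H), 0 ≤ (⟪x, (L ^ m) x⟫_ℂ).re := by
  have hsym := hL.isSymmetric
  intro m
  induction m using Nat.strong_induction_on with
  | _ m ih =>
    match m with
    | 0 => intro x; simpa using inner_self_nonneg (𝕜 := ℂ) (x := x)
    | 1 => intro x; simpa using hpos x
    | (m+2) =>
      intro x
      have h1 : L ^ (m+2) = L * L ^ m * L := by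
        rw [pow_succ, pow_succ']
      have h2 : (⟪x, (L ^ (m+2)) x⟫_ℂ) = ⟪L x, (L ^ m) (L x)⟫_ℂ := by
        rw [h1]
        simp only [ContinuousLinearMap.mul_apply]
        exact (hsym x ((L ^ m) (L x))).symm
      rw [h2]
      exact ih m (by omega) (L x)

theorem avg_bound (T : H →L[ℂ] H) (hT : IsSelfAdjoint T)
    (hTpos : ∀ x : H, 0 ≤ (⟪x, T x⟫_ℂ).re) (f g : H) :
    ‖⟪f, T g⟫_ℂ‖ ≤ ((⟪f, T f⟫_ℂ).re + (⟪g, T g⟫_ℂ).re) / 2 := by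
  have hsym := hT.isSymmetric
  rcases eq_or_ne (⟪f, T g⟫_ℂ) 0 with h0 | h0
  · rw [h0, norm_zero]
    have := hTpos f; have := hTpos g; linarith
  · set z := ⟪f, T g⟫_ℂ with hzdef
    set c : ℂ := z / ‖z‖ with hcdef
    have hz : (‖z‖ : ℂ) ≠ 0 := by
      simpa using norm_ne_zero_iff.mpr h0
    have hzz : (starRingEnd ℂ) z * z = (‖z‖ : ℂ) ^ 2 := by
      rw [mul_comm, Complex.mul_conj']
    have h1 : (starRingEnd ℂ) c * z = (‖z‖ : ℂ) := by
      rw [hcdef, map_div₀, Complex.conj_ofReal, div_mul_eq_mul_div, hzz, sq,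
        mul_div_assoc, div_self hz, mul_one]
    have h2 : c * (starRingEnd ℂ) z = (‖z‖ : ℂ) := by
      have := congrArg (starRingEnd ℂ) h1
      simpa [map_mul, Complex.conj_ofReal, mul_comm] using this
    have hcc : (starRingEnd ℂ) c * c = 1 := by
      have : (starRingEnd ℂ) c * c = ((starRingEnd ℂ) c * z) / ‖z‖ := by
        rw [hcdef]; ring
      rw [this, h1, div_self hz]
    have hgf : ⟪g, T f⟫_ℂ = (starRingEnd ℂ) z := by
      rw [hzdef, ← inner_conj_symm]
      exact congrArg _ (hsym f g)
    have key := hTpos (c • f - g)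
    have e1 : ⟪c • f - g, T (c • f - g)⟫_ℂ
        = ⟪f, T f⟫_ℂ + ⟪g, T g⟫_ℂ - ((‖z‖ : ℂ) + (‖z‖ : ℂ)) := by
      simp only [map_sub, map_smul, inner_sub_left, inner_sub_right,
        inner_smul_left, inner_smul_right, hgf, ← hzdef]
      linear_combination (⟪f, T f⟫_ℂ) * hcc - h1 - h2
    rw [e1] at key
    simp only [Complex.sub_re, Complex.add_re, Complex.ofReal_re] at key
    linarith

theorem T_pos (L : H →L[ℂ] H) (hL : IsSelfAdjoint L)
    (hpos : ∀ x : H, 0 ≤ (⟪x, L x⟫_ℂ).re) (m : ℕ) (s : ℝ) (x : H) :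
    0 ≤ (⟪x, (L ^ m * expL L s) x⟫_ℂ).re := by
  set E := expL L (s/2) with hE
  have hEsa : IsSelfAdjoint E := expL_sa L hL _
  have hEc : Commute (L ^ m) E := (expL_comm L (s/2)).pow_left m
  have hrw : L ^ m * expL L s = E * (L ^ m * E) := by
    rw [expL_half L s, ← hE]
    calc L ^ m * (E * E) = L ^ m * E * E := by rw [mul_assoc]
      _ = E * L ^ m * E := by rw [hEc.eq]
      _ = E * (L ^ m * E) := by rw [mul_assoc]
  rw [hrw]
  have happ : (E * (L ^ m * E)) x = E ((L ^ m) (E x)) := rfl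
  rw [happ]
  have hsym2 : ⟪x, E ((L ^ m) (E x))⟫_ℂ = ⟪E x, (L ^ m) (E x)⟫_ℂ :=
    (hEsa.isSymmetric x ((L ^ m) (E x))).symm
  rw [hsym2]
  exact pow_inner_nonneg L hL hpos m (E x)

theorem T_sa (L : H →L[ℂ] H) (hL : IsSelfAdjoint L) (m : ℕ) (s : ℝ) :
    IsSelfAdjoint (L ^ m * expL L s) := by
  have h1 : IsSelfAdjoint (L ^ m) := hL.pow m
  have h2 : IsSelfAdjoint (expL L s) := expL_sa L hL s
  have hc : Commute (L ^ m) (expL L s) := (expL_comm L s).pow_left m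
  rw [IsSelfAdjoint, star_mul, h1.star_eq, h2.star_eq, hc.eq]

theorem hasDerivAt_inner_expL (L : H →L[ℂ] H) (m : ℕ) (u v : H) (s : ℝ) :
    HasDerivAt (fun r : ℝ => ⟪u, (L ^ m * expL L r) v⟫_ℂ)
      (-⟪u, (L ^ (m+1) * expL L s) v⟫_ℂ) s := by
  set Ψ : (H →L[ℂ] H) →L[ℝ] ℂ :=
    ((innerSL ℂ u).comp ((ContinuousLinearMap.apply ℂ H v).comp
      ((ContinuousLinearMap.mul ℂ (H →L[ℂ] H)) (L ^ m)))).restrictScalars ℝ with hΨ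
  have h1 : ∀ T : H →L[ℂ] H, Ψ T = ⟪u, (L ^ m * T) v⟫_ℂ := by
    intro T
    simp [hΨ]
  have h := Ψ.hasFDerivAt.comp_hasDerivAt s (expL_hasDerivAt L s)
  have oid : L ^ m * (expL L s * -L) = -(L ^ (m+1) * expL L s) := by
    calc L ^ m * (expL L s * -L) = -(L ^ m * (expL L s * L)) := by
          rw [mul_neg, mul_neg]
      _ = -(L ^ m * (L * expL L s)) := by rw [← (expL_comm L s).eq]
      _ = -(L ^ (m+1) * expL L s) := by rw [← mul_assoc, ← pow_succ]
  have h2 : ⇑Ψ ∘ expL L = fun r : ℝ => ⟪u, (L ^ m * expL L r) v⟫_ℂ := funext fun r => h1 _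
  rw [h2] at h
  have h3 : Ψ (expL L s * -L) = -⟪u, (L ^ (m+1) * expL L s) v⟫_ℂ := by
    rw [h1, oid]
    simp
  rwa [h3] at h

theorem mono_bound (L : H →L[ℂ] H) (hL : IsSelfAdjoint L)
    (hpos : ∀ x : H, 0 ≤ (⟪x, L x⟫_ℂ).re) (m : ℕ) (x : H) {s : ℝ} (hs : 0 ≤ s) :
    (⟪x, (L ^ m * expL L s) x⟫_ℂ).re ≤ (⟪x, (L ^ m) x⟫_ℂ).re := by
  have hder : ∀ r : ℝ, HasDerivAt (fun r : ℝ => (⟪x, (L ^ m * expL L r) x⟫_ℂ).re)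
      (-(⟪x, (L ^ (m+1) * expL L r) x⟫_ℂ).re) r := by
    intro r
    have := Complex.reCLM.hasFDerivAt.comp_hasDerivAt r (hasDerivAt_inner_expL L m x x r)
    exact this
  have hanti : Antitone (fun r : ℝ => (⟪x, (L ^ m * expL L r) x⟫_ℂ).re) := by
    refine antitone_of_deriv_nonpos (fun r => (hder r).differentiableAt) (fun r => ?_)
    rw [(hder r).deriv]
    simpa using T_pos L hL hpos (m+1) r x
  have := hanti hs
  simpa [expL_zero L] using this

theorem fence {ψ ψ' : ℝ → ℂ} {C t : ℝ} (m : ℕ) (ht : 0 ≤ t)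
    (hψ : ∀ s : ℝ, HasDerivAt ψ (ψ' s) s) (h0 : ψ 0 = 0)
    (hb : ∀ s ∈ Icc (0:ℝ) t, ‖ψ' s‖ ≤ C * s ^ m / m.factorial) :
    ‖ψ t‖ ≤ C * t ^ (m+1) / (m+1).factorial := by
  have hB : ∀ x : ℝ, HasDerivAt (fun s : ℝ => C * s ^ (m+1) / (m+1).factorial)
      (C * x ^ m / m.factorial) x := by
    intro x
    have h := ((hasDerivAt_pow (m+1) x).const_mul C).div_const ((m+1).factorial : ℝ)
    convert h using 1
    · rfl
    · rfl
    have hm : (m + 1 : ℕ) - 1 = m := rfl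
    rw [hm]
    rw [Nat.factorial_succ]
    push_cast
    have h1 : (m.factorial : ℝ) ≠ 0 := Nat.cast_ne_zero.mpr m.factorial_ne_zero
    field_simp
  have key := image_norm_le_of_norm_deriv_right_le_deriv_boundary
    (f := ψ) (f' := ψ') (a := 0) (b := t)
    (fun s _ => (hψ s).continuousAt.continuousWithinAt)
    (fun s _ => (hψ s).hasDerivWithinAt)
    (B := fun s : ℝ => C * s ^ (m+1) / (m+1).factorial)
    (B' := fun s : ℝ => C * s ^ m / m.factorial)
    (by simp [h0])
    hB
    (fun s hs => hb s (Ico_subset_Icc_self hs))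
  have := key (right_mem_Icc.mpr ht)
  simpa using this

theorem taylor_bound_s3 : ∀ (n : ℕ) (φ : ℕ → ℝ → ℂ) (C t : ℝ), 0 ≤ t →
    (∀ k, k ≤ n → ∀ s : ℝ, HasDerivAt (φ k) (φ (k+1) s) s) →
    (∀ s ∈ Icc (0:ℝ) t, ‖φ (n+1) s‖ ≤ C) →
    ‖φ 0 t - ∑ k ∈ Finset.range (n+1), φ k 0 * (t:ℂ) ^ k / (k.factorial : ℂ)‖
      ≤ C * t ^ (n+1) / (n+1).factorial := by
  intro n
  induction n with
  | zero =>
    intro φ C t ht hd hb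
    have h := fence 0 ht (hψ := fun s => (hd 0 le_rfl s).sub_const (φ 0 0))
      (ψ := fun s => φ 0 s - φ 0 0) (by simp)
      (fun s hs => by simpa using hb s hs)
    simpa using h
  | succ n ih =>
    intro φ C t ht hd hb
    set P : ℝ → ℂ := fun s => ∑ k ∈ Finset.range (n+2), φ k 0 * (s:ℂ) ^ k / (k.factorial : ℂ)
      with hP
    set ψ : ℝ → ℂ := fun s => φ 0 s - P s with hψdef
    have hψ0 : ψ 0 = 0 := by
      simp only [hψdef, hP]
      rw [Finset.sum_eq_single 0]
      · simp
      · intro k _ hk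
        simp [zero_pow hk]
      · intro h; exact absurd (Finset.mem_range.mpr (by omega)) h
    have hPder : ∀ s : ℝ, HasDerivAt P
        (∑ k ∈ Finset.range (n+1), φ (k+1) 0 * (s:ℂ) ^ k / (k.factorial : ℂ)) s := by
      intro s
      have hterm : ∀ k ∈ Finset.range (n+2), HasDerivAt
          (fun r : ℝ => φ k 0 * (r:ℂ) ^ k / (k.factorial : ℂ))
          (φ k 0 * ((k:ℂ) * (s:ℂ) ^ (k-1)) / (k.factorial : ℂ)) s := by
        intro k _
        exact (((hasDerivAt_pow k ((s:ℂ))).comp_ofReal).const_mul (φ k 0)).div_const _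
      have hsum := HasDerivAt.fun_sum hterm
      convert hsum using 1
      · rfl
      rw [Finset.sum_range_succ' (fun k => φ k 0 * ((k:ℂ) * (s:ℂ) ^ (k-1)) / (k.factorial : ℂ)) (n+1)]
      simp only [Nat.cast_zero, zero_mul, mul_zero, zero_div, add_zero]
      refine Finset.sum_congr rfl (fun k _ => ?_)
      rw [Nat.factorial_succ]
      have h1 : (k.factorial : ℂ) ≠ 0 := Nat.cast_ne_zero.mpr k.factorial_ne_zero
      have h2 : ((k:ℂ) + 1) ≠ 0 := by
        have := Nat.cast_add_one_ne_zero (R := ℂ) k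
        simpa using this
      push_cast
      field_simp
    have hψder : ∀ s : ℝ, HasDerivAt ψ
        (φ 1 s - ∑ k ∈ Finset.range (n+1), φ (k+1) 0 * (s:ℂ) ^ k / (k.factorial : ℂ)) s :=
      fun s => (hd 0 (by omega) s).sub (hPder s)
    have hb' : ∀ s ∈ Icc (0:ℝ) t,
        ‖φ 1 s - ∑ k ∈ Finset.range (n+1), φ (k+1) 0 * (s:ℂ) ^ k / (k.factorial : ℂ)‖
          ≤ C * s ^ (n+1) / (n+1).factorial := by
      intro s hs
      have := ih (fun k => φ (k+1)) C s hs.1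
        (fun k hk r => hd (k+1) (by omega) r)
        (fun r hr => hb r (Icc_subset_Icc le_rfl hs.2 hr))
      simpa using this
    have := fence (n+1) ht hψder hψ0 hb'
    simpa [hψdef, hP] using this

end Aux


/-- **Short time behavior of the semigroup.** Let `L` be a bounded nonnegative selfadjoint
operator on a complex Hilbert space, `f, g` vectors and `n` a natural number with
`⟪f, L^k g⟫ = 0` for all `k < n`. Then for all `t ≥ 0`,
`|⟪f, e^{−tL} g⟫ − (−t)ⁿ ⟪f, Lⁿ g⟫/n!| ≤ t^{n+1} (Re⟪f, L^{n+1} f⟫ + Re⟪g, L^{n+1} g⟫)/(2 (n+1)!)`. -/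
theorem short_time_semigroup
    {H : Type*} [NormedAddCommGroup H] [InnerProductSpace ℂ H] [CompleteSpace H]
    (L : H →L[ℂ] H) (hL : IsSelfAdjoint L)
    (hpos : ∀ f : H, 0 ≤ (⟪f, L f⟫_ℂ).re)
    (f g : H) (n : ℕ) (hvanish : ∀ k : ℕ, k < n → ⟪f, (L ^ k) g⟫_ℂ = 0) :
    ∀ t : ℝ, 0 ≤ t →
      ‖⟪f, (NormedSpace.exp ((-(t : ℂ)) • L)) g⟫_ℂ -
          (-(t : ℂ)) ^ n * ⟪f, (L ^ n) g⟫_ℂ / (n.factorial : ℂ)‖ ≤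
        t ^ (n + 1) *
          (((⟪f, (L ^ (n + 1)) f⟫_ℂ).re + (⟪g, (L ^ (n + 1)) g⟫_ℂ).re) /
            (2 * ((n + 1).factorial : ℝ))) := by
  intro t ht
  set φ : ℕ → ℝ → ℂ := fun k s => (-1:ℂ) ^ k * ⟪f, (L ^ k * expL L s) g⟫_ℂ with hφ
  set C : ℝ := ((⟪f, (L ^ (n + 1)) f⟫_ℂ).re + (⟪g, (L ^ (n + 1)) g⟫_ℂ).re) / 2 with hC
  have hd : ∀ k, k ≤ n → ∀ s : ℝ, HasDerivAt (φ k) (φ (k+1) s) s := by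
    intro k _ s
    have h := (hasDerivAt_inner_expL L k f g s).const_mul ((-1:ℂ) ^ k)
    convert h using 1
    · rfl
    simp only [hφ]
    rw [pow_succ]
    ring
  have hb : ∀ s ∈ Icc (0:ℝ) t, ‖φ (n+1) s‖ ≤ C := by
    intro s hs
    have h1 : ‖φ (n+1) s‖ = ‖⟪f, (L ^ (n+1) * expL L s) g⟫_ℂ‖ := by
      simp [hφ]
    rw [h1]
    have h2 := avg_bound (L ^ (n+1) * expL L s) (T_sa L hL (n+1) s)
      (fun x => T_pos L hL hpos (n+1) s x) f g
    have h3 := mono_bound L hL hpos (n+1) f hs.1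
    have h4 := mono_bound L hL hpos (n+1) g hs.1
    rw [hC]
    linarith
  have key := taylor_bound_s3 n φ C t ht hd hb
  have e1 : φ 0 t = ⟪f, (NormedSpace.exp ((-(t : ℂ)) • L)) g⟫_ℂ := by
    simp [hφ, expL]
  have e2 : ∑ k ∈ Finset.range (n+1), φ k 0 * (t:ℂ) ^ k / (k.factorial : ℂ)
      = (-(t : ℂ)) ^ n * ⟪f, (L ^ n) g⟫_ℂ / (n.factorial : ℂ) := by
    rw [Finset.sum_eq_single_of_mem n (Finset.self_mem_range_succ n)]
    · simp only [hφ, expL_zero, mul_one]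
      rw [neg_pow]
      ring
    · intro k hk hne
      have hklt : k < n := by
        have := Finset.mem_range.mp hk
        omega
      simp [hφ, expL_zero, hvanish k hklt]
      exact Or.inl (Or.inl (by simpa using hvanish k hklt))
  rw [e1, e2] at key
  refine key.trans (le_of_eq ?_)
  rw [hC]
  ring
end

section
/- (Short time behavior of the unitary group.) Let H be a complex Hilbert space and L a bounded self-adjoint operator on H. Let f, g ∈ H and let n be a natural number such that ⟪f, L^k g⟫ = 0 for all natural numbers k < n. Then for all t ≥ 0: |⟪f, e^{−itL} g⟫ − (−it)ⁿ · ⟪f, Lⁿ g⟫ / n!| ≤ t^{n+1} · (Re⟪f, |L|^{n+1} f⟫ + Re⟪g, |L|^{n+1} g⟫) / (2 · (n+1)!), where |L|^{n+1} denotes the operator obtained from L by applying the continuous functional calculus to the function s ↦ |s|^{n+1}. -/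
open scoped InnerProductSpace
open NormedSpace

section STUGAux

variable {H : Type*} [NormedAddCommGroup H] [InnerProductSpace ℂ H] [CompleteSpace H]

lemma stug_key (L : H →L[ℂ] H) (hL : IsSelfAdjoint L) (N : ℕ) (hN : N ≠ 0) (v w : H) :
    ‖⟪v, (L ^ N) w⟫_ℂ‖ ≤ (((⟪v, (cfc (fun s : ℝ => |s| ^ N) L) v⟫_ℂ).re +
      (⟪w, (cfc (fun s : ℝ => |s| ^ N) L) w⟫_ℂ).re)) / 2 := by
  set a : ℝ → ℝ := fun s => Real.sqrt ((max s 0) ^ N) with ha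
  set b : ℝ → ℝ := fun s => Real.sqrt ((max (-s) 0) ^ N) with hb
  have hca : Continuous a := by fun_prop
  have hcb : Continuous b := by fun_prop
  set A : H →L[ℂ] H := cfc a L with hAdef
  set B : H →L[ℂ] H := cfc b L with hBdef
  have hA : IsSelfAdjoint A := cfc_predicate a L
  have hB : IsSelfAdjoint B := cfc_predicate b L
  have hAsq : A * A = cfc (fun s : ℝ => (max s 0) ^ N) L := by
    rw [hAdef, ← cfc_mul a a L hca.continuousOn hca.continuousOn]
    exact cfc_congr fun s _ => Real.mul_self_sqrt (by positivity)
  have hBsq : B * B = cfc (fun s : ℝ => (max (-s) 0) ^ N) L := by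
    rw [hBdef, ← cfc_mul b b L hcb.continuousOn hcb.continuousOn]
    exact cfc_congr fun s _ => Real.mul_self_sqrt (by positivity)
  have hM : cfc (fun s : ℝ => |s| ^ N) L = A * A + B * B := by
    rw [hAsq, hBsq, ← cfc_add L _ _ (by fun_prop) (by fun_prop)]
    refine cfc_congr fun s _ => ?_
    rcases le_total s 0 with h | h
    · rw [abs_of_nonpos h, max_eq_right h, zero_pow hN, zero_add, max_eq_left (by linarith)]
    · rw [abs_of_nonneg h, max_eq_left h, max_eq_right (by linarith), zero_pow hN, add_zero]
  have hip : ∀ (T : H →L[ℂ] H), IsSelfAdjoint T → ∀ x y : H,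
      ⟪x, (T * T) y⟫_ℂ = ⟪T x, T y⟫_ℂ := by
    intro T hT x y
    calc ⟪x, (T * T) y⟫_ℂ = ⟪x, ContinuousLinearMap.adjoint T (T y)⟫_ℂ := by
          rw [hT.adjoint_eq, ContinuousLinearMap.mul_apply]
      _ = ⟪T x, T y⟫_ℂ := ContinuousLinearMap.adjoint_inner_right T x (T y)
  have hre : ∀ x : H, (⟪x, (cfc (fun s : ℝ => |s| ^ N) L) x⟫_ℂ).re = ‖A x‖ ^ 2 + ‖B x‖ ^ 2 := by
    intro x
    rw [hM, ContinuousLinearMap.add_apply, inner_add_right, hip A hA, hip B hB,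
      inner_self_eq_norm_sq_to_K, inner_self_eq_norm_sq_to_K]
    simp [← Complex.ofReal_pow]
  have hpow : L ^ N = A * A + B * B ∨ L ^ N = A * A - B * B := by
    rcases Nat.even_or_odd N with hE | hO
    · left
      rw [hAsq, hBsq, ← cfc_add L _ _ (by fun_prop) (by fun_prop), ← cfc_pow_id (R := ℝ) L N hL]
      refine cfc_congr fun s _ => ?_
      rcases le_total s 0 with h | h
      · rw [max_eq_right h, zero_pow hN, zero_add, max_eq_left (by linarith), ← hE.neg_pow]
      · rw [max_eq_left h, max_eq_right (by linarith), zero_pow hN, add_zero]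
    · right
      rw [hAsq, hBsq, ← cfc_sub (a := L) _ _ (by fun_prop) (by fun_prop),
        ← cfc_pow_id (R := ℝ) L N hL]
      refine cfc_congr fun s _ => ?_
      rcases le_total s 0 with h | h
      · rw [max_eq_right h, zero_pow hN, zero_sub, max_eq_left (by linarith), ← hO.neg_pow,
          neg_neg]
      · rw [max_eq_left h, max_eq_right (by linarith), zero_pow hN, sub_zero]
  have hcs : ‖⟪v, (L ^ N) w⟫_ℂ‖ ≤ ‖A v‖ * ‖A w‖ + ‖B v‖ * ‖B w‖ := by
    rcases hpow with h | h
    · rw [h, ContinuousLinearMap.add_apply, inner_add_right, hip A hA, hip B hB]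
      exact (norm_add_le _ _).trans (add_le_add (norm_inner_le_norm _ _) (norm_inner_le_norm _ _))
    · rw [h, ContinuousLinearMap.sub_apply, inner_sub_right, hip A hA, hip B hB]
      exact (norm_sub_le _ _).trans (add_le_add (norm_inner_le_norm _ _) (norm_inner_le_norm _ _))
  rw [hre v, hre w]
  nlinarith [sq_nonneg (‖A v‖ - ‖A w‖), sq_nonneg (‖B v‖ - ‖B w‖), norm_nonneg (A v),
    norm_nonneg (A w), norm_nonneg (B v), norm_nonneg (B w), hcs]

lemma stug_inv (L : H →L[ℂ] H) (hL : IsSelfAdjoint L) (φ : ℝ → ℝ) (hφ : Continuous φ)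
    (s : ℝ) (w : H) :
    ⟪(exp ((s : ℂ) • ((-Complex.I) • L))) w,
      (cfc φ L) ((exp ((s : ℂ) • ((-Complex.I) • L))) w)⟫_ℂ = ⟪w, (cfc φ L) w⟫_ℂ := by
  set X : H →L[ℂ] H := (s : ℂ) • ((-Complex.I) • L) with hX
  have hcomm : Commute (cfc φ L) L := by
    show cfc φ L * L = L * cfc φ L
    have e1 := cfc_mul φ (fun x => x) L hφ.continuousOn continuousOn_id
    have e2 := cfc_mul (fun x => x) φ L continuousOn_id hφ.continuousOn
    rw [cfc_id' ℝ L hL] at e1 e2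
    rw [← e1, ← e2]
    exact cfc_congr fun x _ => mul_comm _ _
  have hXc : Commute (cfc φ L) X := (hcomm.smul_right _).smul_right _
  have hE : Commute (cfc φ L) (exp X) := hXc.exp_right
  have hstar : star X = -X := by
    rw [hX, star_smul, star_smul, hL.star_eq]
    simp [smul_smul]
  have key : star (exp X) * (cfc φ L * exp X) = cfc φ L := by
    rw [star_exp, hstar, hE.eq, ← mul_assoc, ← exp_add_of_commute_of_mem_ball (𝕂 := ℂ) ((Commute.refl X).neg_left)
        ((expSeries_radius_eq_top ℂ (H →L[ℂ] H)).symm ▸ edist_lt_top _ _)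
        ((expSeries_radius_eq_top ℂ (H →L[ℂ] H)).symm ▸ edist_lt_top _ _),
      neg_add_cancel, exp_zero, one_mul]
  have h1 := ContinuousLinearMap.adjoint_inner_right (exp X) w ((cfc φ L) ((exp X) w))
  rw [← h1, ← ContinuousLinearMap.star_eq_adjoint]
  have h2 : (star (exp X)) ((cfc φ L) ((exp X) w))
      = (star (exp X) * (cfc φ L * exp X)) w := by
    simp [ContinuousLinearMap.mul_apply]
  rw [h2, key]

end STUGAux

/-- **Short time behavior of the unitary group.** Let `L` be a bounded selfadjoint operator
on a complex Hilbert space, `f, g` vectors and `n` a natural number with `⟪f, L^k g⟫ = 0`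
for all `k < n`. Then for all `t ≥ 0`,
`|⟪f, e^{−itL} g⟫ − (−it)ⁿ ⟪f, Lⁿ g⟫ / n!| ≤ t^{n+1} (Re⟪f, |L|^{n+1} f⟫ + Re⟪g, |L|^{n+1} g⟫)/(2 (n+1)!)`,
where `|L|^{n+1}` is obtained via the real continuous functional calculus applied to
`s ↦ |s|^{n+1}`. -/
theorem short_time_unitary_group
    {H : Type*} [NormedAddCommGroup H] [InnerProductSpace ℂ H] [CompleteSpace H]
    (L : H →L[ℂ] H) (hL : IsSelfAdjoint L)
    (f g : H) (n : ℕ) (hvanish : ∀ k : ℕ, k < n → ⟪f, (L ^ k) g⟫_ℂ = 0) :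
    ∀ t : ℝ, 0 ≤ t →
      ‖⟪f, (NormedSpace.exp ((-(Complex.I * (t : ℂ))) • L)) g⟫_ℂ -
          (-(Complex.I * (t : ℂ))) ^ n * ⟪f, (L ^ n) g⟫_ℂ / (n.factorial : ℂ)‖ ≤
        t ^ (n + 1) *
          (((⟪f, (cfc (fun s : ℝ => |s| ^ (n + 1)) L) f⟫_ℂ).re +
            (⟪g, (cfc (fun s : ℝ => |s| ^ (n + 1)) L) g⟫_ℂ).re) /
            (2 * ((n + 1).factorial : ℝ))) := by
  intro t ht
  set A0 : H →L[ℂ] H := (-Complex.I) • L with hA0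
  set E : ℝ → (H →L[ℂ] H) := fun u => exp ((u : ℂ) • A0) with hEdef
  set M : H →L[ℂ] H := cfc (fun s : ℝ => |s| ^ (n + 1)) L with hMdef
  set C : ℝ := ((⟪f, M f⟫_ℂ).re + (⟪g, M g⟫_ℂ).re) / 2 with hCdef
  set aa : ℕ → ℂ := fun m => ⟪f, (L ^ m) g⟫_ℂ with haa
  set ψ : ℕ → ℝ → ℂ := fun j u => ⟪f, (L ^ j) (E u g)⟫_ℂ with hψdef
  set P : ℕ → ℝ → ℂ := fun j u => ∑ k ∈ Finset.range (n + 1 - j),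
      (-Complex.I * (u : ℂ)) ^ k * (aa (j + k) / (k.factorial : ℂ)) with hPdef
  set G : ℕ → ℝ → ℂ := fun j u => ψ j u - P j u with hGdef
  -- derivative of E
  have hEderiv : ∀ u : ℝ, HasDerivAt E (A0 * E u) u := by
    intro u
    have h1 : HasDerivAt (fun z : ℂ => exp (z • A0)) (A0 * exp (((u : ℝ) : ℂ) • A0))
        (((u : ℝ) : ℂ)) := hasDerivAt_exp_smul_const' (𝕂 := ℂ) A0 ((u : ℝ) : ℂ)
    have h2 := h1.scomp u Complex.ofRealCLM.hasDerivAt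
    simp only [Complex.ofRealCLM_apply, Complex.ofReal_one, one_smul] at h2
    exact h2
  -- derivative of ψ
  have hψderiv : ∀ (j : ℕ) (u : ℝ), HasDerivAt (ψ j) (-Complex.I * ψ (j + 1) u) u := by
    intro j u
    have hΘ := (((innerSL ℂ f).comp ((L ^ j).comp
        (ContinuousLinearMap.apply ℂ H g))).restrictScalars ℝ).hasFDerivAt.comp_hasDerivAt
        u (hEderiv u)
    convert hΘ using 1
    · rfl
    · rfl
    have e1 : (L ^ j) ((A0 * E u) g) = (-Complex.I) • ((L ^ (j + 1)) (E u g)) := by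
      rw [ContinuousLinearMap.mul_apply, hA0, ContinuousLinearMap.smul_apply, map_smul,
        pow_succ, ContinuousLinearMap.mul_apply]
    show -Complex.I * ψ (j + 1) u = ⟪f, (L ^ j) ((A0 * E u) g)⟫_ℂ
    rw [e1, inner_smul_right]
  -- derivative of P
  have hPderiv : ∀ j : ℕ, j ≤ n → ∀ u : ℝ, HasDerivAt (P j) (-Complex.I * P (j + 1) u) u := by
    intro j hj u
    have hterm : ∀ k : ℕ, HasDerivAt
        (fun y : ℝ => (-Complex.I * (y : ℂ)) ^ k * (aa (j + k) / (k.factorial : ℂ)))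
        (((k : ℂ) * (-Complex.I * (u : ℂ)) ^ (k - 1) * -Complex.I) *
          (aa (j + k) / (k.factorial : ℂ))) u := by
      intro k
      have hc : HasDerivAt (fun z : ℂ => (-Complex.I * z) ^ k * (aa (j + k) / (k.factorial : ℂ)))
          (((k : ℂ) * (-Complex.I * (((u : ℝ) : ℂ))) ^ (k - 1) * -Complex.I) *
            (aa (j + k) / (k.factorial : ℂ))) (((u : ℝ) : ℂ)) := by
        have := (((hasDerivAt_id (((u : ℝ) : ℂ))).const_mul (-Complex.I)).pow k).mul_const
          (aa (j + k) / (k.factorial : ℂ))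
        simpa using this
      exact hc.comp_ofReal
    have hsum : HasDerivAt (P j) (∑ k ∈ Finset.range (n + 1 - j),
        ((k : ℂ) * (-Complex.I * (u : ℂ)) ^ (k - 1) * -Complex.I) *
          (aa (j + k) / (k.factorial : ℂ))) u := by
      simp only [hPdef]
      exact HasDerivAt.fun_sum fun k _ => hterm k
    convert hsum using 1
    rw [show n + 1 - j = (n - j) + 1 from by omega, Finset.sum_range_succ']
    simp only [Nat.cast_zero, zero_mul, add_zero, Nat.add_sub_cancel]
    simp only [hPdef, show n + 1 - (j + 1) = n - j from by omega]
    rw [Finset.mul_sum]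
    refine Finset.sum_congr rfl fun k _ => ?_
    have hf1 : ((k.factorial : ℂ)) ≠ 0 := Nat.cast_ne_zero.mpr k.factorial_ne_zero
    have hk1 : ((k : ℂ) + 1) ≠ 0 := Nat.cast_add_one_ne_zero k
    rw [show j + 1 + k = j + (k + 1) from by omega]
    push_cast [Nat.factorial_succ]
    field_simp
  -- derivative of G
  have hGderiv : ∀ j : ℕ, j ≤ n → ∀ u : ℝ, HasDerivAt (G j) (-Complex.I * G (j + 1) u) u := by
    intro j hj u
    have h := (hψderiv j u).sub (hPderiv j hj u)
    convert h using 1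
    · rfl
    · rfl
    simp only [hGdef]
    ring
  -- G at 0
  have hE0 : E 0 = 1 := by
    rw [hEdef]
    simp [exp_zero]
  have hG0 : ∀ j : ℕ, j ≤ n → G j 0 = 0 := by
    intro j hj
    simp only [hGdef, hψdef, hPdef, hE0]
    rw [ContinuousLinearMap.one_apply, Finset.sum_eq_single 0]
    · simp [haa]
    · intro k _ hk
      simp [zero_pow hk]
    · intro h
      exact absurd (Finset.mem_range.mpr (by omega)) h
  -- bound on ψ (n+1)
  have hψbound : ∀ u : ℝ, ‖ψ (n + 1) u‖ ≤ C := by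
    intro u
    have h1 := stug_key L hL (n + 1) (Nat.succ_ne_zero n) f (E u g)
    have h2 := stug_inv L hL (fun s => |s| ^ (n + 1)) (by fun_prop) u g
    have h2' : (⟪E u g, M (E u g)⟫_ℂ).re = (⟪g, M g⟫_ℂ).re := congrArg Complex.re h2
    calc ‖ψ (n + 1) u‖
        ≤ ((⟪f, M f⟫_ℂ).re + (⟪E u g, M (E u g)⟫_ℂ).re) / 2 := h1
      _ = C := by rw [hCdef, h2']
  have hCnonneg : 0 ≤ C := le_trans (norm_nonneg _) (hψbound 0)
  -- main induction
  have main : ∀ m : ℕ, m ≤ n + 1 → ∀ t' : ℝ, 0 ≤ t' →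
      ‖G (n + 1 - m) t'‖ ≤ C * t' ^ m / (m.factorial : ℝ) := by
    intro m
    induction m with
    | zero =>
      intro _ t' ht'
      simp only [Nat.sub_self, pow_zero, Nat.factorial_zero, Nat.cast_one, mul_one, div_one]
      have hPempty : P (n + 1) t' = 0 := by
        simp [hPdef]
      calc ‖G (n + 1) t'‖ = ‖ψ (n + 1) t'‖ := by simp only [hGdef, hPempty, sub_zero]
        _ ≤ C := hψbound t'
    | succ m ih =>
      intro hm t' ht'
      have hj : n + 1 - (m + 1) ≤ n := by omega
      have hj1 : n + 1 - (m + 1) + 1 = n + 1 - m := by omega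
      set j := n + 1 - (m + 1) with hjdef
      have hfence := image_norm_le_of_norm_deriv_right_le_deriv_boundary
        (f := G j) (f' := fun u => -Complex.I * G (j + 1) u) (a := 0) (b := t')
        (B := fun u => C * u ^ (m + 1) / ((m + 1).factorial : ℝ))
        (B' := fun u => C * u ^ m / (m.factorial : ℝ))
        (fun u _ => ((hGderiv j hj u).continuousAt).continuousWithinAt)
        (fun u _ => (hGderiv j hj u).hasDerivWithinAt)
        (by rw [hG0 j hj]; simp)
        (fun u => by
          have h := ((hasDerivAt_pow (m + 1) u).const_mul C).div_const ((m + 1).factorial : ℝ)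
          convert h using 1
          · rfl
          · rfl
          have : ((m + 1).factorial : ℝ) = (m + 1) * (m.factorial : ℝ) := by
            push_cast [Nat.factorial_succ]; ring
          rw [this, Nat.add_sub_cancel, Nat.cast_succ]
          have hfm : (m.factorial : ℝ) ≠ 0 := Nat.cast_ne_zero.mpr m.factorial_ne_zero
          field_simp)
        (fun u hu => by
          rw [norm_mul]
          simp only [norm_neg, Complex.norm_I, one_mul]
          rw [hj1]
          exact ih (by omega) u hu.1)
      have := hfence (Set.right_mem_Icc.mpr ht')
      exact this
  have hfin := main (n + 1) le_rfl t ht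
  rw [Nat.sub_self] at hfin
  -- identify G 0 t with the LHS
  have hop : (-(Complex.I * (t : ℂ))) • L = (t : ℂ) • A0 := by
    rw [hA0, smul_smul]
    congr 1
    ring
  have hLHS : ⟪f, (NormedSpace.exp ((-(Complex.I * (t : ℂ))) • L)) g⟫_ℂ -
      (-(Complex.I * (t : ℂ))) ^ n * ⟪f, (L ^ n) g⟫_ℂ / (n.factorial : ℂ) = G 0 t := by
    have e1 : ψ 0 t = ⟪f, (NormedSpace.exp ((-(Complex.I * (t : ℂ))) • L)) g⟫_ℂ := by
      simp only [hψdef, pow_zero, ContinuousLinearMap.one_apply, hEdef, hop]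
    have e2 : P 0 t = (-(Complex.I * (t : ℂ))) ^ n * ⟪f, (L ^ n) g⟫_ℂ / (n.factorial : ℂ) := by
      simp only [hPdef, haa, Nat.sub_zero, zero_add]
      rw [Finset.sum_eq_single n]
      · rw [show -Complex.I * (t : ℂ) = -(Complex.I * (t : ℂ)) from by ring, mul_div_assoc]
      · intro k hk hkn
        have hklt : k < n := by
          have := Finset.mem_range.mp hk
          omega
        rw [hvanish k hklt, zero_div, mul_zero]
      · intro h
        exact absurd (Finset.mem_range.mpr (by omega)) h
    simp only [hGdef, e1, e2]
  rw [hLHS]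
  refine hfin.trans (le_of_eq ?_)
  rw [hCdef]
  have hfm : ((n + 1).factorial : ℝ) ≠ 0 := Nat.cast_ne_zero.mpr (n + 1).factorial_ne_zero
  field_simp
end

section
/- (Leading exponent, semigroup case.) Let H be a complex Hilbert space and L a bounded self-adjoint operator on H which is nonnegative (⟪f, L f⟫ ≥ 0 for all f ∈ H). Let f, g ∈ H and suppose there is a natural number n such that ⟪f, L^k g⟫ = 0 for all k < n and ⟪f, Lⁿ g⟫ ≠ 0. Then the limit as t → 0⁺ of log|⟪f, e^{−tL} g⟫| / log t exists and equals n. -/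
open scoped InnerProductSpace
open Filter Topology

set_option maxHeartbeats 800000

/-- **Leading exponent, semigroup case.** Let `L` be a bounded nonnegative selfadjoint
operator on a complex Hilbert space and `f, g` vectors such that `⟪f, L^k g⟫ = 0` for all
`k < n` while `⟪f, Lⁿ g⟫ ≠ 0`. Then `log|⟪f, e^{−tL} g⟫| / log t → n` as `t → 0⁺`. -/
theorem leading_exponent_semigroup
    {H : Type*} [NormedAddCommGroup H] [InnerProductSpace ℂ H] [CompleteSpace H]
    (L : H →L[ℂ] H) (hL : IsSelfAdjoint L)
    (hpos : ∀ f : H, 0 ≤ (⟪f, L f⟫_ℂ).re)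
    (f g : H) (n : ℕ)
    (hvanish : ∀ k : ℕ, k < n → ⟪f, (L ^ k) g⟫_ℂ = 0)
    (hne : ⟪f, (L ^ n) g⟫_ℂ ≠ 0) :
    Tendsto (fun t : ℝ =>
        Real.log ‖⟪f, (NormedSpace.exp ((-(t : ℂ)) • L)) g⟫_ℂ‖ / Real.log t)
      (𝓝[>] (0 : ℝ)) (𝓝 (n : ℝ)) := by
  set a : ℕ → ℂ := fun k => ⟪f, (L ^ k) g⟫_ℂ with ha
  -- pointwise bound on coefficients
  have hLpow : ∀ (m : ℕ) (v : H), ‖(L ^ m) v‖ ≤ ‖L‖ ^ m * ‖v‖ := by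
    intro m
    induction m with
    | zero => intro v; simp
    | succ m ih =>
      intro v
      have h1 : (L ^ (m + 1)) v = (L ^ m) (L v) := by
        rw [pow_succ]; rfl
      rw [h1]
      calc ‖(L ^ m) (L v)‖ ≤ ‖L‖ ^ m * ‖L v‖ := ih (L v)
        _ ≤ ‖L‖ ^ m * (‖L‖ * ‖v‖) := by
            exact mul_le_mul_of_nonneg_left (L.le_opNorm v) (pow_nonneg (norm_nonneg _) m)
        _ = ‖L‖ ^ (m + 1) * ‖v‖ := by ring
  have habound : ∀ m : ℕ, ‖a m‖ ≤ ‖f‖ * ‖g‖ * ‖L‖ ^ m := by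
    intro m
    calc ‖a m‖ ≤ ‖f‖ * ‖(L ^ m) g‖ := norm_inner_le_norm f _
      _ ≤ ‖f‖ * (‖L‖ ^ m * ‖g‖) :=
          mul_le_mul_of_nonneg_left (hLpow m g) (norm_nonneg f)
      _ = ‖f‖ * ‖g‖ * ‖L‖ ^ m := by ring
  -- expansion of the inner product as a series
  have hsum : ∀ t : ℝ, Summable (fun k : ℕ => ((k.factorial : ℂ)⁻¹ * (-(t:ℂ))^k) • (L ^ k)) := by
    intro t
    have := NormedSpace.expSeries_summable' (𝕂 := ℂ) ((-(t:ℂ)) • L)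
    simpa only [smul_pow, smul_smul] using this
  have hs1 : ∀ t : ℝ, Summable (fun k : ℕ => ((k.factorial : ℂ)⁻¹ * (-(t:ℂ))^k) • ((L ^ k) g)) := by
    intro t
    simpa [Function.comp_def] using (hsum t).map (ContinuousLinearMap.apply ℂ H g)
      (ContinuousLinearMap.apply ℂ H g).continuous
  have hsumC : ∀ t : ℝ, Summable (fun k : ℕ => ((k.factorial : ℂ)⁻¹ * (-(t:ℂ))^k) * a k) := by
    intro t
    have := (hs1 t).map (innerSL ℂ f) (innerSL ℂ f).continuous
    simp only [Function.comp_def] at this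
    simpa [inner_smul_right, ha] using this
  have hA : ∀ t : ℝ, ⟪f, (NormedSpace.exp ((-(t:ℂ)) • L)) g⟫_ℂ
      = ∑' k : ℕ, ((k.factorial : ℂ)⁻¹ * (-(t:ℂ))^k) * a k := by
    intro t
    have h0 : NormedSpace.exp ((-(t:ℂ)) • L)
        = ∑' k : ℕ, ((k.factorial : ℂ)⁻¹ * (-(t:ℂ))^k) • (L ^ k) := by
      rw [NormedSpace.exp_eq_tsum (𝕂 := ℂ)]
      exact tsum_congr fun k => by rw [smul_pow, smul_smul]
    rw [h0]
    have h1 : (∑' k : ℕ, ((k.factorial : ℂ)⁻¹ * (-(t:ℂ))^k) • (L ^ k)) g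
        = ∑' k : ℕ, ((k.factorial : ℂ)⁻¹ * (-(t:ℂ))^k) • ((L ^ k) g) := by
      simpa using ContinuousLinearMap.map_tsum (ContinuousLinearMap.apply ℂ H g) (hsum t)
    rw [h1]
    have h2 := ContinuousLinearMap.map_tsum (innerSL ℂ f) (hs1 t)
    simpa [inner_smul_right, ha] using h2
  -- the shifted series
  set Hfun : ℝ → ℂ := fun t => ∑' k : ℕ, (((k+n).factorial : ℂ)⁻¹ * (-(t:ℂ))^k) * a (k+n)
    with hHfun
  -- norm of terms of the shifted series
  have hterm_norm : ∀ (t : ℝ) (k : ℕ),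
      ‖(((k+n).factorial : ℂ)⁻¹ * (-(t:ℂ))^k) * a (k+n)‖
        = (((k+n).factorial : ℝ))⁻¹ * |t| ^ k * ‖a (k+n)‖ := by
    intro t k
    simp [norm_mul, norm_pow, abs_of_nonneg, Complex.norm_natCast]
  have hfact_le : ∀ k m : ℕ, ((k.factorial : ℝ))⁻¹ ≥ (((k+m).factorial : ℝ))⁻¹ := by
    intro k m
    apply inv_anti₀
    · exact_mod_cast Nat.factorial_pos k
    · exact_mod_cast Nat.factorial_le (Nat.le_add_right k m)
  have hsumHnorm : ∀ t : ℝ, Summable (fun k : ℕ =>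
      ‖(((k+n).factorial : ℂ)⁻¹ * (-(t:ℂ))^k) * a (k+n)‖) := by
    intro t
    refine Summable.of_nonneg_of_le (fun k => norm_nonneg _) (fun k => ?_)
      ((Real.summable_pow_div_factorial (|t| * ‖L‖)).mul_left (‖f‖ * ‖g‖ * ‖L‖ ^ n))
    · 
      rw [hterm_norm t k]
      calc (((k+n).factorial : ℝ))⁻¹ * |t| ^ k * ‖a (k+n)‖
          ≤ ((k.factorial : ℝ))⁻¹ * |t| ^ k * (‖f‖ * ‖g‖ * ‖L‖ ^ (k+n)) := by
            apply mul_le_mul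
            · exact mul_le_mul_of_nonneg_right (hfact_le k n)
                (pow_nonneg (abs_nonneg t) k)
            · exact habound (k+n)
            · exact norm_nonneg _
            · positivity
        _ = (‖f‖ * ‖g‖ * ‖L‖ ^ n) * ((|t| * ‖L‖) ^ k / k.factorial) := by
            rw [pow_add, mul_pow]; field_simp
  have hsumH : ∀ t : ℝ, Summable (fun k : ℕ =>
      (((k+n).factorial : ℂ)⁻¹ * (-(t:ℂ))^k) * a (k+n)) :=
    fun t => (hsumHnorm t).of_norm
  -- splitting identity
  have hsplit : ∀ t : ℝ, ⟪f, (NormedSpace.exp ((-(t:ℂ)) • L)) g⟫_ℂ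
      = (-(t:ℂ))^n * Hfun t := by
    intro t
    rw [hA t, ← (hsumC t).sum_add_tsum_nat_add n]
    have hz : ∑ i ∈ Finset.range n, ((i.factorial : ℂ)⁻¹ * (-(t:ℂ))^i) * a i = 0 := by
      apply Finset.sum_eq_zero
      intro i hi
      rw [ha]
      simp only [hvanish i (Finset.mem_range.mp hi), mul_zero]
    rw [hz, zero_add, hHfun, ← tsum_mul_left]
    exact tsum_congr fun k => by rw [pow_add]; ring
  -- value at 0
  have hH0 : Hfun 0 = ((n.factorial : ℂ))⁻¹ * a n := by
    simp only [hHfun]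
    rw [tsum_eq_single 0 (fun b hb => by simp [zero_pow hb])]
    simp
  have hH0ne : Hfun 0 ≠ 0 := by
    rw [hH0]
    exact mul_ne_zero (inv_ne_zero (Nat.cast_ne_zero.mpr n.factorial_ne_zero)) hne
  -- continuity at 0 from the right
  set C : ℝ := ‖f‖ * ‖g‖ * ‖L‖ ^ (n+1) * (∑' k : ℕ, ‖L‖ ^ k / k.factorial) with hC
  have hdiff : ∀ t : ℝ, |t| ≤ 1 → ‖Hfun t - Hfun 0‖ ≤ C * |t| := by
    intro t ht
    set F : ℕ → ℂ := fun k => (((k+n).factorial : ℂ)⁻¹ * (-(t:ℂ))^k) * a (k+n) with hF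
    have h1 : F 0 + ∑' k : ℕ, F (k+1) = Hfun t := by
      have h := (hsumH t).sum_add_tsum_nat_add 1
      rw [Finset.sum_range_one] at h
      simp only [hF, hHfun]
      exact h
    have hF0 : F 0 = Hfun 0 := by simp only [hF]; rw [hH0]; simp
    have h2 : Hfun t - Hfun 0 = ∑' k : ℕ, F (k+1) := by
      rw [← h1, hF0]; ring
    rw [h2]
    have hsn : Summable (fun k : ℕ => ‖F (k+1)‖) := by
      have h := (summable_nat_add_iff (f := fun k : ℕ => ‖F k‖) 1).mpr
        (by simpa only [hF] using hsumHnorm t)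
      simpa only [hF] using h
    calc ‖∑' k : ℕ, F (k+1)‖ ≤ ∑' k : ℕ, ‖F (k+1)‖ := norm_tsum_le_tsum_norm hsn
      _ ≤ ∑' k : ℕ, |t| * (‖f‖ * ‖g‖ * ‖L‖ ^ (n+1)) * (‖L‖ ^ k / k.factorial) := by
          apply Summable.tsum_le_tsum _ hsn
          · exact ((Real.summable_pow_div_factorial ‖L‖).mul_left _)
          intro k
          simp only [hF]
          rw [hterm_norm t]
          calc (((k+1+n).factorial : ℝ))⁻¹ * |t| ^ (k+1) * ‖a (k+1+n)‖
              ≤ ((k.factorial : ℝ))⁻¹ * |t| ^ (k+1) * (‖f‖ * ‖g‖ * ‖L‖ ^ (k+1+n)) := by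
                apply mul_le_mul
                · apply mul_le_mul_of_nonneg_right _ (pow_nonneg (abs_nonneg t) _)
                  have : (((k+(1+n)).factorial : ℝ))⁻¹ ≤ ((k.factorial : ℝ))⁻¹ := hfact_le k (1+n)
                  simpa [add_assoc] using this
                · exact habound _
                · exact norm_nonneg _
                · positivity
            _ ≤ ((k.factorial : ℝ))⁻¹ * |t| * (‖f‖ * ‖g‖ * ‖L‖ ^ (k+1+n)) := by
                apply mul_le_mul_of_nonneg_right _ (by positivity)
                apply mul_le_mul_of_nonneg_left _ (by positivity)
                exact pow_le_of_le_one (abs_nonneg t) ht (Nat.succ_ne_zero k)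
            _ = |t| * (‖f‖ * ‖g‖ * ‖L‖ ^ (n+1)) * (‖L‖ ^ k / k.factorial) := by
                rw [show k+1+n = (n+1)+k by ring, pow_add]
                field_simp
      _ = C * |t| := by
          rw [tsum_mul_left, hC]; ring
  have hIoo : ∀ᶠ t in 𝓝[>] (0:ℝ), t ∈ Set.Ioo (0:ℝ) 1 :=
    Ioo_mem_nhdsGT zero_lt_one
  have hHcont : Tendsto Hfun (𝓝[>] (0:ℝ)) (𝓝 (Hfun 0)) := by
    rw [tendsto_iff_norm_sub_tendsto_zero]
    apply squeeze_zero' (Eventually.of_forall fun t => norm_nonneg _)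
    · filter_upwards [hIoo] with t ht
      exact hdiff t (by rw [abs_of_pos ht.1]; exact le_of_lt ht.2)
    · have : Tendsto (fun t : ℝ => C * |t|) (𝓝 (0:ℝ)) (𝓝 (C * |0|)) :=
        (continuous_const.mul continuous_abs).tendsto 0
      simpa using this.mono_left nhdsWithin_le_nhds
  have hne' : ∀ᶠ t in 𝓝[>] (0:ℝ), Hfun t ≠ 0 := hHcont.eventually_ne hH0ne
  -- eventual identity
  have hev : ∀ᶠ t : ℝ in 𝓝[>] (0:ℝ),
      Real.log ‖⟪f, (NormedSpace.exp ((-(t : ℂ)) • L)) g⟫_ℂ‖ / Real.log t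
        = (n:ℝ) + Real.log ‖Hfun t‖ / Real.log t := by
    filter_upwards [hIoo, hne'] with t ht htne
    have ht0 : (0:ℝ) < t := ht.1
    have ht1 : t < 1 := ht.2
    have hlt : Real.log t ≠ 0 := ne_of_lt (Real.log_neg ht0 ht1)
    have hnorm : ‖⟪f, (NormedSpace.exp ((-(t : ℂ)) • L)) g⟫_ℂ‖ = t ^ n * ‖Hfun t‖ := by
      rw [hsplit t]
      rw [norm_mul, norm_pow]
      congr 2
      simp [abs_of_pos ht0]
    rw [hnorm, Real.log_mul (by positivity) (norm_ne_zero_iff.mpr htne), Real.log_pow]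
    rw [add_div, mul_div_assoc, div_self hlt, mul_one]
  -- conclusion
  have hmain : Tendsto (fun t : ℝ => (n:ℝ) + Real.log ‖Hfun t‖ / Real.log t)
      (𝓝[>] (0:ℝ)) (𝓝 ((n:ℝ) + 0)) := by
    apply Tendsto.add tendsto_const_nhds
    have h1 : Tendsto (fun t : ℝ => Real.log ‖Hfun t‖) (𝓝[>] (0:ℝ))
        (𝓝 (Real.log ‖Hfun 0‖)) :=
      (Real.continuousAt_log (norm_ne_zero_iff.mpr hH0ne)).tendsto.comp hHcont.norm
    have h2 : Tendsto (fun t : ℝ => (Real.log t)⁻¹) (𝓝[>] (0:ℝ)) (𝓝 0) := by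
      have hneg : Tendsto (fun t : ℝ => -Real.log t) (𝓝[>] (0:ℝ)) atTop :=
        tendsto_neg_atBot_atTop.comp Real.tendsto_log_nhdsGT_zero
      have hinv := hneg.inv_tendsto_atTop
      have := hinv.neg
      simpa [inv_neg, neg_neg] using this
    have := h1.mul h2
    simpa [div_eq_mul_inv] using this
  have := hmain.congr' (Filter.EventuallyEq.symm hev)
  simpa using this
end

section
/- (Leading exponent, unitary group case.) Let H be a complex Hilbert space and L a bounded self-adjoint operator on H. Let f, g ∈ H and suppose there is a natural number n such that ⟪f, L^k g⟫ = 0 for all k < n and ⟪f, Lⁿ g⟫ ≠ 0. Then the limit as t → 0⁺ of log|⟪f, e^{−itL} g⟫| / log t exists and equals n. -/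
open scoped InnerProductSpace
open Filter Topology

/-- **Leading exponent, unitary group case.** Let `L` be a bounded selfadjoint operator on
a complex Hilbert space and `f, g` vectors such that `⟪f, L^k g⟫ = 0` for all `k < n` while
`⟪f, Lⁿ g⟫ ≠ 0`. Then `log|⟪f, e^{−itL} g⟫| / log t → n` as `t → 0⁺`. -/
theorem leading_exponent_unitary_group
    {H : Type*} [NormedAddCommGroup H] [InnerProductSpace ℂ H] [CompleteSpace H]
    (L : H →L[ℂ] H) (hL : IsSelfAdjoint L)
    (f g : H) (n : ℕ)
    (hvanish : ∀ k : ℕ, k < n → ⟪f, (L ^ k) g⟫_ℂ = 0)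
    (hne : ⟪f, (L ^ n) g⟫_ℂ ≠ 0) :
    Tendsto (fun t : ℝ =>
        Real.log ‖⟪f, (NormedSpace.exp ((-(Complex.I * (t : ℂ))) • L)) g⟫_ℂ‖ / Real.log t)
      (𝓝[>] (0 : ℝ)) (𝓝 (n : ℝ)) := by
  set a : ℕ → ℂ := fun k => ⟪f, (L ^ k) g⟫_ℂ with ha
  set F : ℝ → ℂ := fun t => ⟪f, (NormedSpace.exp ((-(Complex.I * (t : ℂ))) • L)) g⟫_ℂ with hF
  -- the coefficient function
  have key : ∀ t : ℝ, F t = ∑' k : ℕ,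
      ((-(Complex.I * (t:ℂ))) ^ k * ((k : ℕ).factorial : ℂ)⁻¹) * a k := by
    intro t
    set c : ℂ := -(Complex.I * (t:ℂ))
    have hsum : Summable fun k : ℕ => (c ^ k * ((k : ℕ).factorial : ℂ)⁻¹) • (L ^ k) := by
      apply (NormedSpace.expSeries_summable' (𝕂 := ℂ) (c • L)).congr
      intro k
      rw [smul_pow, smul_smul, mul_comm]
    have hexp : NormedSpace.exp (c • L) = ∑' k : ℕ, (c ^ k * ((k : ℕ).factorial : ℂ)⁻¹) • (L ^ k) := by
      rw [NormedSpace.exp_eq_tsum (𝕂 := ℂ)]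
      exact tsum_congr fun k => by rw [smul_pow, smul_smul, mul_comm]
    let φ : (H →L[ℂ] H) →L[ℂ] ℂ := (innerSL ℂ f).comp (ContinuousLinearMap.apply ℂ H g)
    have hφ := φ.map_tsum hsum
    simp only [φ, ContinuousLinearMap.coe_comp', Function.comp_apply,
      ContinuousLinearMap.apply_apply, innerSL_apply_apply] at hφ
    show (⟪f, (NormedSpace.exp (c • L)) g⟫_ℂ) = _
    rw [hexp, hφ]
    exact tsum_congr fun k => by
      rw [ContinuousLinearMap.smul_apply, inner_smul_right]
  -- norms of coefficients
  have hanorm : ∀ k : ℕ, ‖a k‖ ≤ ‖f‖ * ‖g‖ * ‖L‖ ^ k := by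
    intro k
    calc ‖a k‖ ≤ ‖f‖ * ‖(L ^ k) g‖ := norm_inner_le_norm f _
    _ ≤ ‖f‖ * (‖L ^ k‖ * ‖g‖) :=
        mul_le_mul_of_nonneg_left ((L ^ k).le_opNorm g) (norm_nonneg f)
    _ ≤ ‖f‖ * (‖L‖ ^ k * ‖g‖) := by
        gcongr
        induction k with
          | zero => rw [pow_zero, pow_zero]; exact ContinuousLinearMap.norm_id_le (E := H)
          | succ k ih =>
            rw [pow_succ, pow_succ]
            exact le_trans (norm_mul_le _ _) (mul_le_mul_of_nonneg_right ih (norm_nonneg L))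
    _ = ‖f‖ * ‖g‖ * ‖L‖ ^ k := by ring
  -- norm of the scalar
  have hcnorm : ∀ (t : ℝ) (k : ℕ), ‖(-(Complex.I * (t:ℂ))) ^ k * ((k : ℕ).factorial : ℂ)⁻¹‖
      = |t| ^ k / (k : ℕ).factorial := by
    intro t k
    rw [norm_mul, norm_pow, norm_neg, norm_mul, Complex.norm_I, one_mul, Complex.norm_real,
      Real.norm_eq_abs, norm_inv, Complex.norm_natCast, div_eq_mul_inv]
  set u : ℝ → ℕ → ℂ := fun t k => ((-(Complex.I * (t:ℂ))) ^ k * ((k : ℕ).factorial : ℂ)⁻¹) * a k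
    with hu
  have hunorm : ∀ (t : ℝ) (k : ℕ), ‖u t k‖ ≤ |t| ^ k / (k : ℕ).factorial * (‖f‖ * ‖g‖ * ‖L‖ ^ k) := by
    intro t k
    rw [hu, norm_mul, hcnorm]
    exact mul_le_mul_of_nonneg_left (hanorm k) (by positivity)
  have hsumu : ∀ t : ℝ, Summable (u t) := by
    intro t
    apply Summable.of_norm_bounded ?_ (fun k => hunorm t k)
    have : Summable fun k : ℕ => (|t| * ‖L‖) ^ k / (k : ℕ).factorial :=
      Real.summable_pow_div_factorial _
    apply ((this.mul_left (‖f‖ * ‖g‖))).congr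
    intro k
    rw [mul_pow]
    ring
  -- tail bound constant
  set C : ℕ → ℝ := fun i => ‖f‖ * ‖g‖ * (‖L‖ ^ (i + (n+1)) / ((i + (n+1)) : ℕ).factorial) with hC
  have hCsum : Summable C :=
    (((summable_nat_add_iff (f := fun k : ℕ => ‖L‖ ^ k / (k : ℕ).factorial)
      (n+1)).mpr (Real.summable_pow_div_factorial ‖L‖)).mul_left (‖f‖ * ‖g‖))
  have hCnonneg : ∀ i, 0 ≤ C i := fun i => by positivity
  set M : ℝ := ∑' i, C i with hM
  have hMnonneg : 0 ≤ M := tsum_nonneg hCnonneg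
  set c₀ : ℝ := ‖a n‖ / (n : ℕ).factorial with hc₀
  have hc₀pos : 0 < c₀ := by
    apply div_pos _ (by positivity)
    exact norm_pos_iff.mpr hne
  -- decomposition for 0 < t ≤ 1
  have hdecomp : ∀ t : ℝ, 0 < t → t ≤ 1 → ‖F t - u t n‖ ≤ t ^ (n+1) * M := by
    intro t ht ht1
    have habs : |t| = t := abs_of_pos ht
    have hsplit : F t = (∑ k ∈ Finset.range (n+1), u t k) + ∑' i, u t (i + (n+1)) := by
      rw [key t, ← Summable.sum_add_tsum_nat_add (n+1) (hsumu t)]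
    have hsum1 : (∑ k ∈ Finset.range (n+1), u t k) = u t n := by
      apply Finset.sum_eq_single_of_mem n (Finset.self_mem_range_succ n)
      intro k hk hkn
      have : k < n := lt_of_le_of_ne (Nat.lt_succ_iff.mp (Finset.mem_range.mp hk)) hkn
      simp [hu, show a k = 0 from hvanish k this]
    have hFt : F t - u t n = ∑' i, u t (i + (n+1)) := by
      rw [hsplit, hsum1]; ring
    rw [hFt]
    have hbound : ∀ i : ℕ, ‖u t (i + (n+1))‖ ≤ t ^ (n+1) * C i := by
      intro i
      refine le_trans (hunorm t _) ?_
      rw [habs, hC]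
      have h1 : t ^ (i + (n+1)) ≤ t ^ (n+1) := by
        calc t ^ (i + (n+1)) = t ^ i * t ^ (n+1) := by rw [pow_add]
        _ ≤ 1 * t ^ (n+1) := by
            apply mul_le_mul_of_nonneg_right _ (by positivity)
            exact pow_le_one₀ ht.le ht1
        _ = t ^ (n+1) := one_mul _
      calc t ^ (i + (n+1)) / ((i + (n+1)) : ℕ).factorial * (‖f‖ * ‖g‖ * ‖L‖ ^ (i + (n+1)))
          ≤ t ^ (n+1) / ((i + (n+1)) : ℕ).factorial * (‖f‖ * ‖g‖ * ‖L‖ ^ (i + (n+1))) := by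
            gcongr
      _ = t ^ (n+1) * (‖f‖ * ‖g‖ * (‖L‖ ^ (i + (n+1)) / ((i + (n+1)) : ℕ).factorial)) := by
            ring
    have hnormsum : Summable fun i => ‖u t (i + (n+1))‖ :=
      ((hsumu t).norm.comp_injective (add_left_injective (n+1)))
    calc ‖∑' i, u t (i + (n+1))‖ ≤ ∑' i, ‖u t (i + (n+1))‖ := norm_tsum_le_tsum_norm hnormsum
    _ ≤ ∑' i, t ^ (n+1) * C i := Summable.tsum_le_tsum hbound hnormsum (hCsum.mul_left _)
    _ = t ^ (n+1) * M := by rw [tsum_mul_left]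
  -- norm of the leading term
  have hlead : ∀ t : ℝ, 0 < t → ‖u t n‖ = t ^ n * c₀ := by
    intro t ht
    rw [hu, norm_mul, hcnorm, abs_of_pos ht, hc₀]
    ring
  -- the normalized quantity
  set q : ℝ → ℝ := fun t => ‖F t‖ / t ^ n with hq
  have hqbound : ∀ t : ℝ, 0 < t → t ≤ 1 → |q t - c₀| ≤ t * M := by
    intro t ht ht1
    have htn : (0:ℝ) < t ^ n := by positivity
    have h1 : |‖F t‖ - t ^ n * c₀| ≤ t ^ (n+1) * M := by
      rw [← hlead t ht]
      exact le_trans (abs_norm_sub_norm_le _ _) (hdecomp t ht ht1)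
    have h2 : q t - c₀ = (‖F t‖ - t ^ n * c₀) / t ^ n := by
      rw [eq_div_iff htn.ne', sub_mul]; simp only [hq]; rw [div_mul_cancel₀ _ htn.ne', mul_comm c₀]
    rw [h2, abs_div, abs_of_pos htn, div_le_iff₀ htn]
    calc |‖F t‖ - t ^ n * c₀| ≤ t ^ (n+1) * M := h1
    _ = t * M * t ^ n := by ring
  have hqtendsto : Tendsto q (𝓝[>] (0:ℝ)) (𝓝 c₀) := by
    have hev : ∀ᶠ t in 𝓝[>] (0:ℝ), ‖q t - c₀‖ ≤ t * M := by
      filter_upwards [Ioo_mem_nhdsGT one_pos] with t ht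
      rw [Real.norm_eq_abs]
      exact hqbound t ht.1 ht.2.le
    have hg : Tendsto (fun t : ℝ => t * M) (𝓝[>] (0:ℝ)) (𝓝 0) := by
      have : Tendsto (fun t : ℝ => t * M) (𝓝 (0:ℝ)) (𝓝 (0 * M)) :=
        (continuous_id.mul continuous_const).tendsto 0
      rw [zero_mul] at this
      exact this.mono_left nhdsWithin_le_nhds
    have h0 : Tendsto (fun t => q t - c₀) (𝓝[>] (0:ℝ)) (𝓝 0) :=
      squeeze_zero_norm' hev hg
    have := h0.add_const c₀
    simpa using this
  -- positivity eventually
  have hqpos : ∀ᶠ t in 𝓝[>] (0:ℝ), 0 < q t :=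
    hqtendsto.eventually (eventually_gt_nhds hc₀pos)
  -- the inverse log tendsto
  have hinv : Tendsto (fun t : ℝ => (Real.log t)⁻¹) (𝓝[>] (0:ℝ)) (𝓝 0) := by
    have h1 : Tendsto (fun t : ℝ => -Real.log t) (𝓝[>] (0:ℝ)) atTop :=
      tendsto_neg_atBot_atTop.comp Real.tendsto_log_nhdsGT_zero
    have h2 := h1.inv_tendsto_atTop
    have h3 := h2.neg
    rw [neg_zero] at h3
    apply h3.congr
    intro t
    show -(-Real.log t)⁻¹ = (Real.log t)⁻¹
    rw [inv_neg, neg_neg]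
  -- eventual identity
  have hident : ∀ᶠ t in 𝓝[>] (0:ℝ),
      Real.log ‖F t‖ / Real.log t = Real.log (q t) / Real.log t + n := by
    filter_upwards [Ioo_mem_nhdsGT one_pos, hqpos] with t ht hqt
    have ht0 : 0 < t := ht.1
    have ht1 : t < 1 := ht.2
    have hlogt : Real.log t ≠ 0 := ne_of_lt (Real.log_neg ht0 ht1)
    have htn : t ^ n ≠ 0 := by positivity
    have hFeq : ‖F t‖ = t ^ n * q t := by
      rw [hq]; field_simp
    rw [hFeq, Real.log_mul (by positivity) (ne_of_gt hqt), Real.log_pow, add_div,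
      mul_div_assoc, div_self hlogt, mul_one, add_comm]
  -- assemble
  have hmain : Tendsto (fun t : ℝ => Real.log (q t) / Real.log t + n)
      (𝓝[>] (0:ℝ)) (𝓝 (n : ℝ)) := by
    have hlogq : Tendsto (fun t => Real.log (q t)) (𝓝[>] (0:ℝ)) (𝓝 (Real.log c₀)) :=
      ((Real.continuousAt_log (ne_of_gt hc₀pos)).tendsto).comp hqtendsto
    have hprod : Tendsto (fun t => Real.log (q t) * (Real.log t)⁻¹)
        (𝓝[>] (0:ℝ)) (𝓝 (Real.log c₀ * 0)) := hlogq.mul hinv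
    rw [mul_zero] at hprod
    have := hprod.add_const (n : ℝ)
    rw [zero_add] at this
    apply this.congr
    intro t
    rw [div_eq_mul_inv]
  exact hmain.congr' (hident.mono fun t ht => ht.symm) |>.congr (fun t => rfl) |>.mono_left le_rfl
end

section
/- (Combinatorial distance governs vanishing of matrix elements.) Let X be a countable set, G a connected simple graph on X with combinatorial graph distance d_G, and let v : X → H and the bounded nonnegative self-adjoint operator L on the complex Hilbert space H be a Laplacian based on G with respect to v. Then for all x, y ∈ X with d = d_G(x,y): (i) ⟪v x, L^k (v y)⟫ = 0 for every natural number k < d, and (ii) (−1)^d · ⟪v x, L^d (v y)⟫ is a strictly positive real number; in particular ⟪v x, L^d (v y)⟫ ≠ 0. -/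
open scoped InnerProductSpace

/-- **Combinatorial distance governs vanishing of matrix elements.** Let `G` be a connected
simple graph on a countable set `X`, `v : X → H` a family of nonzero pairwise orthogonal
vectors with dense span in the complex Hilbert space `H`, and `L` a bounded nonnegative
selfadjoint operator which is a Laplacian based on `G` with respect to `v` (for `x ≠ y`
the matrix element `⟪v x, L (v y)⟫` is a nonpositive real number, strictly negative iff
`x` and `y` are adjacent). Then with `d = d_G(x,y)` one has `⟪v x, L^k (v y)⟫ = 0` for all
`k < d`, and `(−1)^d ⟪v x, L^d (v y)⟫` is a strictly positive real number; in particular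
`⟪v x, L^d (v y)⟫ ≠ 0`. -/
theorem distance_governs_vanishing
    {X : Type*} [Countable X] (G : SimpleGraph X) (hG : G.Connected)
    {H : Type*} [NormedAddCommGroup H] [InnerProductSpace ℂ H] [CompleteSpace H]
    (v : X → H) (hv : ∀ x, v x ≠ 0)
    (horth : ∀ x y : X, x ≠ y → ⟪v x, v y⟫_ℂ = 0)
    (hdense : Dense ((Submodule.span ℂ (Set.range v) : Submodule ℂ H) : Set H))
    (L : H →L[ℂ] H) (hL : IsSelfAdjoint L)
    (hpos : ∀ f : H, 0 ≤ (⟪f, L f⟫_ℂ).re)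
    (hlap : ∀ x y : X, x ≠ y →
      (⟪v x, L (v y)⟫_ℂ).im = 0 ∧ (⟪v x, L (v y)⟫_ℂ).re ≤ 0 ∧
        ((⟪v x, L (v y)⟫_ℂ).re < 0 ↔ G.Adj x y)) :
    ∀ x y : X,
      (∀ k : ℕ, k < G.dist x y → ⟪v x, (L ^ k) (v y)⟫_ℂ = 0) ∧
      ((-1 : ℂ) ^ (G.dist x y) * ⟪v x, (L ^ (G.dist x y)) (v y)⟫_ℂ).im = 0 ∧
      0 < ((-1 : ℂ) ^ (G.dist x y) * ⟪v x, (L ^ (G.dist x y)) (v y)⟫_ℂ).re ∧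
      ⟪v x, (L ^ (G.dist x y)) (v y)⟫_ℂ ≠ 0 := by
  classical
  -- the normalized vectors form a Hilbert basis
  set e : X → H := fun z => ((‖v z‖ : ℂ))⁻¹ • v z with he
  have hnorm : ∀ z : X, (0:ℝ) < ‖v z‖ := fun z => norm_pos_iff.mpr (hv z)
  have hon : Orthonormal ℂ e := by
    rw [orthonormal_iff_ite]
    intro i j
    by_cases h : i = j
    · subst h
      have hd : ⟪e i, e i⟫_ℂ = 1 := by
        rw [he]
        rw [inner_smul_left, inner_smul_right, inner_self_eq_norm_sq_to_K, map_inv₀,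
          Complex.conj_ofReal, pow_two]
        have h1 : ((‖v i‖ : ℂ)) ≠ 0 := by
          simp [Complex.ofReal_ne_zero, (hnorm i).ne']
        field_simp
        norm_cast
      rw [if_pos rfl, hd]
    · simp [he, inner_smul_left, inner_smul_right, horth i j h, if_neg h]
  have hspan : Submodule.span ℂ (Set.range e) = Submodule.span ℂ (Set.range v) := by
    apply le_antisymm
    · rw [Submodule.span_le]
      rintro - ⟨z, rfl⟩
      exact Submodule.smul_mem _ _ (Submodule.subset_span ⟨z, rfl⟩)
    · rw [Submodule.span_le]
      rintro - ⟨z, rfl⟩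
      have : v z = (‖v z‖ : ℂ) • e z := by
        rw [he]
        simp only [smul_smul]
        rw [mul_inv_cancel₀ (by simp [Complex.ofReal_ne_zero, (hnorm z).ne']), one_smul]
      rw [this]
      exact Submodule.smul_mem _ _ (Submodule.subset_span ⟨z, rfl⟩)
  have hsp : ⊤ ≤ (Submodule.span ℂ (Set.range e)).topologicalClosure := by
    rw [hspan, ← Submodule.dense_iff_topologicalClosure_eq_top.mp hdense]
  set b : HilbertBasis X ℂ H := HilbertBasis.mk hon hsp with hb
  have hbz : ∀ z, b z = e z := fun z => congrFun (HilbertBasis.coe_mk hon hsp) z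
  have hsym : ∀ f g : H, ⟪L f, g⟫_ℂ = ⟪f, L g⟫_ℂ := fun f g => hL.isSymmetric f g
  -- realness of first matrix elements
  have hreal1 : ∀ z x : X, (⟪v z, L (v x)⟫_ℂ).im = 0 := by
    intro z x
    by_cases h : z = x
    · subst h
      have h1 : (starRingEnd ℂ) ⟪v z, L (v z)⟫_ℂ = ⟪v z, L (v z)⟫_ℂ := by
        rw [inner_conj_symm]
        exact hsym (v z) (v z)
      exact Complex.conj_eq_iff_im.mp h1
    · exact (hlap z x h).1
  have hLvx : ∀ z x : X, ⟪L (v x), v z⟫_ℂ = ⟪v z, L (v x)⟫_ℂ := by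
    intro z x
    rw [← inner_conj_symm]
    exact Complex.conj_eq_iff_im.mpr (hreal1 z x)
  have hm1 : ∀ n : ℕ, ((-1 : ℂ) ^ n) = (((-1 : ℝ) ^ n : ℝ) : ℂ) := by
    intro n
    push_cast
    ring
  have hm1im : ∀ n : ℕ, ((-1 : ℂ) ^ n).im = 0 := by
    intro n
    rw [hm1 n]
    exact Complex.ofReal_im _
  have hm1re : ∀ n : ℕ, ((-1 : ℂ) ^ n).re = (-1 : ℝ) ^ n := by
    intro n
    rw [hm1 n]
    exact Complex.ofReal_re _
  have hm1ne : ∀ n : ℕ, ((-1 : ℝ) ^ n) ≠ 0 := fun n => pow_ne_zero _ (by norm_num)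
  -- the key recurrence as a `HasSum`
  have key : ∀ (k : ℕ) (x y : X),
      HasSum (fun z : X => ((‖v z‖ : ℂ)⁻¹ * (‖v z‖ : ℂ)⁻¹) *
          (⟪v z, L (v x)⟫_ℂ * ⟪v z, (L ^ k) (v y)⟫_ℂ))
        ⟪v x, (L ^ (k + 1)) (v y)⟫_ℂ := by
    intro k x y
    have h0 := b.hasSum_inner_mul_inner (L (v x)) ((L ^ k) (v y))
    have h1 : ⟪v x, (L ^ (k + 1)) (v y)⟫_ℂ = ⟪L (v x), (L ^ k) (v y)⟫_ℂ := by
      rw [pow_succ']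
      rw [ContinuousLinearMap.mul_apply]
      exact (hsym (v x) ((L ^ k) (v y))).symm
    have h2 : (fun z : X => ((‖v z‖ : ℂ)⁻¹ * (‖v z‖ : ℂ)⁻¹) *
        (⟪v z, L (v x)⟫_ℂ * ⟪v z, (L ^ k) (v y)⟫_ℂ))
        = fun z : X => ⟪L (v x), b z⟫_ℂ * ⟪b z, (L ^ k) (v y)⟫_ℂ := by
      funext z
      rw [hbz z, he]
      simp only [inner_smul_left, inner_smul_right, map_inv₀, Complex.conj_ofReal]
      rw [hLvx z x]
      ring
    rw [h1, h2]
    exact h0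
  -- main induction on k
  have main : ∀ k : ℕ, ∀ x y : X,
      (k < G.dist x y → ⟪v x, (L ^ k) (v y)⟫_ℂ = 0) ∧
      (k = G.dist x y →
        ((-1 : ℂ) ^ k * ⟪v x, (L ^ k) (v y)⟫_ℂ).im = 0 ∧
        0 < ((-1 : ℂ) ^ k * ⟪v x, (L ^ k) (v y)⟫_ℂ).re) := by
    intro k
    induction k with
    | zero =>
      intro x y
      constructor
      · intro hlt
        have hxy : x ≠ y := by
          rintro rfl
          simp [SimpleGraph.dist_self] at hlt
        simp [pow_zero, ContinuousLinearMap.one_apply, horth x y hxy]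
      · intro hd
        have hxy : x = y := (hG.dist_eq_zero_iff).mp hd.symm
        subst hxy
        simp only [pow_zero, ContinuousLinearMap.one_apply, one_mul]
        have h1 : ⟪v x, v x⟫_ℂ = ((‖v x‖ ^ 2 : ℝ) : ℂ) := by
          rw [inner_self_eq_norm_sq_to_K]
          norm_cast
        rw [h1]
        exact ⟨Complex.ofReal_im _, by
          rw [Complex.ofReal_re]; nlinarith [norm_pos_iff.mpr (hv x)]⟩
    | succ k ih =>
      intro x y
      -- the generic vanishing of off-diagonal non-adjacent matrix elements
      have hzero : ∀ z : X, z ≠ x → ¬ G.Adj z x → ⟪v z, L (v x)⟫_ℂ = 0 := by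
        intro z hzx hadj
        obtain ⟨him, hre, hiff⟩ := hlap z x hzx
        have : (⟪v z, L (v x)⟫_ℂ).re = 0 :=
          le_antisymm hre (not_lt.mp (fun h => hadj (hiff.mp h)))
        exact Complex.ext this him
      -- adjacency gives a distance lower bound
      have hadj_dist : ∀ z : X, G.Adj z x → G.dist x y ≤ 1 + G.dist z y := by
        intro z hadj
        calc G.dist x y ≤ G.dist x z + G.dist z y := hG.dist_triangle
        _ ≤ 1 + G.dist z y := by
            have : G.dist x z ≤ 1 := by
              have := SimpleGraph.dist_le (SimpleGraph.Walk.cons hadj.symm SimpleGraph.Walk.nil)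
              simpa using this
            omega
      constructor
      · -- vanishing for k+1 < dist
        intro hlt
        rw [← (key k x y).tsum_eq]
        have hz : ∀ z : X, ((‖v z‖ : ℂ)⁻¹ * (‖v z‖ : ℂ)⁻¹) *
            (⟪v z, L (v x)⟫_ℂ * ⟪v z, (L ^ k) (v y)⟫_ℂ) = 0 := by
          intro z
          by_cases hzx : z = x
          · subst hzx
            rw [(ih z y).1 (by omega)]
            ring
          · by_cases hadj : G.Adj z x
            · have hk : k < G.dist z y := by
                have := hadj_dist z hadj
                omega
              rw [(ih z y).1 hk]
              ring
            · rw [hzero z hzx hadj]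
              ring
        rw [show (fun z : X => ((‖v z‖ : ℂ)⁻¹ * (‖v z‖ : ℂ)⁻¹) *
            (⟪v z, L (v x)⟫_ℂ * ⟪v z, (L ^ k) (v y)⟫_ℂ)) = fun _ => (0:ℂ) from funext hz]
        exact tsum_zero
      · -- positivity at k+1 = dist
        intro hd
        set f : X → ℂ := fun z => (-1 : ℂ) ^ (k + 1) *
          (((‖v z‖ : ℂ)⁻¹ * (‖v z‖ : ℂ)⁻¹) *
            (⟪v z, L (v x)⟫_ℂ * ⟪v z, (L ^ k) (v y)⟫_ℂ)) with hf
        have hsumf : HasSum f ((-1 : ℂ) ^ (k + 1) * ⟪v x, (L ^ (k + 1)) (v y)⟫_ℂ) :=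
          (key k x y).mul_left _
        -- each term is real and nonnegative
        have hterm : ∀ z : X, (f z).im = 0 ∧ 0 ≤ (f z).re := by
          intro z
          by_cases hzx : z = x
          · subst hzx
            rw [hf]
            simp only
            rw [(ih z y).1 (by omega)]
            norm_num
          · by_cases hadj : G.Adj z x
            · have hk : k ≤ G.dist z y := by
                have := hadj_dist z hadj
                omega
              rcases lt_or_eq_of_le hk with hk' | hk'
              · rw [hf]
                simp only
                rw [(ih z y).1 hk']
                norm_num
              · -- the genuinely nonzero terms
                obtain ⟨him2, hre2⟩ := (ih z y).2 hk'
                obtain ⟨him1, hre1, hiff1⟩ := hlap z x hzx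
                have hrneg : (⟪v z, L (v x)⟫_ℂ).re < 0 := hiff1.mpr hadj
                -- express everything through real numbers
                have hA : ⟪v z, (L ^ k) (v y)⟫_ℂ =
                    ((⟪v z, (L ^ k) (v y)⟫_ℂ).re : ℂ) := by
                  have : (⟪v z, (L ^ k) (v y)⟫_ℂ).im = 0 := by
                    rw [Complex.mul_im, hm1im k, hm1re k] at him2
                    simp only [zero_mul, add_zero] at him2
                    exact (mul_eq_zero.mp him2).resolve_left (hm1ne k)
                  exact (Complex.ext (by simp) (by simp only [Complex.ofReal_im, this])).symm
                have hr : ⟪v z, L (v x)⟫_ℂ = (((⟪v z, L (v x)⟫_ℂ).re : ℝ) : ℂ) :=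
                  (Complex.ext (by simp) (by simp [him1])).symm
                have hApos : 0 < (-1 : ℝ) ^ k * (⟪v z, (L ^ k) (v y)⟫_ℂ).re := by
                  rw [Complex.mul_re, hm1im k, hm1re k] at hre2
                  simpa using hre2
                have hfz : f z = (((-1 : ℝ) ^ (k + 1) * (‖v z‖⁻¹ * ‖v z‖⁻¹) *
                    ((⟪v z, L (v x)⟫_ℂ).re * (⟪v z, (L ^ k) (v y)⟫_ℂ).re) : ℝ) : ℂ) := by
                  rw [hf]
                  simp only
                  rw [hA, hr, hm1 (k + 1)]
                  push_cast
                  simp only [Complex.ofReal_re]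
                  ring
                rw [hfz]
                refine ⟨Complex.ofReal_im _, ?_⟩
                rw [Complex.ofReal_re]
                have hc : (0:ℝ) < ‖v z‖⁻¹ * ‖v z‖⁻¹ :=
                  mul_pos (inv_pos.mpr (hnorm z)) (inv_pos.mpr (hnorm z))
                rw [pow_succ]
                nlinarith [mul_pos (mul_pos hc (neg_pos.mpr hrneg)) hApos]
            · rw [hf]
              simp only
              rw [hzero z hzx hadj]
              norm_num
        -- find a neighbor of x on a geodesic to y
        have hdne : G.dist x y ≠ 0 := by omega
        obtain ⟨p, hp⟩ := SimpleGraph.exists_walk_of_dist_ne_zero hdne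
        have hz₀ : ∃ z₀ : X, G.Adj x z₀ ∧ G.dist z₀ y = k := by
          cases p with
          | nil => simp at hd
          | cons hadj q =>
            rename_i z₀
            refine ⟨z₀, hadj, le_antisymm ?_ ?_⟩
            · have := SimpleGraph.dist_le q
              simp [SimpleGraph.Walk.length_cons] at hp
              omega
            · have := hadj_dist z₀ hadj.symm
              omega
        obtain ⟨z₀, hadj₀, hdz₀⟩ := hz₀
        -- the term at z₀ is strictly positive
        have hz₀pos : 0 < (f z₀).re := by
          obtain ⟨him2, hre2⟩ := (ih z₀ y).2 hdz₀.symm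
          have hz₀x : z₀ ≠ x := hadj₀.ne'
          obtain ⟨him1, hre1, hiff1⟩ := hlap z₀ x hz₀x
          have hrneg : (⟪v z₀, L (v x)⟫_ℂ).re < 0 := hiff1.mpr hadj₀.symm
          have hAim : (⟪v z₀, (L ^ k) (v y)⟫_ℂ).im = 0 := by
            rw [Complex.mul_im, hm1im k, hm1re k] at him2
            simp only [zero_mul, add_zero] at him2
            exact (mul_eq_zero.mp him2).resolve_left (hm1ne k)
          have hA : ⟪v z₀, (L ^ k) (v y)⟫_ℂ = ((⟪v z₀, (L ^ k) (v y)⟫_ℂ).re : ℂ) :=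
            (Complex.ext (by simp) (by simp only [Complex.ofReal_im, hAim])).symm
          have hr : ⟪v z₀, L (v x)⟫_ℂ = (((⟪v z₀, L (v x)⟫_ℂ).re : ℝ) : ℂ) :=
            (Complex.ext (by simp) (by simp [him1])).symm
          have hApos : 0 < (-1 : ℝ) ^ k * (⟪v z₀, (L ^ k) (v y)⟫_ℂ).re := by
            rw [Complex.mul_re, hm1im k, hm1re k] at hre2
            simpa using hre2
          have hfz : f z₀ = (((-1 : ℝ) ^ (k + 1) * (‖v z₀‖⁻¹ * ‖v z₀‖⁻¹) *
              ((⟪v z₀, L (v x)⟫_ℂ).re * (⟪v z₀, (L ^ k) (v y)⟫_ℂ).re) : ℝ) : ℂ) := by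
            rw [hf]
            simp only
            rw [hA, hr, hm1 (k + 1)]
            push_cast
            simp only [Complex.ofReal_re]
            ring
          rw [hfz, Complex.ofReal_re]
          have hc : (0:ℝ) < ‖v z₀‖⁻¹ * ‖v z₀‖⁻¹ :=
            mul_pos (inv_pos.mpr (hnorm z₀)) (inv_pos.mpr (hnorm z₀))
          rw [pow_succ]
          nlinarith [mul_pos (mul_pos hc (neg_pos.mpr hrneg)) hApos]
        -- conclude via real and imaginary parts of the sum
        have hsumre : HasSum (fun z => (f z).re)
            (((-1 : ℂ) ^ (k + 1) * ⟪v x, (L ^ (k + 1)) (v y)⟫_ℂ).re) :=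
          hsumf.mapL Complex.reCLM
        have hsumim : HasSum (fun z => (f z).im)
            (((-1 : ℂ) ^ (k + 1) * ⟪v x, (L ^ (k + 1)) (v y)⟫_ℂ).im) :=
          hsumf.mapL Complex.imCLM
        constructor
        · have : HasSum (fun _ : X => (0:ℝ))
              (((-1 : ℂ) ^ (k + 1) * ⟪v x, (L ^ (k + 1)) (v y)⟫_ℂ).im) := by
            convert hsumim using 1
            funext z
            exact ((hterm z).1).symm
          simpa using this.unique hasSum_zero
        · calc (0:ℝ) < (f z₀).re := hz₀pos
          _ ≤ _ := le_hasSum hsumre z₀ (fun j _ => (hterm j).2)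
  -- conclude
  intro x y
  obtain ⟨him, hre⟩ := (main (G.dist x y) x y).2 rfl
  refine ⟨fun k hk => (main k x y).1 hk, him, hre, ?_⟩
  intro h0
  rw [h0, mul_zero] at hre
  simp at hre
end

section
/- (Main theorem, semigroup part.) Let X be a countable set, G a connected simple graph on X with combinatorial graph distance d_G, and let v : X → H and the bounded nonnegative self-adjoint operator L on the complex Hilbert space H be a Laplacian based on G with respect to v. Fix x, y ∈ X, set d = d_G(x,y) and C(x,y) = (Re⟪v x, L^{d+1} (v x)⟫ + Re⟪v y, L^{d+1} (v y)⟫) / (2·(d+1)!). Then |⟪v x, L^d (v y)⟫| > 0, and for all t ≥ 0: |⟪v x, e^{−tL} (v y)⟫ − t^d · |⟪v x, L^d (v y)⟫| / d!| ≤ t^{d+1} · C(x,y). -/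
open scoped InnerProductSpace

open NormedSpace

section Aux
variable {H : Type*} [NormedAddCommGroup H] [InnerProductSpace ℂ H] [CompleteSpace H]

lemma sa_move {T : H →L[ℂ] H} (hT : IsSelfAdjoint T) (u w : H) :
    ⟪T u, w⟫_ℂ = ⟪u, T w⟫_ℂ := by
  conv_lhs => rw [← ContinuousLinearMap.isSelfAdjoint_iff'.mp hT]
  exact ContinuousLinearMap.adjoint_inner_left _ _ _

lemma aux_cs {T : H →L[ℂ] H} (hT : IsSelfAdjoint T) (h : ∀ f, 0 ≤ (⟪f, T f⟫_ℂ).re)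
    (f g : H) : ‖⟪f, T g⟫_ℂ‖ ^ 2 ≤ (⟪f, T f⟫_ℂ).re * (⟪g, T g⟫_ℂ).re := by
  set a := (⟪f, T f⟫_ℂ).re with ha
  set b := (⟪g, T g⟫_ℂ).re with hb
  set c := ⟪f, T g⟫_ℂ with hc
  have key : ∀ z : ℂ, 0 ≤ a + 2 * (z * c).re + ‖z‖ ^ 2 * b := by
    intro z
    have hgf : ⟪g, T f⟫_ℂ = (starRingEnd ℂ) c := by
      rw [hc, ← sa_move hT, inner_conj_symm]
    have expand : ⟪f + z • g, T (f + z • g)⟫_ℂ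
        = ⟪f, T f⟫_ℂ + z * c + (starRingEnd ℂ) z * (starRingEnd ℂ) c
          + (starRingEnd ℂ) z * z * ⟪g, T g⟫_ℂ := by
      rw [map_add, map_smul, inner_add_left, inner_add_right, inner_add_right,
        inner_smul_left, inner_smul_right, inner_smul_left, inner_smul_right, hgf, ← hc]
      ring
    have h0 := h (f + z • g)
    rw [expand] at h0
    simp only [Complex.add_re, Complex.mul_re, Complex.mul_im, Complex.conj_re, Complex.conj_im,
      Complex.sq_norm, Complex.normSq_apply] at h0 ⊢
    nlinarith [h0]
  rcases eq_or_ne c 0 with h0 | h0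
  · rw [h0]
    simp only [norm_zero, ne_eq, OfNat.ofNat_ne_zero, not_false_eq_true, zero_pow]
    exact mul_nonneg (h f) (h g)
  · have hcn : (0:ℝ) < ‖c‖ := norm_pos_iff.mpr h0
    set u : ℂ := (starRingEnd ℂ) c / ‖c‖ with hu
    have huc : u * c = (‖c‖ : ℂ) := by
      rw [hu, div_mul_eq_mul_div, mul_comm, Complex.mul_conj, Complex.normSq_eq_norm_sq]
      push_cast
      rw [sq, mul_div_assoc, div_self (by exact_mod_cast hcn.ne'), mul_one]
    have hun : ‖u‖ = 1 := by
      rw [hu, norm_div, RCLike.norm_conj, Complex.norm_real, Real.norm_eq_abs,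
        abs_of_pos hcn, div_self hcn.ne']
    have key2 : ∀ s : ℝ, 0 ≤ b * (s * s) + -(2 * ‖c‖) * s + a := by
      intro s
      have hz := key (-(s : ℂ) * u)
      rw [mul_assoc, huc] at hz
      have h1 : ((-(s:ℂ)) * (‖c‖:ℂ)).re = -(s * ‖c‖) := by
        push_cast; simp
      have h2 : ‖(-(s : ℂ)) * u‖ ^ 2 = s * s := by
        rw [norm_mul, hun, mul_one, norm_neg, Complex.norm_real, Real.norm_eq_abs,
          sq_abs, sq]
      rw [h1, h2] at hz
      linarith
    have hd := discrim_le_zero key2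
    rw [discrim] at hd
    nlinarith [hd]

lemma aux_pow_pos {L : H →L[ℂ] H} (hL : IsSelfAdjoint L)
    (hpos : ∀ f : H, 0 ≤ (⟪f, L f⟫_ℂ).re) (m : ℕ) (g : H) :
    0 ≤ (⟪g, (L ^ m) g⟫_ℂ).re := by
  rcases Nat.even_or_odd m with ⟨k, hk⟩ | ⟨k, hk⟩
  · have : (L ^ m) g = (L ^ k) ((L ^ k) g) := by
      rw [hk, pow_add, ContinuousLinearMap.mul_apply]
    rw [this, ← sa_move (hL.pow k)]
    exact inner_self_nonneg (𝕜 := ℂ)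
  · have : (L ^ m) g = (L ^ k) (L ((L ^ k) g)) := by
      rw [hk, show 2 * k + 1 = k + (1 + k) by ring, pow_add, pow_add, pow_one,
        ContinuousLinearMap.mul_apply, ContinuousLinearMap.mul_apply]
    rw [this, ← sa_move (hL.pow k)]
    exact hpos _


lemma matrix_key {X : Type*} (G : SimpleGraph X) (hG : G.Connected)
    (v : X → H) (hv : ∀ x, v x ≠ 0)
    (horth : ∀ x y : X, x ≠ y → ⟪v x, v y⟫_ℂ = 0)
    (hdense : Dense ((Submodule.span ℂ (Set.range v) : Submodule ℂ H) : Set H))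
    (L : H →L[ℂ] H) (hL : IsSelfAdjoint L)
    (hlap : ∀ x y : X, x ≠ y →
      (⟪v x, L (v y)⟫_ℂ).im = 0 ∧ (⟪v x, L (v y)⟫_ℂ).re ≤ 0 ∧
        ((⟪v x, L (v y)⟫_ℂ).re < 0 ↔ G.Adj x y)) :
    ∀ (n : ℕ) (z w : X), (⟪v z, (L ^ n) (v w)⟫_ℂ).im = 0 ∧
      (n < G.dist z w → ⟪v z, (L ^ n) (v w)⟫_ℂ = 0) ∧
      (G.dist z w = n → 0 < (-1 : ℝ) ^ n * (⟪v z, (L ^ n) (v w)⟫_ℂ).re) := by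
  -- the normalized orthonormal basis
  have hvnorm : ∀ u : X, ‖v u‖ ≠ 0 := fun u => norm_ne_zero_iff.mpr (hv u)
  set e : X → H := fun u => ((‖v u‖ : ℂ))⁻¹ • v u with he
  have honb : Orthonormal ℂ e := by
    constructor
    · intro i
      rw [he]
      simp only
      rw [norm_smul, norm_inv, Complex.norm_real, Real.norm_eq_abs,
        abs_of_nonneg (norm_nonneg _), inv_mul_cancel₀ (hvnorm i)]
    · intro i j hij
      simp [he, inner_smul_left, inner_smul_right, horth i j hij]
  have hspan : ⊤ ≤ (Submodule.span ℂ (Set.range e)).topologicalClosure := by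
    have heq : Submodule.span ℂ (Set.range e) = Submodule.span ℂ (Set.range v) := by
      apply le_antisymm <;> rw [Submodule.span_le] <;> rintro _ ⟨u, rfl⟩
      · exact Submodule.smul_mem _ _ (Submodule.subset_span ⟨u, rfl⟩)
      · have : v u = (‖v u‖ : ℂ) • e u := by
          rw [he]
          simp only [smul_smul]
          rw [mul_inv_cancel₀ (by exact_mod_cast hvnorm u), one_smul]
        rw [this]
        exact Submodule.smul_mem _ _ (Submodule.subset_span ⟨u, rfl⟩)
    intro a _
    rw [← SetLike.mem_coe, Submodule.topologicalClosure_coe, heq]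
    exact hdense a
  set b : HilbertBasis X ℂ H := HilbertBasis.mk honb hspan with hbdef
  have hb : ⇑b = e := HilbertBasis.coe_mk _ _
  -- diagonal entries are real
  have hdiag : ∀ u z : X, (⟪v u, L (v z)⟫_ℂ).im = 0 := by
    intro u z
    by_cases huz : u = z
    · subst huz
      rw [← Complex.conj_eq_iff_im, inner_conj_symm]
      exact sa_move hL _ _
    · exact (hlap u z huz).1
  intro n
  induction n with
  | zero =>
    intro z w
    refine ⟨?_, ?_, ?_⟩
    · by_cases hzw : z = w
      · subst hzw
        simp only [pow_zero, ContinuousLinearMap.one_apply]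
        exact inner_self_im (𝕜 := ℂ) _
      · simp [horth z w hzw]
    · intro hlt
      have hzw : z ≠ w := by
        rintro rfl
        simp [SimpleGraph.dist_self] at hlt
      simp [horth z w hzw]
    · intro hd
      have hzw : z = w := (hG.dist_eq_zero_iff).mp hd
      subst hzw
      simp only [pow_zero, ContinuousLinearMap.one_apply, one_mul]
      have h2 : ⟪v z, v z⟫_ℂ = ((‖v z‖ ^ 2 : ℝ) : ℂ) := by
        rw [inner_self_eq_norm_sq_to_K]
        norm_cast
      rw [h2, Complex.ofReal_re]
      exact pow_pos (norm_pos_iff.mpr (hv z)) 2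
  | succ n ih =>
    intro z w
    have hA0 : ∀ u, u ≠ z → ¬ G.Adj u z → ⟪v u, L (v z)⟫_ℂ = 0 := by
      intro u hu hadj
      obtain ⟨him, hle, hiff⟩ := hlap u z hu
      have hre : (⟪v u, L (v z)⟫_ℂ).re = 0 :=
        le_antisymm hle (not_lt.mp fun hlt => hadj (hiff.mp hlt))
      exact Complex.ext hre him
    have hexp : ⟪v z, (L ^ (n+1)) (v w)⟫_ℂ
        = ∑' u, ⟪L (v z), e u⟫_ℂ * ⟪e u, (L ^ n) (v w)⟫_ℂ := by
      have hP := b.tsum_inner_mul_inner (L (v z)) ((L ^ n) (v w))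
      rw [hb] at hP
      rw [hP, pow_succ', ContinuousLinearMap.mul_apply]
      exact (sa_move hL _ _).symm
    have hterm : ∀ u, ⟪L (v z), e u⟫_ℂ * ⟪e u, (L ^ n) (v w)⟫_ℂ
        = (((‖v u‖ ^ 2)⁻¹ * ((⟪v u, L (v z)⟫_ℂ).re * (⟪v u, (L ^ n) (v w)⟫_ℂ).re) : ℝ) : ℂ) := by
      intro u
      have hAu : ⟪v u, L (v z)⟫_ℂ = ((⟪v u, L (v z)⟫_ℂ).re : ℂ) :=
        Complex.ext rfl (by rw [Complex.ofReal_im]; exact hdiag u z)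
      have hBu : ⟪v u, (L ^ n) (v w)⟫_ℂ = ((⟪v u, (L ^ n) (v w)⟫_ℂ).re : ℂ) :=
        Complex.ext rfl (by rw [Complex.ofReal_im]; exact (ih u w).1)
      have hsw : (starRingEnd ℂ) ⟪v u, L (v z)⟫_ℂ = ⟪L (v z), v u⟫_ℂ := inner_conj_symm _ _
      rw [he]
      simp only
      rw [inner_smul_right, inner_smul_left, map_inv₀, Complex.conj_ofReal, ← hsw]
      conv_lhs => rw [hAu, hBu]
      rw [Complex.conj_ofReal]
      push_cast
      ring
    have hsummC : Summable (fun u => ⟪L (v z), e u⟫_ℂ * ⟪e u, (L ^ n) (v w)⟫_ℂ) := by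
      have hS := b.summable_inner_mul_inner (L (v z)) ((L ^ n) (v w))
      rw [hb] at hS
      exact hS
    set g : X → ℝ :=
      fun u => (‖v u‖ ^ 2)⁻¹ * ((⟪v u, L (v z)⟫_ℂ).re * (⟪v u, (L ^ n) (v w)⟫_ℂ).re) with hg
    have hsummg : Summable g := by
      have h1 := hsummC.congr hterm
      exact (RCLike.summable_ofReal ℂ).mp h1
    have hexp2 : ⟪v z, (L ^ (n+1)) (v w)⟫_ℂ = ((∑' u, g u : ℝ) : ℂ) := by
      rw [hexp, tsum_congr hterm, ← Complex.ofReal_tsum]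
    refine ⟨?_, ?_, ?_⟩
    · rw [hexp2]; exact Complex.ofReal_im _
    · intro hlt
      rw [hexp2]
      have hzero : ∀ u, g u = 0 := by
        intro u
        rw [hg]
        simp only
        by_cases huz : u = z
        · subst huz
          rw [(ih u w).2.1 (by omega)]
          simp
        · by_cases hadj : G.Adj u z
          · have hdzu : G.dist z u ≤ 1 := by
              have h1 := SimpleGraph.dist_le (hadj.symm.toWalk)
              simpa using h1
            have htri := hG.dist_triangle (u := z) (v := u) (w := w)
            rw [(ih u w).2.1 (by omega)]
            simp
          · rw [hA0 u huz hadj]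
            simp
      rw [tsum_congr hzero, tsum_zero]
      simp
    · intro hd
      rw [hexp2]
      simp only [Complex.ofReal_re]
      have hstrict : ∀ u, G.Adj u z → G.dist u w = n → 0 < (-1:ℝ)^(n+1) * g u := by
        intro u hadj hdu
        have hAr : (⟪v u, L (v z)⟫_ℂ).re < 0 := ((hlap u z (G.ne_of_adj hadj)).2.2).mpr hadj
        have hBr : 0 < (-1:ℝ)^n * (⟪v u, (L ^ n) (v w)⟫_ℂ).re := (ih u w).2.2 hdu
        have hc : (0:ℝ) < (‖v u‖ ^ 2)⁻¹ := inv_pos.mpr (pow_pos (norm_pos_iff.mpr (hv u)) 2)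
        have hps : (-1:ℝ)^(n+1) = (-1)^n * -1 := pow_succ _ _
        rw [hg, hps]
        nlinarith [mul_pos (mul_pos hc (neg_pos.mpr hAr)) hBr]
      have hnonneg : ∀ u, 0 ≤ (-1:ℝ)^(n+1) * g u := by
        intro u
        by_cases hAz : (⟪v u, L (v z)⟫_ℂ).re = 0
        · rw [hg]; simp [hAz]
        · by_cases hBz : (⟪v u, (L ^ n) (v w)⟫_ℂ).re = 0
          · rw [hg]; simp only [hBz, mul_zero, le_refl]
          · have huz : u ≠ z := by
              rintro rfl
              exact hBz (by rw [(ih u w).2.1 (by omega)]; simp)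
            have hadj : G.Adj u z := by
              by_contra hadj
              exact hAz (by rw [hA0 u huz hadj]; simp)
            have hle : G.dist u w ≤ n := by
              by_contra hgt
              exact hBz (by rw [(ih u w).2.1 (by omega)]; simp)
            have hge : n ≤ G.dist u w := by
              have hdzu : G.dist z u ≤ 1 := by
                have h1 := SimpleGraph.dist_le (hadj.symm.toWalk)
                simpa using h1
              have htri := hG.dist_triangle (u := z) (v := u) (w := w)
              omega
            exact (hstrict u hadj (le_antisymm hle hge)).le
      obtain ⟨p, hp⟩ := hG.exists_walk_length_eq_dist z w
      rw [hd] at hp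
      cases p with
      | nil => simp at hp
      | @cons _ u0 _ hadj q =>
        have hlen : q.length = n := by simpa using hp
        have hdu : G.dist u0 w = n := by
          have h1 : G.dist u0 w ≤ n := hlen ▸ SimpleGraph.dist_le q
          have hdzu : G.dist z u0 ≤ 1 := by
            have h2 := SimpleGraph.dist_le hadj.toWalk
            simpa using h2
          have htri := hG.dist_triangle (u := z) (v := u0) (w := w)
          omega
        have hu0 := hstrict u0 hadj.symm hdu
        have hsum2 : Summable (fun u => (-1:ℝ)^(n+1) * g u) := hsummg.mul_left _
        rw [← tsum_mul_left]
        exact lt_of_lt_of_le hu0 (Summable.le_tsum hsum2 _ fun j _ => hnonneg j)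



end Aux

set_option maxHeartbeats 2000000 in
/-- **Main theorem, semigroup part.** Let `G` be a connected simple graph on a countable
set `X`, `v : X → H` a family of nonzero pairwise orthogonal vectors with dense span in
the complex Hilbert space `H`, and `L` a bounded nonnegative selfadjoint operator which
is a Laplacian based on `G` with respect to `v`. With `d = d_G(x,y)` and
`C(x,y) = (Re⟪v x, L^{d+1} v x⟫ + Re⟪v y, L^{d+1} v y⟫)/(2 (d+1)!)` one has
`|⟪v x, L^d v y⟫| > 0` and, for all `t ≥ 0`,
`|⟪v x, e^{−tL} v y⟫ − t^d |⟪v x, L^d v y⟫| / d!| ≤ t^{d+1} C(x,y)`. -/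
theorem main_theorem_semigroup
    {X : Type*} [Countable X] (G : SimpleGraph X) (hG : G.Connected)
    {H : Type*} [NormedAddCommGroup H] [InnerProductSpace ℂ H] [CompleteSpace H]
    (v : X → H) (hv : ∀ x, v x ≠ 0)
    (horth : ∀ x y : X, x ≠ y → ⟪v x, v y⟫_ℂ = 0)
    (hdense : Dense ((Submodule.span ℂ (Set.range v) : Submodule ℂ H) : Set H))
    (L : H →L[ℂ] H) (hL : IsSelfAdjoint L)
    (hpos : ∀ f : H, 0 ≤ (⟪f, L f⟫_ℂ).re)
    (hlap : ∀ x y : X, x ≠ y →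
      (⟪v x, L (v y)⟫_ℂ).im = 0 ∧ (⟪v x, L (v y)⟫_ℂ).re ≤ 0 ∧
        ((⟪v x, L (v y)⟫_ℂ).re < 0 ↔ G.Adj x y))
    (x y : X) :
    0 < ‖⟪v x, (L ^ (G.dist x y)) (v y)⟫_ℂ‖ ∧
    ∀ t : ℝ, 0 ≤ t →
      ‖⟪v x, (NormedSpace.exp ((-(t : ℂ)) • L)) (v y)⟫_ℂ -
          ((t ^ (G.dist x y) * ‖⟪v x, (L ^ (G.dist x y)) (v y)⟫_ℂ‖ /
            ((G.dist x y).factorial : ℝ) : ℝ) : ℂ)‖ ≤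
        t ^ (G.dist x y + 1) *
          (((⟪v x, (L ^ (G.dist x y + 1)) (v x)⟫_ℂ).re +
            (⟪v y, (L ^ (G.dist x y + 1)) (v y)⟫_ℂ).re) /
            (2 * ((G.dist x y + 1).factorial : ℝ))) := by
  classical
  have key := matrix_key G hG v hv horth hdense L hL hlap
  set d := G.dist x y with hd
  have hkey1 := (key d x y).2.2 rfl
  have haim := (key d x y).1
  have had_real : ⟪v x, (L ^ d) (v y)⟫_ℂ = (((⟪v x, (L ^ d) (v y)⟫_ℂ).re : ℝ) : ℂ) :=
    Complex.ext rfl (by rw [Complex.ofReal_im]; exact haim)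
  have hnorm_ad : ‖⟪v x, (L ^ d) (v y)⟫_ℂ‖ = (-1:ℝ)^d * (⟪v x, (L ^ d) (v y)⟫_ℂ).re := by
    rw [had_real, Complex.norm_real, Complex.ofReal_re]
    rcases Nat.even_or_odd d with hpar | hpar
    · rw [hpar.neg_one_pow] at hkey1 ⊢
      rw [one_mul] at hkey1 ⊢
      exact abs_of_pos hkey1
    · rw [hpar.neg_one_pow] at hkey1 ⊢
      rw [neg_one_mul] at hkey1 ⊢
      exact abs_of_neg (by linarith)
  constructor
  · rw [hnorm_ad]; exact hkey1
  -- analytic part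
  set A : H →L[ℂ] H := -L with hA
  have hAk : ∀ k : ℕ, A ^ k = ((-1:ℝ)^k) • (L ^ k) := by
    intro k
    rw [hA, show -L = (-1:ℝ) • L from (neg_one_smul ℝ L).symm, smul_pow]
  -- the evaluation functionals
  set Ψc : (H →L[ℂ] H) →L[ℂ] ℂ := (innerSL ℂ (v x)).comp (ContinuousLinearMap.apply ℂ H (v y))
    with hΨc
  set ΨR : (H →L[ℂ] H) →L[ℝ] ℂ := Ψc.restrictScalars ℝ with hΨR0
  set ψ : (H →L[ℂ] H) →L[ℝ] ℝ := Complex.reCLM.comp ΨR with hψ0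
  have hΨR : ∀ T : H →L[ℂ] H, ΨR T = ⟪v x, T (v y)⟫_ℂ := fun T => rfl
  have hψ : ∀ T : H →L[ℂ] H, ψ T = (⟪v x, T (v y)⟫_ℂ).re := fun T => rfl
  -- conversion of the exponential
  have hconv : ∀ t : ℝ, NormedSpace.exp ((-(t : ℂ)) • L) = exp (t • A) := by
    intro t
    have h1 : ((-(t : ℂ)) • L) = t • A := by
      rw [hA, ← Complex.coe_smul]
      push_cast
      rw [neg_smul, smul_neg]
    rw [h1]
  -- realness of matrix elements of the semigroup
  have hexpsum : ∀ (s : ℝ), HasSum (fun n : ℕ => ((n.factorial:ℝ)⁻¹ * (-s)^n : ℝ) • ΨR (L ^ n))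
      (ΨR (exp (s • A))) := by
    intro s
    have hsum : Summable (fun n : ℕ => ((n.factorial:ℝ)⁻¹ : ℝ) • (s • A) ^ n) :=
      expSeries_summable' (𝕂 := ℝ) (s • A)
    have hexp_eq : exp (s • A) = ∑' n : ℕ, ((n.factorial:ℝ)⁻¹ : ℝ) • (s • A) ^ n := by
      rw [exp_eq_tsum ℝ]
    have hS := (hsum.hasSum.mapL ΨR)
    rw [← hexp_eq] at hS
    have hcongr : ∀ n : ℕ, ΨR (((n.factorial:ℝ)⁻¹ : ℝ) • (s • A) ^ n)
        = ((n.factorial:ℝ)⁻¹ * (-s)^n : ℝ) • ΨR (L ^ n) := by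
      intro n
      have h3 : (s • A) ^ n = ((-s)^n : ℝ) • (L ^ n) := by
        rw [smul_pow, hAk n, smul_smul, ← mul_pow]
        norm_num
      rw [h3, map_smul, map_smul, smul_smul]
    simpa only [hcongr] using hS
  -- realness of semigroup matrix elements
  have hexp_real : ∀ s : ℝ, ⟪v x, (exp (s • A)) (v y)⟫_ℂ
      = (((⟪v x, (exp (s • A)) (v y)⟫_ℂ).re : ℝ) : ℂ) := by
    intro s
    refine Complex.ext rfl ?_
    rw [Complex.ofReal_im]
    have hS := (hexpsum s).mapL Complex.imCLM
    have hz : ∀ n : ℕ, Complex.imCLM (((n.factorial:ℝ)⁻¹ * (-s)^n : ℝ) • ΨR (L ^ n)) = 0 := by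
      intro n
      rw [map_smul, hΨR]
      have him := (key n x y).1
      simp only [Complex.imCLM_apply, Complex.smul_im, him, smul_zero]
    rw [funext hz] at hS
    have h0 : (ΨR (exp (s • A))).im = 0 := (hasSum_zero.unique hS).symm
    rw [hΨR] at h0
    exact h0
  -- the scalar functions and their derivatives
  have hD : ∀ (k : ℕ) (s : ℝ),
      HasDerivAt (fun u : ℝ => ψ ((A ^ k) * exp (u • A))) (ψ ((A ^ (k+1)) * exp (s • A))) s := by
    intro k s
    have h1 : HasDerivAt (fun u : ℝ => exp (u • A)) (A * exp (s • A)) s :=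
      hasDerivAt_exp_smul_const' A s
    have h2 : HasDerivAt (fun u : ℝ => (A ^ k) * exp (u • A)) ((A ^ k) * (A * exp (s • A))) s :=
      h1.const_mul _
    have h3 := (ψ.hasFDerivAt).comp_hasDerivAt s h2
    have h4 : (A ^ k) * (A * exp (s • A)) = (A ^ (k+1)) * exp (s • A) := by
      rw [pow_succ, mul_assoc]
    rw [h4] at h3
    exact h3
  have hiter : ∀ k : ℕ, iteratedDeriv k (fun u : ℝ => ψ ((A ^ 0) * exp (u • A)))
      = fun u : ℝ => ψ ((A ^ k) * exp (u • A)) := by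
    intro k
    induction k with
    | zero => rw [iteratedDeriv_zero]
    | succ k ihk =>
      rw [iteratedDeriv_succ, ihk]
      funext s
      exact (hD k s).deriv
  have hcont : ∀ (m : ℕ), ContDiff ℝ (m : ℕ∞) (fun u : ℝ => ψ ((A ^ 0) * exp (u • A))) := by
    intro m
    apply contDiff_of_differentiable_iteratedDeriv
    intro k _
    rw [hiter k]
    exact fun s => (hD k s).differentiableAt
  -- values at 0
  have hf0 : ∀ k : ℕ, ψ ((A ^ k) * exp ((0:ℝ) • A)) = (-1:ℝ)^k * (⟪v x, (L ^ k) (v y)⟫_ℂ).re := by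
    intro k
    rw [zero_smul, exp_zero, mul_one, hAk k, map_smul, hψ]
    simp
  -- commutation, selfadjointness, positivity, monotonicity
  have hcomm : ∀ s : ℝ, Commute L (exp (s • A)) := by
    intro s
    have h1 : Commute L (s • A) := by
      rw [hA]
      exact ((Commute.refl L).neg_right).smul_right s
    exact h1.exp_right
  have hexp_sa : ∀ s : ℝ, IsSelfAdjoint (exp (s • A)) := by
    intro s
    rw [IsSelfAdjoint, star_exp]
    congr 1
    rw [star_smul, star_trivial, hA, star_neg, hL.star_eq]
  have hTsa : ∀ (m : ℕ) (s : ℝ), IsSelfAdjoint ((L ^ m) * exp (s • A)) := by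
    intro m s
    rw [IsSelfAdjoint, star_mul, (hL.pow m).star_eq, (hexp_sa s).star_eq]
    exact ((hcomm s).pow_left m).symm.eq
  have hTpos : ∀ (m : ℕ) (s : ℝ) (g : H), 0 ≤ (⟪g, ((L ^ m) * exp (s • A)) g⟫_ℂ).re := by
    intro m s g
    have hhalf : exp (s • A) = exp ((s/2) • A) * exp ((s/2) • A) := by
      rw [← exp_add_of_commute_of_mem_ball (𝕂 := ℝ) (Commute.refl ((s/2) • A))
        ((expSeries_radius_eq_top ℝ (H →L[ℂ] H)).symm ▸ edist_lt_top _ _)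
        ((expSeries_radius_eq_top ℝ (H →L[ℂ] H)).symm ▸ edist_lt_top _ _), ← add_smul]
      norm_num
    rw [hhalf, ← mul_assoc,
      show (L ^ m) * exp ((s/2) • A) = exp ((s/2) • A) * (L ^ m) from
        ((hcomm (s/2)).pow_left m).eq,
      mul_assoc, ContinuousLinearMap.mul_apply, ← sa_move (hexp_sa (s/2)),
      ContinuousLinearMap.mul_apply]
    exact aux_pow_pos hL hpos m _
  have hmono : ∀ (g : H) (s : ℝ), 0 ≤ s →
      (⟪g, ((L ^ (d+1)) * exp (s • A)) g⟫_ℂ).re ≤ (⟪g, (L ^ (d+1)) g⟫_ℂ).re := by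
    intro g s hs
    set χ : (H →L[ℂ] H) →L[ℝ] ℝ :=
      Complex.reCLM.comp (((innerSL ℂ g).comp (ContinuousLinearMap.apply ℂ H g)).restrictScalars ℝ)
      with hχ0
    have hχ : ∀ T : H →L[ℂ] H, χ T = (⟪g, T g⟫_ℂ).re := fun T => rfl
    have hder : ∀ u : ℝ, HasDerivAt (fun r : ℝ => χ ((L ^ (d+1)) * exp (r • A)))
        (-(χ ((L ^ (d+2)) * exp (u • A)))) u := by
      intro u
      have h1 : HasDerivAt (fun r : ℝ => exp (r • A)) (A * exp (u • A)) u :=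
        hasDerivAt_exp_smul_const' A u
      have h2 : HasDerivAt (fun r : ℝ => (L ^ (d+1)) * exp (r • A))
          ((L ^ (d+1)) * (A * exp (u • A))) u := h1.const_mul _
      have h3 := (χ.hasFDerivAt).comp_hasDerivAt u h2
      have h4 : (L ^ (d+1)) * (A * exp (u • A)) = -((L ^ (d+2)) * exp (u • A)) := by
        rw [hA, neg_mul, mul_neg, ← mul_assoc, ← pow_succ]
      rw [h4, map_neg] at h3
      exact h3
    have hanti : AntitoneOn (fun r : ℝ => χ ((L ^ (d+1)) * exp (r • A))) (Set.Icc 0 s) := by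
      apply antitoneOn_of_deriv_nonpos (convex_Icc 0 s)
      · exact (Differentiable.continuous (fun u => (hder u).differentiableAt)).continuousOn
      · exact fun u _ => (hder u).differentiableAt.differentiableWithinAt
      · intro u _
        rw [(hder u).deriv]
        simp only [neg_nonpos]
        rw [hχ]
        exact hTpos (d+2) u g
    have h5 := hanti (Set.left_mem_Icc.mpr hs) (Set.right_mem_Icc.mpr hs) hs
    simp only at h5
    rw [hχ, hχ] at h5
    rw [zero_smul, exp_zero, mul_one] at h5
    exact h5
  -- the uniform bound on the (d+1)-st matrix element
  have hM : ∀ s : ℝ, 0 ≤ s →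
      ‖⟪v x, ((L ^ (d+1)) * exp (s • A)) (v y)⟫_ℂ‖ ≤
        ((⟪v x, (L ^ (d+1)) (v x)⟫_ℂ).re + (⟪v y, (L ^ (d+1)) (v y)⟫_ℂ).re) / 2 := by
    intro s hs
    have hcs := aux_cs (hTsa (d+1) s) (fun f => hTpos (d+1) s f) (v x) (v y)
    have h1 := hmono (v x) s hs
    have h2 := hmono (v y) s hs
    have h3 := hTpos (d+1) s (v x)
    have h4 := hTpos (d+1) s (v y)
    set Ax := (⟪v x, (L ^ (d+1)) (v x)⟫_ℂ).re
    set Ay := (⟪v y, (L ^ (d+1)) (v y)⟫_ℂ).re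
    have h5 : ‖⟪v x, ((L ^ (d+1)) * exp (s • A)) (v y)⟫_ℂ‖ ^ 2 ≤ ((Ax + Ay)/2) ^ 2 := by
      nlinarith [hcs, mul_le_mul h1 h2 h4 (h3.trans h1), sq_nonneg (Ax - Ay),
        norm_nonneg (⟪v x, ((L ^ (d+1)) * exp (s • A)) (v y)⟫_ℂ)]
    have h6 : (0:ℝ) ≤ (Ax + Ay)/2 := by linarith
    exact (pow_le_pow_iff_left₀ (norm_nonneg _) h6 two_ne_zero).mp h5
  intro t ht
  rcases eq_or_lt_of_le ht with ht0 | htpos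
  · -- t = 0
    rw [← ht0]
    have hE0 : NormedSpace.exp ((-((0:ℝ) : ℂ)) • L) = 1 := by
      rw [show (-((0:ℝ):ℂ)) • L = (0 : H →L[ℂ] H) by norm_num, exp_zero]
    rw [hE0]
    simp only [ContinuousLinearMap.one_apply]
    by_cases hxy : x = y
    · subst hxy
      have hd0 : d = 0 := by rw [hd]; exact SimpleGraph.dist_self
      rw [hd0]
      have h2 : ⟪v x, v x⟫_ℂ = ((‖v x‖^2 : ℝ) : ℂ) := by
        rw [inner_self_eq_norm_sq_to_K]
        norm_cast
      simp only [pow_zero, pow_one, ContinuousLinearMap.one_apply, Nat.factorial_zero,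
        Nat.cast_one, one_mul, div_one, h2, Complex.norm_real, Real.norm_eq_abs,
        abs_of_nonneg (sq_nonneg (‖v x‖))]
      rw [sub_self, norm_zero]
      have hp := hTpos 1 0 (v x)
      rw [zero_smul, exp_zero, mul_one] at hp
      have hq := aux_pow_pos hL hpos 1 (v x)
      positivity
    · have hd1 : 0 < d := hG.pos_dist_of_ne hxy
      rw [horth x y hxy]
      rw [zero_pow hd1.ne', zero_pow (by omega : d + 1 ≠ 0)]
      norm_num
  · -- 0 < t
    have hIcc : UniqueDiffOn ℝ (Set.Icc (0:ℝ) t) := uniqueDiffOn_Icc htpos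
    have hwithin : ∀ (k : ℕ) (s : ℝ), s ∈ Set.Icc (0:ℝ) t →
        iteratedDerivWithin k (fun u : ℝ => ψ ((A ^ 0) * exp (u • A))) (Set.Icc 0 t) s
          = ψ ((A ^ k) * exp (s • A)) := by
      intro k
      induction k with
      | zero => intro s hs; rw [iteratedDerivWithin_zero]
      | succ k ihk =>
        intro s hs
        rw [iteratedDerivWithin_succ]
        rw [derivWithin_congr (fun u hu => ihk u hu) (ihk s hs)]
        exact ((hD k s).hasDerivWithinAt).derivWithin (hIcc s hs)
    obtain ⟨c, hcmem, hTay⟩ := taylor_mean_remainder_lagrange (n := d) htpos.ne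
      ((hcont d).contDiffOn)
      (by
        rw [Set.uIcc_of_le ht, Set.uIoo_of_le ht]
        intro s hs
        have h1 : DifferentiableWithinAt ℝ (fun u : ℝ => ψ ((A ^ d) * exp (u • A)))
            (Set.Ioo 0 t) s := (hD d s).differentiableAt.differentiableWithinAt
        exact h1.congr (fun u hu => hwithin d u (Set.Ioo_subset_Icc_self hu))
          (hwithin d s (Set.Ioo_subset_Icc_self hs)))
    rw [Set.uIcc_of_le ht] at hTay
    rw [Set.uIoo_of_le ht] at hcmem
    have hpoly : taylorWithinEval (fun u : ℝ => ψ ((A ^ 0) * exp (u • A))) d (Set.Icc 0 t) 0 t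
        = t ^ d * ‖⟪v x, (L ^ d) (v y)⟫_ℂ‖ / (d.factorial : ℝ) := by
      rw [taylor_within_apply]
      rw [Finset.sum_eq_single d]
      · rw [hwithin d 0 (Set.left_mem_Icc.mpr ht), hf0 d, ← hnorm_ad, smul_eq_mul, sub_zero]
        ring
      · intro k hk hkd
        rw [hwithin k 0 (Set.left_mem_Icc.mpr ht), hf0 k]
        have hklt : k < d := by
          rw [Finset.mem_range] at hk
          omega
        rw [(key k x y).2.1 hklt]
        simp
      · intro hdmem
        exact absurd (Finset.self_mem_range_succ d) hdmem
    rw [hpoly] at hTay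
    rw [hwithin (d+1) c (Set.Ioo_subset_Icc_self hcmem)] at hTay
    have hfd1 : |ψ ((A ^ (d+1)) * exp (c • A))| ≤
        ((⟪v x, (L ^ (d+1)) (v x)⟫_ℂ).re + (⟪v y, (L ^ (d+1)) (v y)⟫_ℂ).re) / 2 := by
      have h1 : ψ ((A ^ (d+1)) * exp (c • A))
          = (-1:ℝ)^(d+1) * (⟪v x, ((L ^ (d+1)) * exp (c • A)) (v y)⟫_ℂ).re := by
        rw [hAk (d+1), smul_mul_assoc, map_smul, hψ]
        simp [smul_eq_mul]
      rw [h1, abs_mul, abs_pow, abs_neg, abs_one, one_pow, one_mul]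
      refine le_trans ?_ (hM c hcmem.1.le)
      exact Complex.abs_re_le_norm _
    rw [hconv t, hexp_real t]
    have hft : (⟪v x, (exp (t • A)) (v y)⟫_ℂ).re = ψ ((A ^ 0) * exp (t • A)) := by
      rw [pow_zero, one_mul, hψ]
    rw [hft, ← Complex.ofReal_sub, Complex.norm_real, Real.norm_eq_abs]
    have hTay' : ψ ((A ^ 0) * exp (t • A)) - t ^ d * ‖⟪v x, (L ^ d) (v y)⟫_ℂ‖ / (d.factorial : ℝ)
        = ψ ((A ^ (d+1)) * exp (c • A)) * (t - 0) ^ (d+1) / ((d+1).factorial : ℝ) := hTay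
    rw [sub_zero] at hTay'
    rw [hTay', abs_div, abs_mul, abs_pow, abs_of_pos htpos, Nat.abs_cast]
    calc |ψ ((A ^ (d+1)) * exp (c • A))| * t ^ (d+1) / ((d+1).factorial : ℝ)
        ≤ (((⟪v x, (L ^ (d+1)) (v x)⟫_ℂ).re + (⟪v y, (L ^ (d+1)) (v y)⟫_ℂ).re) / 2)
            * t ^ (d+1) / ((d+1).factorial : ℝ) := by
          gcongr
      _ = t ^ (d+1) * (((⟪v x, (L ^ (d+1)) (v x)⟫_ℂ).re + (⟪v y, (L ^ (d+1)) (v y)⟫_ℂ).re)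
            / (2 * ((d+1).factorial : ℝ))) := by
          field_simp
end

section
/- (Short time logarithmic asymptotics equal the combinatorial distance, semigroup.) Let X be a countable set, G a connected simple graph on X with combinatorial graph distance d_G, and let v : X → H and the bounded nonnegative self-adjoint operator L on the complex Hilbert space H be a Laplacian based on G with respect to v. Then for all x, y ∈ X, the limit as t → 0⁺ of log|⟪v x, e^{−tL} (v y)⟫| / log t exists and equals d_G(x,y). -/
open scoped InnerProductSpace
open Filter Topology

lemma laplace_matrix_key
    {X : Type*} (G : SimpleGraph X) (hG : G.Connected)
    {H : Type*} [NormedAddCommGroup H] [InnerProductSpace ℂ H] [CompleteSpace H]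
    (v : X → H) (hv : ∀ x, v x ≠ 0)
    (horth : ∀ x y : X, x ≠ y → ⟪v x, v y⟫_ℂ = 0)
    (e : HilbertBasis X ℂ H) (he : ∀ x, e x = ((‖v x‖ : ℂ))⁻¹ • v x)
    (L : H →L[ℂ] H) (hL : IsSelfAdjoint L)
    (hlap : ∀ x y : X, x ≠ y →
      (⟪v x, L (v y)⟫_ℂ).im = 0 ∧ (⟪v x, L (v y)⟫_ℂ).re ≤ 0 ∧
        ((⟪v x, L (v y)⟫_ℂ).re < 0 ↔ G.Adj x y)) :
    ∀ n : ℕ, ∀ x y : X,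
      (n < G.dist x y → ⟪v x, (L ^ n) (v y)⟫_ℂ = 0) ∧
      (G.dist x y = n → (⟪v x, (L ^ n) (v y)⟫_ℂ).im = 0 ∧
        0 < (-1 : ℝ) ^ n * (⟪v x, (L ^ n) (v y)⟫_ℂ).re) := by
  have hnz : ∀ z : X, (‖v z‖ : ℝ) ≠ 0 := fun z => norm_ne_zero_iff.mpr (hv z)
  have hsym := hL.isSymmetric
  have hzero_off : ∀ x z : X, x ≠ z → ¬ G.Adj x z → ⟪v x, L (v z)⟫_ℂ = 0 := by
    intro x z hne hadj
    obtain ⟨him, hre, hiff⟩ := hlap x z hne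
    have : (⟪v x, L (v z)⟫_ℂ).re = 0 := le_antisymm hre (not_lt.mp (mt hiff.mp hadj))
    exact Complex.ext this him
  have expand : ∀ f g : H, ⟪f, L g⟫_ℂ = ∑' z, ⟪L f, e z⟫_ℂ * ⟪e z, g⟫_ℂ := by
    intro f g
    rw [e.tsum_inner_mul_inner (L f) g, hsym.apply_clm]
  have hterm : ∀ (x z : X) (w : H), ⟪L (v x), e z⟫_ℂ * ⟪e z, w⟫_ℂ =
      ((‖v z‖⁻¹ : ℝ) : ℂ) * ((‖v z‖⁻¹ : ℝ) : ℂ) * (⟪v x, L (v z)⟫_ℂ * ⟪v z, w⟫_ℂ) := by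
    intro x z w
    rw [he z, inner_smul_right, inner_smul_left, hsym.apply_clm]
    simp [map_inv₀, Complex.conj_ofReal]
    ring
  intro n
  induction n with
  | zero =>
    intro x y
    constructor
    · intro h
      have hne : x ≠ y := by
        rintro rfl; simp [SimpleGraph.dist_self] at h
      simpa using horth x y hne
    · intro h
      have hxy : x = y := hG.dist_eq_zero_iff.mp h
      subst hxy
      have : ⟪v x, (L ^ 0) (v x)⟫_ℂ = ((‖v x‖ : ℂ)) ^ 2 := by
        simp [inner_self_eq_norm_sq_to_K]
      rw [this]
      constructor
      · simp [← Complex.ofReal_pow]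
      · simp [← Complex.ofReal_pow]
        have := hnz x
        positivity
  | succ n ih =>
    intro x y
    have hpow : (L ^ (n + 1)) (v y) = L ((L ^ n) (v y)) := by
      rw [pow_succ']; rfl
    set W := (L ^ n) (v y) with hW
    have hexp : ⟪v x, (L ^ (n + 1)) (v y)⟫_ℂ = ∑' z, ⟪L (v x), e z⟫_ℂ * ⟪e z, W⟫_ℂ := by
      rw [hpow, expand]
    have hsum := e.summable_inner_mul_inner (L (v x)) W
    constructor
    · intro h
      have hz : ∀ z, ⟪L (v x), e z⟫_ℂ * ⟪e z, W⟫_ℂ = 0 := by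
        intro z
        rw [hterm]
        rcases eq_or_ne x z with rfl | hne
        · have : ⟪v x, W⟫_ℂ = 0 := (ih x y).1 (by omega)
          simp [this]
        · by_cases hadj : G.Adj x z
          · have hd1 : G.dist x z = 1 := SimpleGraph.dist_eq_one_iff_adj.mpr hadj
            have htr := hG.dist_triangle (u := x) (v := z) (w := y)
            have : ⟪v z, W⟫_ℂ = 0 := (ih z y).1 (by omega)
            simp [this]
          · simp [hzero_off x z hne hadj]
      rw [hexp, tsum_congr hz, tsum_zero]
    · intro h
      -- the key pointwise claim
      have claim : ∀ z, (⟪L (v x), e z⟫_ℂ * ⟪e z, W⟫_ℂ).im = 0 ∧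
          0 ≤ (-1 : ℝ) ^ (n + 1) * (⟪L (v x), e z⟫_ℂ * ⟪e z, W⟫_ℂ).re ∧
          (G.Adj x z → G.dist z y = n →
            0 < (-1 : ℝ) ^ (n + 1) * (⟪L (v x), e z⟫_ℂ * ⟪e z, W⟫_ℂ).re) := by
        intro z
        rw [hterm]
        rcases eq_or_ne x z with rfl | hne
        · have hq : ⟪v x, W⟫_ℂ = 0 := (ih x y).1 (by omega)
          refine ⟨by simp [hq], by simp [hq], fun hadj _ => absurd hadj (G.irrefl)⟩
        · by_cases hadj : G.Adj x z
          · have hd1 : G.dist x z = 1 := SimpleGraph.dist_eq_one_iff_adj.mpr hadj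
            have htr := hG.dist_triangle (u := x) (v := z) (w := y)
            have hge : n ≤ G.dist z y := by omega
            rcases lt_or_eq_of_le hge with hlt | heq
            · have hq : ⟪v z, W⟫_ℂ = 0 := (ih z y).1 hlt
              refine ⟨by simp [hq], by simp [hq], fun _ h' => by omega⟩
            · obtain ⟨himq, hposq⟩ := (ih z y).2 heq.symm
              obtain ⟨himm, hrem, hiffm⟩ := hlap x z hne
              have hmneg : (⟪v x, L (v z)⟫_ℂ).re < 0 := hiffm.mpr hadj
              set m := ⟪v x, L (v z)⟫_ℂ
              set q := ⟪v z, W⟫_ℂ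
              have hm' : m = ((m.re : ℝ) : ℂ) := Complex.ext rfl (by simp [himm])
              have hq' : q = ((q.re : ℝ) : ℂ) := Complex.ext rfl (by simp [himq])
              rw [hm', hq']
              have hrpos : (0 : ℝ) < ‖v z‖⁻¹ := inv_pos.mpr (norm_pos_iff.mpr (hv z))
              have hkey : ((-1 : ℝ)) ^ (n + 1) * (‖v z‖⁻¹ * ‖v z‖⁻¹ * (m.re * q.re))
                  = (‖v z‖⁻¹ * ‖v z‖⁻¹) * ((-m.re) * ((-1 : ℝ) ^ n * q.re)) := by
                rw [pow_succ]; ring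
              have hstrict : 0 < (‖v z‖⁻¹ * ‖v z‖⁻¹) * ((-m.re) * ((-1 : ℝ) ^ n * q.re)) :=
                mul_pos (mul_pos hrpos hrpos) (mul_pos (by linarith) hposq)
              refine ⟨by simp [← Complex.ofReal_mul], ?_, fun _ _ => ?_⟩
              · simp only [← Complex.ofReal_mul, Complex.ofReal_re]
                rw [hkey]; exact hstrict.le
              · simp only [← Complex.ofReal_mul, Complex.ofReal_re]
                rw [hkey]; exact hstrict
          · refine ⟨?_, ?_, fun h' _ => absurd h' hadj⟩ <;>
              simp [hzero_off x z hne hadj]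
      -- pick a neighbour on a geodesic
      have hdne : G.dist x y ≠ 0 := by omega
      obtain ⟨p, hp⟩ := SimpleGraph.exists_walk_of_dist_ne_zero hdne
      obtain ⟨z0, hadj0, q0, rfl, hq0len⟩ : ∃ (z0 : X) (hadj : G.Adj x z0) (q0 : G.Walk z0 y),
          p = SimpleGraph.Walk.cons hadj q0 ∧ q0.length = n := by
        cases p with
        | nil => simp [SimpleGraph.dist_self] at h
        | cons hadj q0 =>
          refine ⟨_, hadj, q0, rfl, ?_⟩
          simp [SimpleGraph.Walk.length_cons, h] at hp
          omega
      have hz0 : G.dist z0 y = n := by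
        have hle : G.dist z0 y ≤ n := hq0len ▸ SimpleGraph.dist_le q0
        have hd1 : G.dist x z0 = 1 := SimpleGraph.dist_eq_one_iff_adj.mpr hadj0
        have htr := hG.dist_triangle (u := x) (v := z0) (w := y)
        omega
      have hsumre : Summable (fun z => (⟪L (v x), e z⟫_ℂ * ⟪e z, W⟫_ℂ).re) := by
        have := hsum.map Complex.reAddGroupHom Complex.continuous_re
        exact this
      constructor
      · rw [hexp, Complex.im_tsum hsum]
        exact tsum_congr (fun z => (claim z).1) ▸ tsum_zero
      · rw [hexp, Complex.re_tsum hsum, ← tsum_mul_left]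
        exact Summable.tsum_pos (hsumre.mul_left _) (fun z => (claim z).2.1) z0
          ((claim z0).2.2 hadj0 hz0)


lemma log_asymp_aux (a : ℕ → ℂ) (f : ℝ → ℂ) (d : ℕ) (B M : ℝ) (hB : 0 ≤ B) (hM : 0 ≤ M)
    (hbound : ∀ n, ‖a n‖ ≤ M * B ^ n)
    (hvanish : ∀ n, n < d → a n = 0) (had : a d ≠ 0)
    (hhs : ∀ t : ℝ, HasSum (fun n : ℕ => ((n.factorial : ℂ))⁻¹ * ((-(t : ℂ)) ^ n * a n)) (f t)) :
    Tendsto (fun t : ℝ => Real.log ‖f t‖ / Real.log t) (𝓝[>] (0 : ℝ)) (𝓝 (d : ℝ)) := by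
  classical
  set c : ℂ := (-1 : ℂ) ^ d * ((d.factorial : ℂ))⁻¹ * a d with hc
  have hcne : c ≠ 0 := by
    apply mul_ne_zero (mul_ne_zero (pow_ne_zero _ (by norm_num)) _) had
    simpa using Nat.factorial_ne_zero d
  set K : ℝ := M * Real.exp B with hK
  have hKnn : 0 ≤ K := mul_nonneg hM (Real.exp_pos B).le
  -- Step 1: the bound
  have step1 : ∀ t : ℝ, 0 < t → t ≤ 1 → ‖f t - c * (t : ℂ) ^ d‖ ≤ K * t ^ (d + 1) := by
    intro t ht0 ht1
    set u : ℕ → ℂ := fun n => ((n.factorial : ℂ))⁻¹ * ((-(t : ℂ)) ^ n * a n) with hu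
    have hsummable : Summable u := (hhs t).summable
    have hud : u d = c * (t : ℂ) ^ d := by
      have hneg : (-(t : ℂ)) ^ d = (-1 : ℂ) ^ d * (t : ℂ) ^ d := by
        rw [neg_pow]
      simp only [hu, hc, hneg]
      ring
    have hdecomp : f t - c * (t : ℂ) ^ d = ∑' n, ite (n = d) 0 (u n) := by
      have := hsummable.tsum_eq_add_tsum_ite d
      rw [(hhs t).tsum_eq] at this
      rw [this, hud]
      ring
    rw [hdecomp]
    have hbnd : ∀ n : ℕ, ‖ite (n = d) 0 (u n)‖ ≤ (M * t ^ (d + 1)) * (B ^ n / n.factorial) := by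
      intro n
      by_cases hnd : n = d
      · subst hnd
        rw [if_pos rfl, norm_zero]
        positivity
      · rw [if_neg hnd]
        rcases lt_or_gt_of_ne hnd with hlt | hgt
        · simp only [hu, hvanish n hlt, mul_zero, norm_zero]
          positivity
        · have hn : d + 1 ≤ n := hgt
          have h1 : ‖u n‖ = (n.factorial : ℝ)⁻¹ * (t ^ n * ‖a n‖) := by
            simp only [hu, norm_mul, norm_inv, norm_pow, norm_neg, Complex.norm_natCast,
              Complex.norm_real, Real.norm_eq_abs, abs_of_pos ht0]
          rw [h1]
          have h2 : t ^ n ≤ t ^ (d + 1) := pow_le_pow_of_le_one ht0.le ht1 hn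
          have h3 : ‖a n‖ ≤ M * B ^ n := hbound n
          have h4 : (0:ℝ) < n.factorial := by exact_mod_cast Nat.factorial_pos n
          rw [div_eq_mul_inv]
          calc (n.factorial : ℝ)⁻¹ * (t ^ n * ‖a n‖)
              ≤ (n.factorial : ℝ)⁻¹ * (t ^ (d + 1) * (M * B ^ n)) := by
                apply mul_le_mul_of_nonneg_left _ (by positivity)
                apply mul_le_mul h2 h3 (norm_nonneg _) (by positivity)
            _ = M * t ^ (d + 1) * (B ^ n * (n.factorial : ℝ)⁻¹) := by ring
    have hsumB : Summable (fun n : ℕ => (M * t ^ (d + 1)) * (B ^ n / n.factorial)) :=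
      (Real.summable_pow_div_factorial B).mul_left _
    have hnorm_sum : Summable (fun n => ‖ite (n = d) 0 (u n)‖) :=
      Summable.of_nonneg_of_le (fun n => norm_nonneg _) hbnd hsumB
    calc ‖∑' n, ite (n = d) 0 (u n)‖ ≤ ∑' n, ‖ite (n = d) 0 (u n)‖ :=
          norm_tsum_le_tsum_norm hnorm_sum
      _ ≤ ∑' n : ℕ, (M * t ^ (d + 1)) * (B ^ n / n.factorial) :=
          Summable.tsum_le_tsum hbnd hnorm_sum hsumB
      _ = (M * t ^ (d + 1)) * ∑' n : ℕ, (B ^ n / n.factorial) := tsum_mul_left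
      _ = K * t ^ (d + 1) := by
          have : ∑' n : ℕ, (B ^ n / n.factorial : ℝ) = Real.exp B := by
            rw [Real.exp_eq_exp_ℝ, NormedSpace.exp_eq_tsum_div]
          rw [this, hK]; ring
  -- Step 2: ‖f t‖ / t ^ d → ‖c‖
  have step2 : Tendsto (fun t : ℝ => ‖f t‖ / t ^ d) (𝓝[>] (0 : ℝ)) (𝓝 ‖c‖) := by
    rw [tendsto_iff_dist_tendsto_zero]
    have hmem : Set.Ioc (0 : ℝ) 1 ∈ 𝓝[>] (0 : ℝ) :=
      Ioc_mem_nhdsGT_of_mem ⟨le_refl 0, by norm_num⟩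
    apply squeeze_zero' (Eventually.of_forall fun t => dist_nonneg)
      (g := fun t => K * t)
    · filter_upwards [hmem] with t ht
      obtain ⟨ht0, ht1⟩ := ht
      have htd : (0:ℝ) < t ^ d := pow_pos ht0 d
      have h1 : ‖c * (t:ℂ) ^ d‖ = ‖c‖ * t ^ d := by
        rw [norm_mul, norm_pow, Complex.norm_real, Real.norm_eq_abs, abs_of_pos ht0]
      have h2 : |‖f t‖ - ‖c‖ * t ^ d| ≤ K * t ^ (d + 1) := by
        rw [← h1]
        exact (abs_norm_sub_norm_le _ _).trans (step1 t ht0 ht1)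
      have hsub : ‖f t‖ / t ^ d - ‖c‖ = (‖f t‖ - ‖c‖ * t ^ d) / t ^ d := by
        field_simp
      have h3 : dist (‖f t‖ / t ^ d) ‖c‖ = |‖f t‖ - ‖c‖ * t ^ d| / t ^ d := by
        rw [Real.dist_eq, hsub, abs_div, abs_of_pos htd]
      rw [h3]
      rw [div_le_iff₀ htd]
      calc |‖f t‖ - ‖c‖ * t ^ d| ≤ K * t ^ (d + 1) := h2
        _ = K * t * t ^ d := by ring
    · have : Tendsto (fun t : ℝ => K * t) (𝓝 (0:ℝ)) (𝓝 (K * 0)) :=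
        (continuous_const.mul continuous_id).tendsto 0
      simpa using this.mono_left nhdsWithin_le_nhds
  have hcpos : (0:ℝ) < ‖c‖ := norm_pos_iff.mpr hcne
  -- eventually ‖f t‖ > 0
  have hevpos : ∀ᶠ t in 𝓝[>] (0:ℝ), 0 < ‖f t‖ := by
    have h := step2.eventually_const_lt (half_lt_self hcpos)
    filter_upwards [h, self_mem_nhdsWithin] with t ht ht0
    have ht0' : (0:ℝ) < t := ht0
    have htd : (0:ℝ) < t ^ d := pow_pos ht0' d
    by_contra hle
    push_neg at hle
    have : ‖f t‖ = 0 := le_antisymm hle (norm_nonneg _)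
    rw [this, zero_div] at ht
    linarith
  have hmem2 : Set.Ioo (0 : ℝ) 1 ∈ 𝓝[>] (0 : ℝ) :=
    Ioo_mem_nhdsGT_of_mem ⟨le_refl 0, by norm_num⟩
  have heq : ∀ᶠ t in 𝓝[>] (0:ℝ),
      Real.log (‖f t‖ / t ^ d) * (Real.log t)⁻¹ + (d : ℝ) =
        Real.log ‖f t‖ / Real.log t := by
    filter_upwards [hevpos, hmem2] with t hft ht
    obtain ⟨ht0, ht1⟩ := ht
    have hlt : Real.log t < 0 := Real.log_neg ht0 ht1
    have htd : (0:ℝ) < t ^ d := pow_pos ht0 d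
    have hlog : Real.log (‖f t‖ / t ^ d) = Real.log ‖f t‖ - d * Real.log t := by
      rw [Real.log_div hft.ne' htd.ne', Real.log_pow]
    rw [hlog]
    field_simp [hlt.ne]
    ring
  have h1 : Tendsto (fun t : ℝ => Real.log (‖f t‖ / t ^ d)) (𝓝[>] (0:ℝ))
      (𝓝 (Real.log ‖c‖)) := (Real.continuousAt_log hcpos.ne').tendsto.comp step2
  have h2 : Tendsto (fun t : ℝ => (Real.log t)⁻¹) (𝓝[>] (0:ℝ)) (𝓝 0) := by
    have hneg : Tendsto (fun t : ℝ => -Real.log t) (𝓝[>] (0:ℝ)) atTop :=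
      tendsto_neg_atBot_atTop.comp Real.tendsto_log_nhdsGT_zero
    have := (tendsto_inv_atTop_zero.comp hneg).neg
    simp only [Function.comp] at this ⊢
    convert this using 1
    · funext t; rw [← neg_inv, neg_neg]
    · norm_num
  have h3 : Tendsto (fun t : ℝ => Real.log (‖f t‖ / t ^ d) * (Real.log t)⁻¹ + (d : ℝ))
      (𝓝[>] (0:ℝ)) (𝓝 (Real.log ‖c‖ * 0 + (d:ℝ))) := (h1.mul h2).add tendsto_const_nhds
  rw [mul_zero, zero_add] at h3
  exact h3.congr' heq


/-- **Short time logarithmic asymptotics equal the combinatorial distance (semigroup).**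
Let `G` be a connected simple graph on a countable set `X`, `v : X → H` a family of
nonzero pairwise orthogonal vectors with dense span in the complex Hilbert space `H`, and
`L` a bounded nonnegative selfadjoint operator which is a Laplacian based on `G` with
respect to `v`. Then `log|⟪v x, e^{−tL} v y⟫| / log t → d_G(x,y)` as `t → 0⁺`. -/
theorem log_asymptotics_semigroup
    {X : Type*} [Countable X] (G : SimpleGraph X) (hG : G.Connected)
    {H : Type*} [NormedAddCommGroup H] [InnerProductSpace ℂ H] [CompleteSpace H]
    (v : X → H) (hv : ∀ x, v x ≠ 0)
    (horth : ∀ x y : X, x ≠ y → ⟪v x, v y⟫_ℂ = 0)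
    (hdense : Dense ((Submodule.span ℂ (Set.range v) : Submodule ℂ H) : Set H))
    (L : H →L[ℂ] H) (hL : IsSelfAdjoint L)
    (hpos : ∀ f : H, 0 ≤ (⟪f, L f⟫_ℂ).re)
    (hlap : ∀ x y : X, x ≠ y →
      (⟪v x, L (v y)⟫_ℂ).im = 0 ∧ (⟪v x, L (v y)⟫_ℂ).re ≤ 0 ∧
        ((⟪v x, L (v y)⟫_ℂ).re < 0 ↔ G.Adj x y)) :
    ∀ x y : X,
      Tendsto (fun t : ℝ =>
          Real.log ‖⟪v x, (NormedSpace.exp ((-(t : ℂ)) • L)) (v y)⟫_ℂ‖ / Real.log t)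
        (𝓝[>] (0 : ℝ)) (𝓝 (G.dist x y : ℝ)) := by
  intro x y
  classical
  have hnz : ∀ z : X, (‖v z‖ : ℝ) ≠ 0 := fun z => norm_ne_zero_iff.mpr (hv z)
  -- construct the normalized Hilbert basis
  obtain ⟨e, he⟩ : ∃ e : HilbertBasis X ℂ H, ∀ z, e z = ((‖v z‖ : ℂ))⁻¹ • v z := by
    set u : X → H := fun z => ((‖v z‖ : ℂ))⁻¹ • v z with hu
    have hortho : Orthonormal ℂ u := by
      constructor
      · intro i
        simp only [hu]
        rw [norm_smul, norm_inv, Complex.norm_real, Real.norm_eq_abs, abs_norm,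
          inv_mul_cancel₀ (hnz i)]
      · intro i j hij
        simp [hu, inner_smul_left, inner_smul_right, horth i j hij]
    have hspan : ⊤ ≤ (Submodule.span ℂ (Set.range u)).topologicalClosure := by
      have hsp : Submodule.span ℂ (Set.range u) = Submodule.span ℂ (Set.range v) := by
        apply le_antisymm
        · rw [Submodule.span_le]; rintro _ ⟨z, rfl⟩
          exact Submodule.smul_mem _ _ (Submodule.subset_span ⟨z, rfl⟩)
        · rw [Submodule.span_le]; rintro _ ⟨z, rfl⟩
          have hvz : v z = ((‖v z‖ : ℂ)) • u z := by
            simp only [hu, smul_smul]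
            rw [mul_inv_cancel₀ (by exact_mod_cast hnz z), one_smul]
          rw [hvz]
          exact Submodule.smul_mem _ _ (Submodule.subset_span ⟨z, rfl⟩)
      rw [hsp, ← Submodule.dense_iff_topologicalClosure_eq_top.mp hdense]
    exact ⟨HilbertBasis.mk hortho hspan,
      fun z => congrFun (HilbertBasis.coe_mk hortho hspan) z⟩
  have key := laplace_matrix_key G hG v hv horth e he L hL hlap
  set d := G.dist x y with hd
  set a : ℕ → ℂ := fun n => ⟪v x, (L ^ n) (v y)⟫_ℂ with ha
  have hvanish : ∀ n, n < d → a n = 0 := fun n hn => (key n x y).1 hn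
  have had : a d ≠ 0 := by
    obtain ⟨him, hre⟩ := (key d x y).2 hd.symm
    intro h0
    rw [show (⟪v x, (L ^ d) (v y)⟫_ℂ) = a d from rfl, h0] at hre
    simp at hre
  have hbound : ∀ n, ‖a n‖ ≤ (‖v x‖ * ‖v y‖) * ‖L‖ ^ n := by
    intro n
    have hLn : ‖L ^ n‖ ≤ ‖L‖ ^ n := by
      rcases Nat.eq_zero_or_pos n with rfl | hn
      · rw [pow_zero, pow_zero]; exact ContinuousLinearMap.norm_id_le
      · exact norm_pow_le' L hn
    calc ‖a n‖ ≤ ‖v x‖ * ‖(L ^ n) (v y)‖ := norm_inner_le_norm _ _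
      _ ≤ ‖v x‖ * (‖L ^ n‖ * ‖v y‖) :=
          mul_le_mul_of_nonneg_left (ContinuousLinearMap.le_opNorm _ _) (norm_nonneg _)
      _ ≤ ‖v x‖ * (‖L‖ ^ n * ‖v y‖) :=
          mul_le_mul_of_nonneg_left
            (mul_le_mul_of_nonneg_right hLn (norm_nonneg _)) (norm_nonneg _)
      _ = (‖v x‖ * ‖v y‖) * ‖L‖ ^ n := by ring
  have hhs : ∀ t : ℝ,
      HasSum (fun n : ℕ => ((n.factorial : ℂ))⁻¹ * ((-(t : ℂ)) ^ n * a n))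
        (⟪v x, (NormedSpace.exp ((-(t : ℂ)) • L)) (v y)⟫_ℂ) := by
    intro t
    set A := (-(t : ℂ)) • L with hA
    have h1 : HasSum (fun n : ℕ => ((n.factorial : ℂ))⁻¹ • A ^ n) (NormedSpace.exp A) := by
      simp only [NormedSpace.exp_eq_tsum ℂ]
      exact (NormedSpace.expSeries_summable' (𝕂 := ℂ) A).hasSum
    have h2 := h1.mapL (ContinuousLinearMap.apply ℂ H (v y))
    have h3 := h2.mapL (innerSL ℂ (v x))
    convert h3 using 2 with n
    · rfl
    rw [hA, smul_pow]
    simp only [ContinuousLinearMap.smul_apply, ContinuousLinearMap.apply_apply,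
      innerSL_apply_apply, inner_smul_right, smul_eq_mul]
    try ring
    rfl
  exact log_asymp_aux a _ d ‖L‖ (‖v x‖ * ‖v y‖) (norm_nonneg L)
    (mul_nonneg (norm_nonneg _) (norm_nonneg _)) hbound hvanish had hhs
end
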